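/- arXiv:2411.03798 — 13 statements merged into one kernel-verified Lean document; each statement's English description precedes it below -/
import Mathlib

section
/- Let X be a normed space over 𝕂 (ℝ or ℂ) and x a nonzero element of X. If x is a right symmetric point with respect to Birkhoff-James orthogonality and x is a smooth point, then x is a left symmetric point. -/
open Metric

/-- In a normed space over `𝕜 ∈ {ℝ, ℂ}`, a nonzero right symmetric smooth point
is left symmetric. -/
theorem right_symmetric_smooth_implies_left_symmetric
    {𝕜 X : Type*} [RCLike 𝕜] [NormedAddCommGroup X] [NormedSpace 𝕜 X]
    (x : X) (hx : x ≠ 0)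
    (hright : ∀ y : X, (∀ t : 𝕜, ‖y‖ ≤ ‖y + t • x‖) → (∀ t : 𝕜, ‖x‖ ≤ ‖x + t • y‖))
    (hsmooth : ∃! F : X →L[𝕜] 𝕜, ‖F‖ = 1 ∧ F x = (‖x‖ : 𝕜)) :
    ∀ y : X, (∀ t : 𝕜, ‖x‖ ≤ ‖x + t • y‖) → (∀ t : 𝕜, ‖y‖ ≤ ‖y + t • x‖) := by
  obtain ⟨F, ⟨hF1, hFx⟩, hFuniq⟩ := hsmooth
  -- key: if x ⊥ z then F z = 0
  have key : ∀ z : X, (∀ t : 𝕜, ‖x‖ ≤ ‖x + t • z‖) → F z = 0 := by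
    intro z hz
    set S : Submodule 𝕜 X := 𝕜 ∙ z with hS
    haveI : IsClosed (S : Set X) := Submodule.closed_of_finiteDimensional S
    have hnorm : ‖(Submodule.Quotient.mk x : X ⧸ S)‖ = ‖x‖ := by
      refine le_antisymm (Submodule.Quotient.norm_mk_le S x) ?_
      rw [show ‖(Submodule.Quotient.mk x : X ⧸ S)‖ = sInf ((‖x + ·‖) '' (S.toAddSubgroup : Set X)) from
        quotient_norm_mk_eq S.toAddSubgroup x]
      refine le_csInf ⟨‖x + 0‖, Set.mem_image_of_mem _ S.toAddSubgroup.zero_mem⟩ ?_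
      rintro r ⟨s, hs, rfl⟩
      obtain ⟨t, rfl⟩ := Submodule.mem_span_singleton.mp hs
      exact hz t
    have hxq : (Submodule.Quotient.mk x : X ⧸ S) ≠ 0 := by
      intro h
      rw [h, norm_zero] at hnorm
      exact hx (norm_eq_zero.mp hnorm.symm)
    obtain ⟨g, hg1, hgx⟩ := exists_dual_vector 𝕜 _ (norm_ne_zero_iff.mpr hxq)
    let π : X →L[𝕜] X ⧸ S :=
      LinearMap.mkContinuous S.mkQ 1 (fun m => by
        simpa using Submodule.Quotient.norm_mk_le S m)
    have hGx : (g.comp π) x = (‖x‖ : 𝕜) := by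
      simp only [ContinuousLinearMap.comp_apply]
      rw [show π x = Submodule.Quotient.mk x from rfl, hgx, hnorm]
    have hGnorm : ‖g.comp π‖ = 1 := by
      refine le_antisymm ?_ ?_
      · calc ‖g.comp π‖ ≤ ‖g‖ * ‖π‖ := g.opNorm_comp_le π
          _ ≤ 1 * 1 := by
              refine mul_le_mul (le_of_eq hg1) ?_ (norm_nonneg π) zero_le_one
              exact LinearMap.mkContinuous_norm_le _ zero_le_one _
          _ = 1 := one_mul 1
      · have h1 : ‖x‖ = ‖(g.comp π) x‖ := by rw [hGx]; simp
        have h2 : ‖(g.comp π) x‖ ≤ ‖g.comp π‖ * ‖x‖ := (g.comp π).le_opNorm x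
        have hx' : 0 < ‖x‖ := norm_pos_iff.mpr hx
        nlinarith
    have := hFuniq (g.comp π) ⟨hGnorm, hGx⟩
    rw [← this]
    have : π z = 0 := by
      rw [show π z = Submodule.Quotient.mk z from rfl]
      exact (Submodule.Quotient.mk_eq_zero S).mpr (Submodule.mem_span_singleton_self z)
    simp [ContinuousLinearMap.comp_apply, this]
  intro y hy
  -- minimizer of t ↦ ‖y + t • x‖
  have hxpos : (0:ℝ) < ‖x‖ := norm_pos_iff.mpr hx
  set f : 𝕜 → ℝ := fun t => ‖y + t • x‖ with hf
  have hfc : Continuous f := (continuous_const.add (continuous_id.smul continuous_const)).norm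
  set R : ℝ := (2 * ‖y‖ + 1) / ‖x‖ with hR
  have hR0 : 0 ≤ R := div_nonneg (by positivity) hxpos.le
  obtain ⟨t₀, ht₀K, ht₀min⟩ :=
    (isCompact_closedBall (0:𝕜) R).exists_isMinOn ⟨0, mem_closedBall_self hR0⟩ hfc.continuousOn
  have hout : ∀ t : 𝕜, t ∉ closedBall (0:𝕜) R → f 0 ≤ f t := by
    intro t ht
    have hnt : R < ‖t‖ := by simpa [dist_zero_right] using ht
    have h1 : ‖t‖ * ‖x‖ - ‖y‖ ≤ f t := by
      have := norm_sub_norm_le (t • x) (-y)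
      simp only [norm_smul, norm_neg] at this
      calc ‖t‖ * ‖x‖ - ‖y‖ ≤ ‖t • x - -y‖ := this
        _ = ‖y + t • x‖ := by rw [sub_neg_eq_add, add_comm]
    have h2 : 2 * ‖y‖ + 1 ≤ ‖t‖ * ‖x‖ := by
      have := (div_le_iff₀ hxpos).mp (le_of_lt hnt)
      linarith [mul_le_mul_of_nonneg_right hnt.le hxpos.le]
    have h3 : f 0 = ‖y‖ := by simp [hf]
    rw [h3]; linarith
  have hglobal : ∀ s : 𝕜, f t₀ ≤ f s := by
    intro s
    by_cases hs : s ∈ closedBall (0:𝕜) R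
    · exact ht₀min hs
    · exact le_trans (ht₀min (mem_closedBall_self hR0)) (hout s hs)
  -- y + t₀ • x ⊥ x
  have horth : ∀ s : 𝕜, ‖y + t₀ • x‖ ≤ ‖y + t₀ • x + s • x‖ := by
    intro s
    have h := hglobal (t₀ + s)
    simp only [hf] at h ⊢
    rwa [add_smul, ← add_assoc] at h

  have hxo := hright _ horth
  have hFyt : F (y + t₀ • x) = 0 := key _ hxo
  have hFy : F y = 0 := key y hy
  have ht₀0 : t₀ = 0 := by
    rw [map_add, hFy, zero_add, map_smul, hFx, smul_eq_mul] at hFyt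
    rcases mul_eq_zero.mp hFyt with h | h
    · exact h
    · exact absurd h (by exact_mod_cast hxpos.ne')
  intro t
  have := hglobal t
  rw [ht₀0] at this
  simpa [hf] using this
end

section
/- Let (S, μ) be a complete positive measure space and X a real Banach space whose norm is Fréchet differentiable at every nonzero point. If f ∈ L¹(μ, X) is nonzero almost everywhere (i.e. μ({s : f(s) = 0}) = 0), then f is a smooth point of L¹(μ, X). -/
open MeasureTheory Filter Topology

noncomputable section

/-- Birkhoff–James orthogonality: `x ⊥_BJ y` iff `‖x + t • y‖ ≥ ‖x‖` for all scalars `t`. -/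
def BJOrth {Y : Type*} [NormedAddCommGroup Y] [NormedSpace ℝ Y] (x y : Y) : Prop :=
  ∀ t : ℝ, ‖x‖ ≤ ‖x + t • y‖

/-- `x` is a left symmetric point. -/
def LeftSymPt {Y : Type*} [NormedAddCommGroup Y] [NormedSpace ℝ Y] (x : Y) : Prop :=
  ∀ y : Y, BJOrth x y → BJOrth y x

/-- `x` is a right symmetric point. -/
def RightSymPt {Y : Type*} [NormedAddCommGroup Y] [NormedSpace ℝ Y] (x : Y) : Prop :=
  ∀ y : Y, BJOrth y x → BJOrth x y

/-- `x` is a smooth point: the norm-one support functional at `x` is unique. -/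
def SmoothPt {Y : Type*} [NormedAddCommGroup Y] [NormedSpace ℝ Y] (x : Y) : Prop :=
  ∃! F : Y →L[ℝ] ℝ, ‖F‖ = 1 ∧ F x = ‖x‖

/-- The norm of `X` is Fréchet differentiable at every nonzero point. -/
def FrechetDiffNorm (X : Type*) [NormedAddCommGroup X] [NormedSpace ℝ X] : Prop :=
  ∀ x : X, x ≠ 0 → ∃ f : X →L[ℝ] ℝ, HasFDerivAt (fun y : X => ‖y‖) f x

/-- `A` is an atom of the measure `μ`. -/
def IsMeasAtom {S : Type*} [MeasurableSpace S] (μ : Measure S) (A : Set S) : Prop :=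
  MeasurableSet A ∧ 0 < μ A ∧ ∀ B ⊆ A, MeasurableSet B → μ B = 0 ∨ μ B = μ A

open MeasureTheory Filter Topology

theorem ae_nonzero_smooth_L1_aux
    {S X : Type*} [MeasurableSpace S] {μ : Measure S} [μ.IsComplete]
    [NormedAddCommGroup X] [NormedSpace ℝ X] [CompleteSpace X]
    (hX : ∀ x : X, x ≠ 0 → ∃ f : X →L[ℝ] ℝ, HasFDerivAt (fun y : X => ‖y‖) f x)
    (f : Lp X 1 μ) (hf : f ≠ 0)
    (hae : μ {s | (f : S → X) s = 0} = 0) :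
    ∃! F : Lp X 1 μ →L[ℝ] ℝ, ‖F‖ = 1 ∧ F f = ‖f‖ := by
  classical
  have hne : ∀ᵐ s ∂μ, (f : S → X) s ≠ 0 := by
    rw [ae_iff]; simpa using hae
  have main : ∀ g : Lp X 1 μ, ∃ L : ℝ,
      ∀ F : Lp X 1 μ →L[ℝ] ℝ, ‖F‖ = 1 → F f = ‖f‖ → F g = L := by
    intro g
    set Ft : ℝ → S → ℝ :=
      fun t s => (‖(f : S → X) s + t • (g : S → X) s‖ - ‖(f : S → X) s‖) / t with hFt
    set d : S → ℝ := fun s =>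
      if h : (f : S → X) s = 0 then 0 else (hX _ h).choose ((g : S → X) s) with hd
    -- pointwise convergence
    have hptw : ∀ᵐ s ∂μ, Tendsto (fun t => Ft t s) (𝓝[≠] (0:ℝ)) (𝓝 (d s)) := by
      filter_upwards [hne] with s hs
      have hφ := (hX _ hs).choose_spec
      have hline : HasDerivAt (fun t : ℝ => (f : S → X) s + t • (g : S → X) s)
          ((g : S → X) s) 0 := by
        simpa using ((hasDerivAt_id (0:ℝ)).smul_const ((g : S → X) s)).const_add
          ((f : S → X) s)
      have hφ' : HasFDerivAt (fun y : X => ‖y‖) (hX _ hs).choose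
          ((fun t : ℝ => (f : S → X) s + t • (g : S → X) s) 0) := by simpa using hφ
      have hD : HasDerivAt (fun t : ℝ => ‖(f : S → X) s + t • (g : S → X) s‖)
          (d s) 0 := by
        simpa [hd, hs, Function.comp_def] using hφ'.comp_hasDerivAt 0 hline
      have := hasDerivAt_iff_tendsto_slope.1 hD
      refine this.congr' ?_
      filter_upwards [self_mem_nhdsWithin] with t ht
      simp [slope_def_field, Ft]
    -- measurability
    have hmeas : ∀ t : ℝ, AEStronglyMeasurable (Ft t) μ := by
      intro t
      have := (((Lp.aestronglyMeasurable f).add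
        ((Lp.aestronglyMeasurable g).const_smul t)).norm.sub
        (Lp.aestronglyMeasurable f).norm).mul (aestronglyMeasurable_const (b := t⁻¹))
      simpa [hFt, div_eq_mul_inv, Pi.sub_def, Pi.mul_def] using this
    -- bound
    have hbound : ∀ t : ℝ, t ≠ 0 → ∀ s, ‖Ft t s‖ ≤ ‖(g : S → X) s‖ := by
      intro t ht s
      have h1 : |‖(f : S → X) s + t • (g : S → X) s‖ - ‖(f : S → X) s‖|
          ≤ |t| * ‖(g : S → X) s‖ := by
        have := abs_norm_sub_norm_le ((f : S → X) s + t • (g : S → X) s) ((f : S → X) s)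
        simpa [norm_smul] using this
      have ht' : (0:ℝ) < |t| := abs_pos.2 ht
      rw [hFt]
      simp only [Real.norm_eq_abs, abs_div]
      rw [div_le_iff₀ ht']
      calc |‖(f : S → X) s + t • (g : S → X) s‖ - ‖(f : S → X) s‖|
          ≤ |t| * ‖(g : S → X) s‖ := h1
        _ = ‖(g : S → X) s‖ * |t| := mul_comm _ _
    have hDCT : Tendsto (fun t => ∫ s, Ft t s ∂μ) (𝓝[≠] (0:ℝ)) (𝓝 (∫ s, d s ∂μ)) := by
      refine tendsto_integral_filter_of_dominated_convergence (fun s => ‖(g : S → X) s‖)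
        (Eventually.of_forall hmeas) ?_ (L1.integrable_coeFn g).norm hptw
      filter_upwards [self_mem_nhdsWithin] with t ht
      exact Eventually.of_forall (hbound t ht)
    set L : ℝ := ∫ s, d s ∂μ with hL
    -- Q and its limit
    have hint : ∀ t : ℝ, Integrable (fun s => ‖(f : S → X) s + t • (g : S → X) s‖) μ :=
      fun t => ((L1.integrable_coeFn f).add ((L1.integrable_coeFn g).smul t)).norm
    have hQeq : ∀ t : ℝ, t ≠ 0 → (‖f + t • g‖ - ‖f‖) / t = ∫ s, Ft t s ∂μ := by
      intro t ht
      have h1 : ‖f + t • g‖ = ∫ s, ‖(f : S → X) s + t • (g : S → X) s‖ ∂μ := by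
        rw [L1.norm_eq_integral_norm]
        refine integral_congr_ae ?_
        filter_upwards [Lp.coeFn_add f (t • g), Lp.coeFn_smul t g] with s h1 h2
        simp only [h1, Pi.add_apply, h2, Pi.smul_apply]
      have h2 : ‖f‖ = ∫ s, ‖(f : S → X) s‖ ∂μ := L1.norm_eq_integral_norm f
      rw [h1, h2, ← integral_sub (hint t) (L1.integrable_coeFn f).norm, ← integral_div]
    have hQ : Tendsto (fun t => (‖f + t • g‖ - ‖f‖) / t) (𝓝[≠] (0:ℝ)) (𝓝 L) := by
      refine hDCT.congr' ?_
      filter_upwards [self_mem_nhdsWithin] with t ht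
      exact (hQeq t ht).symm
    refine ⟨L, fun F hF1 hFf => ?_⟩
    have hkey : ∀ t : ℝ, t * F g ≤ ‖f + t • g‖ - ‖f‖ := by
      intro t
      have h1 : F (f + t • g) ≤ ‖f + t • g‖ := by
        calc F (f + t • g) ≤ ‖F (f + t • g)‖ := le_abs_self _
          _ ≤ ‖F‖ * ‖f + t • g‖ := F.le_opNorm _
          _ = ‖f + t • g‖ := by rw [hF1, one_mul]
      have h2 : F (f + t • g) = ‖f‖ + t * F g := by
        rw [map_add, F.map_smul, hFf, smul_eq_mul]
      linarith
    have hQp : Tendsto (fun t => (‖f + t • g‖ - ‖f‖) / t) (𝓝[>] (0:ℝ)) (𝓝 L) :=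
      hQ.mono_left (nhdsWithin_mono _ fun t ht => ne_of_gt ht)
    have hQn : Tendsto (fun t => (‖f + t • g‖ - ‖f‖) / t) (𝓝[<] (0:ℝ)) (𝓝 L) :=
      hQ.mono_left (nhdsWithin_mono _ fun t ht => ne_of_lt ht)
    have hle : F g ≤ L := by
      refine ge_of_tendsto hQp ?_
      filter_upwards [self_mem_nhdsWithin] with t (ht : (0:ℝ) < t)
      rw [le_div_iff₀ ht, mul_comm]
      exact hkey t
    have hge : L ≤ F g := by
      refine le_of_tendsto hQn ?_
      filter_upwards [self_mem_nhdsWithin] with t (ht : t < (0:ℝ))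
      rw [div_le_iff_of_neg ht, mul_comm]
      exact hkey t
    linarith
  obtain ⟨F, hF1, hFf⟩ := exists_dual_vector ℝ f (norm_ne_zero_iff.2 hf)
  refine ⟨F, ⟨hF1, by exact_mod_cast hFf⟩, ?_⟩
  rintro G ⟨hG1, hGf⟩
  ext g
  obtain ⟨L, hL⟩ := main g
  rw [hL G hG1 hGf, hL F hF1 (by exact_mod_cast hFf)]


theorem ae_nonzero_implies_smooth_L1
    {S X : Type*} [MeasurableSpace S] {μ : Measure S} [μ.IsComplete]
    [NormedAddCommGroup X] [NormedSpace ℝ X] [CompleteSpace X]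
    (hX : FrechetDiffNorm X)
    (f : Lp X 1 μ) (hf : f ≠ 0)
    (hae : μ {s | (f : S → X) s = 0} = 0) :
    SmoothPt f :=
  ae_nonzero_smooth_L1_aux hX f hf hae
end
end

section
/- Let (S, μ) be a complete σ-finite measure space and X a Banach space whose norm is Fréchet differentiable at every nonzero point. If f ∈ L¹(μ, X) is a smooth point, then f is nonzero almost everywhere, i.e. μ({s : f(s) = 0}) = 0. -/
open MeasureTheory

noncomputable section

/-- If two `L¹` functions have a.e. disjoint supports, the norm is additive. -/
lemma norm_add_of_ae_disjoint_support {S X : Type*} [MeasurableSpace S] {μ : Measure S}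
    [NormedAddCommGroup X] (f g : Lp X 1 μ)
    (hsupp : ∀ᵐ s ∂μ, (f : S → X) s = 0 ∨ (g : S → X) s = 0) :
    ‖f + g‖ = ‖f‖ + ‖g‖ := by
  rw [L1.norm_eq_integral_norm, L1.norm_eq_integral_norm, L1.norm_eq_integral_norm,
    ← integral_add (L1.integrable_coeFn f).norm (L1.integrable_coeFn g).norm]
  apply integral_congr_ae
  filter_upwards [Lp.coeFn_add f g, hsupp] with s h1 h2
  rw [h1, Pi.add_apply]
  rcases h2 with h | h <;> simp [h]

theorem smooth_L1_implies_ae_nonzero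
    {S X : Type*} [MeasurableSpace S] {μ : Measure S} [μ.IsComplete] [SigmaFinite μ]
    [NormedAddCommGroup X] [NormedSpace ℝ X] [CompleteSpace X]
    (hX : FrechetDiffNorm X)
    (f : Lp X 1 μ) (hf : f ≠ 0) (hsm : SmoothPt f) :
    μ {s | (f : S → X) s = 0} = 0 := by
  by_contra hA0
  set A := {s | (f : S → X) s = 0} with hA
  have hA0' : 0 < μ A := pos_iff_ne_zero.mpr hA0
  have hAmeas : MeasurableSet A :=
    (Lp.stronglyMeasurable f).measurableSet_eq_fun stronglyMeasurable_const
  obtain ⟨A', hA'meas, hA'sub, hA'pos, hA'lt⟩ :=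
    Measure.exists_subset_measure_lt_top hAmeas hA0'
  -- a nonzero vector in X
  obtain ⟨x₀, hx₀⟩ : ∃ x₀ : X, x₀ ≠ 0 := by
    by_contra hx
    push_neg at hx
    exact hf (Lp.ext (by filter_upwards [Lp.coeFn_zero X 1 μ] with s hs; exact (hx _).trans (hx _).symm))
  set h : Lp X 1 μ := indicatorConstLp 1 hA'meas hA'lt.ne x₀ with hh
  have hdisj : ∀ᵐ s ∂μ, (f : S → X) s = 0 ∨ (h : S → X) s = 0 := by
    filter_upwards [indicatorConstLp_coeFn (p := 1) (hs := hA'meas) (hμs := hA'lt.ne)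
      (c := x₀)] with s hs
    by_cases hsA : s ∈ A'
    · exact Or.inl (hA'sub hsA)
    · exact Or.inr (by rw [hs, Set.indicator_of_notMem hsA])
  have hdisj' : ∀ᵐ s ∂μ, (f : S → X) s = 0 ∨ ((-h : Lp X 1 μ) : S → X) s = 0 := by
    filter_upwards [hdisj, Lp.coeFn_neg h] with s h1 h2
    rcases h1 with h1 | h1
    · exact Or.inl h1
    · exact Or.inr (by rw [h2, Pi.neg_apply, h1, neg_zero])
  have keyP : ‖f + h‖ = ‖f‖ + ‖h‖ := norm_add_of_ae_disjoint_support f h hdisj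
  have keyM : ‖f + -h‖ = ‖f‖ + ‖h‖ := by
    rw [norm_add_of_ae_disjoint_support f (-h) hdisj', norm_neg]
  have hhnorm : 0 < ‖h‖ := by
    rw [hh, norm_indicatorConstLp one_ne_zero ENNReal.one_ne_top]
    have h1 : 0 < ‖x₀‖ := norm_pos_iff.mpr hx₀
    have h2 : 0 < (μ A').toReal := ENNReal.toReal_pos hA'pos.ne' hA'lt.ne
    positivity
  have hfnorm : 0 < ‖f‖ := norm_pos_iff.mpr hf
  have hneP : f + h ≠ 0 := by
    intro hc
    rw [hc, norm_zero] at keyP; linarith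
  have hneM : f + -h ≠ 0 := by
    intro hc
    rw [hc, norm_zero] at keyM; linarith
  obtain ⟨FP, hFPnorm, hFP⟩ := exists_dual_vector ℝ (f + h) (norm_ne_zero_iff.mpr hneP)
  obtain ⟨FM, hFMnorm, hFM⟩ := exists_dual_vector ℝ (f + -h) (norm_ne_zero_iff.mpr hneM)
  have bound : ∀ (F : Lp X 1 μ →L[ℝ] ℝ) (g : Lp X 1 μ), ‖F‖ = 1 → F g ≤ ‖g‖ := by
    intro F g hF
    calc F g ≤ |F g| := le_abs_self _
    _ = ‖F g‖ := (Real.norm_eq_abs _).symm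
    _ ≤ ‖F‖ * ‖g‖ := F.le_opNorm g
    _ = ‖g‖ := by rw [hF, one_mul]
  have haddP : FP f + FP h = ‖f‖ + ‖h‖ := by
    have : FP (f + h) = ‖f + h‖ := by exact_mod_cast hFP
    rw [map_add, keyP] at this; exact this
  have haddM : FM f + FM (-h) = ‖f‖ + ‖h‖ := by
    have : FM (f + -h) = ‖f + -h‖ := by exact_mod_cast hFM
    rw [map_add, keyM] at this; exact this
  have hFPf : FP f = ‖f‖ := by
    have b1 := bound FP f hFPnorm
    have b2 := bound FP h hFPnorm
    linarith
  have hFPh : FP h = ‖h‖ := by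
    have b1 := bound FP f hFPnorm
    linarith
  have hFMf : FM f = ‖f‖ := by
    have b1 := bound FM f hFMnorm
    have b2 := bound FM (-h) hFMnorm
    rw [norm_neg] at b2
    linarith
  have hFMh : FM h = -‖h‖ := by
    have b1 := bound FM f hFMnorm
    have : FM (-h) = -FM h := map_neg FM h
    linarith
  obtain ⟨F, _, huniq⟩ := hsm
  have eP : FP = F := huniq FP ⟨hFPnorm, hFPf⟩
  have eM : FM = F := huniq FM ⟨hFMnorm, hFMf⟩
  rw [eP] at hFPh
  rw [eM] at hFMh
  rw [hFPh] at hFMh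
  linarith
end
end

section
/- Let (S, μ) be a complete σ-finite measure space and X a real Banach space whose norm is Fréchet differentiable at every nonzero point. If f ∈ L¹(μ, X) is a nonzero left symmetric point with respect to Birkhoff-James orthogonality, then μ({s : f(s) = 0}) = 0. -/
open MeasureTheory ENNReal

noncomputable section

theorem left_symmetric_L1_ae_nonzero
    {S X : Type*} [MeasurableSpace S] {μ : Measure S} [μ.IsComplete] [SigmaFinite μ]
    [NormedAddCommGroup X] [NormedSpace ℝ X] [CompleteSpace X]
    (hX : FrechetDiffNorm X)
    (f : Lp X 1 μ) (hf : f ≠ 0) (hls : LeftSymPt f) :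
    μ {s | (f : S → X) s = 0} = 0 := by
  classical
  by_contra hA
  set F : S → X := (f : S → X) with hF
  have hFmeas : StronglyMeasurable F := Lp.stronglyMeasurable f
  have hAmeas : MeasurableSet {s | F s = 0} := by
    have h : {s | F s = 0} = (fun s => ‖F s‖) ⁻¹' {0} := by
      ext s; simp
    rw [h]
    exact hFmeas.norm.measurable (measurableSet_singleton 0)
  have hApos : (0 : ℝ≥0∞) < μ {s | F s = 0} := pos_iff_ne_zero.mpr hA
  obtain ⟨B, hBmeas, hBsub, hBpos, hBfin⟩ :=
    Measure.exists_subset_measure_lt_top hAmeas hApos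
  -- a nonzero vector
  obtain ⟨v, hv⟩ : ∃ v : X, v ≠ 0 := by
    by_contra h
    push_neg at h
    exact hf (Lp.eq_zero_iff_ae_eq_zero.mpr (Filter.Eventually.of_forall fun s => h _))
  have hvpos : (0:ℝ) < ‖v‖ := norm_pos_iff.mpr hv
  have hμBpos : (0:ℝ) < (μ B).toReal := ENNReal.toReal_pos hBpos.ne' hBfin.ne
  set c : ℝ := ‖f‖ / (μ B).toReal / ‖v‖ + 1 with hc
  have hcpos : 0 < c := by positivity
  set x₀ : X := c • v with hx₀
  have hKge : ‖f‖ ≤ ‖x₀‖ * (μ B).toReal := by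
    have hx₀n : ‖x₀‖ = c * ‖v‖ := by
      rw [hx₀, norm_smul, Real.norm_eq_abs, abs_of_pos hcpos]
    rw [hx₀n, hc]
    rw [div_div]
    have h1 : (‖f‖ / ((μ B).toReal * ‖v‖) + 1) * ‖v‖ * (μ B).toReal
        = ‖f‖ + ‖v‖ * (μ B).toReal := by
      field_simp
    rw [h1]
    nlinarith [norm_nonneg f]
  set I : Lp X 1 μ := indicatorConstLp 1 hBmeas hBfin.ne x₀ with hI
  set K : ℝ := ‖x₀‖ * (μ B).toReal with hK
  -- key norm identity
  have key : ∀ a b : ℝ, ‖a • f + b • I‖ = |a| * ‖f‖ + |b| * K := by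
    intro a b
    have hcoe : ⇑(a • f + b • I) =ᵐ[μ]
        fun s => a • F s + b • (B.indicator (fun _ => x₀) s) := by
      filter_upwards [Lp.coeFn_add (a • f) (b • I), Lp.coeFn_smul a f, Lp.coeFn_smul b I,
        indicatorConstLp_coeFn (p := (1:ℝ≥0∞)) (hs := hBmeas) (hμs := hBfin.ne) (c := x₀)]
        with s h1 h2 h3 h4
      rw [h1, Pi.add_apply, h2, h3, Pi.smul_apply, Pi.smul_apply, h4]
    have hB0 : ∫⁻ s in B, (‖a • F s + b • (B.indicator (fun _ => x₀) s)‖₊ : ℝ≥0∞) ∂μ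
        = (‖b • x₀‖₊ : ℝ≥0∞) * μ B := by
      rw [setLIntegral_congr_fun hBmeas (g := fun _ => (‖b • x₀‖₊ : ℝ≥0∞))
        (fun s hs => ?_), setLIntegral_const]
      have hFs : F s = 0 := hBsub hs
      rw [Set.indicator_of_mem hs, hFs, smul_zero, zero_add]
    have hBc : ∫⁻ s in Bᶜ, (‖a • F s + b • (B.indicator (fun _ => x₀) s)‖₊ : ℝ≥0∞) ∂μ
        = (‖a‖₊ : ℝ≥0∞) * ∫⁻ s, (‖F s‖₊ : ℝ≥0∞) ∂μ := by
      have e1 : ∫⁻ s in Bᶜ, (‖a • F s + b • (B.indicator (fun _ => x₀) s)‖₊ : ℝ≥0∞) ∂μ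
          = ∫⁻ s in Bᶜ, (‖a‖₊ : ℝ≥0∞) * (‖F s‖₊ : ℝ≥0∞) ∂μ := by
        refine setLIntegral_congr_fun hBmeas.compl
          (fun s hs => ?_)
        rw [Set.indicator_of_notMem hs, smul_zero, add_zero, nnnorm_smul]
        push_cast
        ring
      have e2 : ∫⁻ s in B, (‖F s‖₊ : ℝ≥0∞) ∂μ = 0 := by
        rw [setLIntegral_congr_fun hBmeas (g := fun _ => (0:ℝ≥0∞))
          (fun s hs => ?_)]
        · simp
        · have hFs : F s = 0 := hBsub hs
          simp [hFs]
      have e3 : ∫⁻ s, (‖F s‖₊ : ℝ≥0∞) ∂μ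
          = ∫⁻ s in B, (‖F s‖₊ : ℝ≥0∞) ∂μ + ∫⁻ s in Bᶜ, (‖F s‖₊ : ℝ≥0∞) ∂μ :=
        (lintegral_add_compl (fun s => (‖F s‖₊ : ℝ≥0∞)) hBmeas).symm
      rw [e1, lintegral_const_mul' _ _ ENNReal.coe_ne_top, e3, e2, zero_add]
    have hnormf : ∫⁻ s, (‖F s‖₊ : ℝ≥0∞) ∂μ = eLpNorm f 1 μ := by
      exact (eLpNorm_one_eq_lintegral_enorm (μ := μ) (f := F)).symm
    rw [Lp.norm_def, eLpNorm_congr_ae hcoe, eLpNorm_one_eq_lintegral_enorm]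
    simp only [enorm_eq_nnnorm]
    rw [← lintegral_add_compl _ hBmeas, hB0, hBc, hnormf,
      ENNReal.toReal_add (ENNReal.mul_ne_top ENNReal.coe_ne_top hBfin.ne)
        (ENNReal.mul_ne_top ENNReal.coe_ne_top (Lp.eLpNorm_ne_top f)),
      ENNReal.toReal_mul, ENNReal.toReal_mul]
    simp only [ENNReal.coe_toReal, coe_nnnorm]
    rw [norm_smul b x₀, Real.norm_eq_abs b, Real.norm_eq_abs a, ← Lp.norm_def]
    ring
  -- f ⊥_BJ (f + I)
  have hfg : BJOrth f (f + I) := by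
    intro t
    have h1 : f + t • (f + I) = (1 + t) • f + t • I := by
      rw [smul_add, add_smul, one_smul]; exact (add_assoc _ _ _).symm
    rw [h1, key]
    have h3 : (1:ℝ) ≤ |1 + t| + |t| := by
      calc (1:ℝ) = |(1 + t) - t| := by norm_num
      _ ≤ |1 + t| + |t| := abs_sub _ _
    have h4 : |t| * ‖f‖ ≤ |t| * K := by
      have := hKge
      nlinarith [abs_nonneg t]
    nlinarith [norm_nonneg f, abs_nonneg (1 + t), abs_nonneg t]
  have hgf := hls (f + I) hfg (-(1/2))
  have h5 : f + I + (-(1/2) : ℝ) • f = (1/2 : ℝ) • f + (1:ℝ) • I := by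
    have h : (1/2 : ℝ) • f = (1:ℝ) • f + (-(1/2) : ℝ) • f := by
      rw [← add_smul]; norm_num
    rw [h, one_smul, one_smul]; abel
  have h7 : ‖f + I‖ = |(1:ℝ)| * ‖f‖ + |(1:ℝ)| * K := by
    rw [show f + I = (1:ℝ) • f + (1:ℝ) • I by rw [one_smul, one_smul]]
    exact key 1 1
  rw [h5, key, h7] at hgf
  have hfpos : (0:ℝ) < ‖f‖ := norm_pos_iff.mpr hf
  rw [abs_one, abs_of_pos (show (0:ℝ) < 1/2 by norm_num)] at hgf
  linarith
end
end

section
/- Let (S, μ) be a complete σ-finite measure space and X a real Banach space whose norm is Fréchet differentiable at every nonzero point. If f ∈ L¹(μ, X) is a nonzero left symmetric point with respect to Birkhoff-James orthogonality, then the set Z(f)^c = {s ∈ S : f(s) ≠ 0} is either an atom of μ or a disjoint union of exactly two atoms of μ. -/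
open MeasureTheory Set
attribute [local instance] Classical.propDecidable

noncomputable section

section Aux

variable {S X : Type*} [MeasurableSpace S] {μ : Measure S}
  [NormedAddCommGroup X] [NormedSpace ℝ X]

lemma aux_mem (f : Lp X 1 μ) {A : Set S} (hA : MeasurableSet A) (a b : ℝ) :
    MemLp (fun s => (if s ∈ A then a else b) • (f : S → X) s) 1 μ := by
  rw [memLp_one_iff_integrable]
  have hint : Integrable (fun s => ‖(f : S → X) s‖) μ := (L1.integrable_coeFn f).norm
  refine Integrable.mono' (hint.const_mul (max |a| |b|)) ?_ ?_
  · exact (((measurable_const.ite hA measurable_const).stronglyMeasurable).smul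
      (Lp.stronglyMeasurable f)).aestronglyMeasurable
  · filter_upwards with s
    calc ‖(if s ∈ A then a else b) • (f : S → X) s‖
        = |if s ∈ A then a else b| * ‖(f : S → X) s‖ := by
          rw [norm_smul, Real.norm_eq_abs]
      _ ≤ max |a| |b| * ‖(f : S → X) s‖ := by
          gcongr
          split_ifs
          · exact le_max_left _ _
          · exact le_max_right _ _

lemma aux_norm (f : Lp X 1 μ) {A : Set S} (hA : MeasurableSet A) (a b : ℝ)
    (h : Lp X 1 μ)
    (hh : (h : S → X) =ᵐ[μ] fun s => (if s ∈ A then a else b) • (f : S → X) s) :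
    ‖h‖ = |a| * ∫ s in A, ‖(f : S → X) s‖ ∂μ + |b| * ∫ s in Aᶜ, ‖(f : S → X) s‖ ∂μ := by
  have hint : Integrable (fun s => ‖(f : S → X) s‖) μ := (L1.integrable_coeFn f).norm
  have hmem := aux_mem f hA a b
  have h2 : Integrable (fun s => ‖(if s ∈ A then a else b) • (f : S → X) s‖) μ :=
    (memLp_one_iff_integrable.mp hmem).norm
  rw [L1.norm_eq_integral_norm]
  have hh' : (fun s => ‖(h : S → X) s‖) =ᵐ[μ]
      fun s => ‖(if s ∈ A then a else b) • (f : S → X) s‖ := by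
    filter_upwards [hh] with s hs; rw [hs]
  rw [integral_congr_ae hh']
  rw [← integral_add_compl hA h2]
  congr 1
  · rw [← integral_const_mul]
    refine setIntegral_congr_fun hA fun s hs => ?_
    simp [hs, norm_smul]
  · rw [← integral_const_mul]
    refine setIntegral_congr_fun hA.compl fun s hs => ?_
    have : s ∉ A := hs
    simp [this, norm_smul]

/-- Key lemma: left symmetry forces equal masses on complementary sets. -/
lemma key (f : Lp X 1 μ) (hls : LeftSymPt f) {A : Set S} (hA : MeasurableSet A)
    (h1 : 0 < ∫ s in A, ‖(f : S → X) s‖ ∂μ)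
    (h2 : 0 < ∫ s in Aᶜ, ‖(f : S → X) s‖ ∂μ) :
    ∫ s in A, ‖(f : S → X) s‖ ∂μ = ∫ s in Aᶜ, ‖(f : S → X) s‖ ∂μ := by
  set mA := ∫ s in A, ‖(f : S → X) s‖ ∂μ with hmA
  set mB := ∫ s in Aᶜ, ‖(f : S → X) s‖ ∂μ with hmB
  set g : Lp X 1 μ := (aux_mem f hA mB (-mA)).toLp _ with hg
  have hgcoe : (g : S → X) =ᵐ[μ] fun s => (if s ∈ A then mB else -mA) • (f : S → X) s :=
    MemLp.coeFn_toLp _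
  -- coeFn of g + t • f
  have hcoe1 : ∀ t : ℝ, ((g + t • f : Lp X 1 μ) : S → X) =ᵐ[μ]
      fun s => (if s ∈ A then mB + t else -mA + t) • (f : S → X) s := by
    intro t
    filter_upwards [Lp.coeFn_add g (t • f), Lp.coeFn_smul t f, hgcoe] with s e1 e2 e3
    rw [e1, Pi.add_apply, e2, Pi.smul_apply, e3]
    split_ifs <;> module
  have hcoe2 : ∀ t : ℝ, ((f + t • g : Lp X 1 μ) : S → X) =ᵐ[μ]
      fun s => (if s ∈ A then 1 + t * mB else 1 + t * (-mA)) • (f : S → X) s := by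
    intro t
    filter_upwards [Lp.coeFn_add f (t • g), Lp.coeFn_smul t g, hgcoe] with s e1 e2 e3
    rw [e1, Pi.add_apply, e2, Pi.smul_apply, e3]
    split_ifs <;> module
  have hfnorm : ‖f‖ = mA + mB := by
    have := aux_norm f hA 1 1 f (by filter_upwards with s; split_ifs <;> simp)
    simpa using this
  -- f ⊥ g
  have hfg : BJOrth f g := by
    intro t
    rw [hfnorm, aux_norm f hA _ _ _ (hcoe2 t)]
    have e1 : (1 + t * mB) * mA ≤ |1 + t * mB| * mA :=
      mul_le_mul_of_nonneg_right (le_abs_self _) h1.le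
    have e2 : (1 + t * (-mA)) * mB ≤ |1 + t * (-mA)| * mB :=
      mul_le_mul_of_nonneg_right (le_abs_self _) h2.le
    nlinarith
  have hgf := hls g hfg
  have hgnorm : ‖g‖ = mB * mA + mA * mB := by
    have := aux_norm f hA mB (-mA) g hgcoe
    rwa [abs_of_pos h2, abs_neg, abs_of_pos h1] at this
  have e1 := hgf (-mB)
  rw [hgnorm, aux_norm f hA _ _ _ (hcoe1 (-mB))] at e1
  have e2 := hgf mA
  rw [hgnorm, aux_norm f hA _ _ _ (hcoe1 mA)] at e2
  rw [show mB + -mB = 0 by ring, abs_zero,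
    show -mA + -mB = -(mA + mB) by ring, abs_neg, abs_of_pos (by linarith)] at e1
  rw [show mB + mA = mA + mB by ring, abs_of_pos (by linarith),
    show -mA + mA = 0 by ring, abs_zero] at e2
  nlinarith

end Aux

theorem left_symmetric_L1_support_atoms
    {S X : Type*} [MeasurableSpace S] {μ : Measure S} [μ.IsComplete] [SigmaFinite μ]
    [NormedAddCommGroup X] [NormedSpace ℝ X] [CompleteSpace X]
    (hX : FrechetDiffNorm X)
    (f : Lp X 1 μ) (hf : f ≠ 0) (hls : LeftSymPt f) :
    IsMeasAtom μ {s | (f : S → X) s ≠ 0} ∨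
      ∃ A B : Set S, Disjoint A B ∧ IsMeasAtom μ A ∧ IsMeasAtom μ B ∧
        {s | (f : S → X) s ≠ 0} = A ∪ B := by
  classical
  have hsm := Lp.stronglyMeasurable f
  have hN : MeasurableSet {s | (f : S → X) s ≠ 0} := by
    have : MeasurableSet {s | (f : S → X) s = 0} :=
      hsm.measurableSet_eq_fun stronglyMeasurable_const
    exact this.compl
  set N := {s | (f : S → X) s ≠ 0} with hNdef
  have hint : Integrable (fun s => ‖(f : S → X) s‖) μ := (L1.integrable_coeFn f).norm
  set m : Set S → ℝ := fun E => ∫ s in E, ‖(f : S → X) s‖ ∂μ with hm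
  have hm0 : ∀ E, 0 ≤ m E := fun E => integral_nonneg fun s => norm_nonneg _
  have hmono : ∀ D E : Set S, D ⊆ E → m D ≤ m E := by
    intro D E hDE
    exact setIntegral_mono_set hint.integrableOn
      (Filter.Eventually.of_forall fun s => norm_nonneg _) (HasSubset.Subset.eventuallyLE hDE)
  have hzero : ∀ C, C ⊆ N → MeasurableSet C → m C = 0 → μ C = 0 := by
    intro C hCN hC h0
    by_contra hμ
    have hpos : 0 < μ C := pos_iff_ne_zero.mpr hμ
    have hsupp : Function.support (fun s => ‖(f : S → X) s‖) ∩ C = C := by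
      apply Set.inter_eq_self_of_subset_right
      intro s hs
      simpa [Function.mem_support, hNdef] using hCN hs
    have := (setIntegral_pos_iff_support_of_nonneg_ae
      (Filter.Eventually.of_forall fun s => norm_nonneg ((f : S → X) s))
      hint.integrableOn).mpr (by rw [hsupp]; exact hpos)
    rw [hm] at h0; linarith
  have hsplit : ∀ D : Set S, MeasurableSet D → m D + m Dᶜ = ‖f‖ := by
    intro D hD
    rw [L1.norm_eq_integral_norm]
    exact integral_add_compl hD hint
  have hunion : ∀ D E : Set S, MeasurableSet E → Disjoint D E → m (D ∪ E) = m D + m E := by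
    intro D E hE hDE
    exact setIntegral_union hDE hE hint.integrableOn hint.integrableOn
  have hdecomp : ∀ A D : Set S, MeasurableSet A → MeasurableSet D → D ⊆ A →
      m A = m D + m (A \ D) := by
    intro A D hA hD hDA
    rw [← hunion D (A \ D) (hA.diff hD) disjoint_sdiff_self_right,
      Set.union_diff_cancel hDA]
  have hfull : ∀ A D : Set S, MeasurableSet A → MeasurableSet D → A ⊆ N → D ⊆ A →
      m A ≤ m D → μ D = μ A := by
    intro A D hA hD hAN hDA hle
    have h1 : m A = m D + m (A \ D) := hdecomp A D hA hD hDA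
    have h2 : m (A \ D) = 0 := le_antisymm (by linarith) (hm0 _)
    have h3 : μ (A \ D) = 0 := hzero _ (fun s hs => hAN hs.1) (hA.diff hD) h2
    refine le_antisymm (measure_mono hDA) ?_
    calc μ A ≤ μ (D ∪ (A \ D)) := measure_mono (by rw [Set.union_diff_cancel hDA])
      _ ≤ μ D + μ (A \ D) := measure_union_le _ _
      _ = μ D := by rw [h3, add_zero]
  have hEofN : ∀ E : Set S, MeasurableSet E → m (E ∩ N) = m E := by
    intro E hE
    have h1 : m E = m (E ∩ N) + m (E \ N) := by
      rw [← hunion _ _ (hE.diff hN) (disjoint_sdiff_self_right.mono_left Set.inter_subset_right), Set.inter_union_diff]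
    have hz : m (E \ N) = 0 := by
      have heq : ∀ s ∈ E \ N, ‖(f : S → X) s‖ = (0 : ℝ) := by
        intro s hs
        have : ¬ (f : S → X) s ≠ 0 := hs.2
        simp [not_not.mp this]
      rw [hm]
      simp only
      rw [setIntegral_congr_fun (hE.diff hN) heq, integral_zero]
    linarith
  have hT : 0 < ‖f‖ := norm_pos_iff.mpr hf
  by_cases hex : ∃ C : Set S, MeasurableSet C ∧ 0 < m C ∧ 0 < m Cᶜ
  · right
    obtain ⟨C, hC, hC1, hC2⟩ := hex
    have hkey : m C = m Cᶜ := key f hls hC hC1 hC2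
    have hCnorm : 2 * m C = ‖f‖ := by have := hsplit C hC; linarith
    have hhalf : ∀ P : Set S, MeasurableSet P → P ⊆ N → 0 < m P → 2 * m P = ‖f‖ →
        IsMeasAtom μ P := by
      intro P hP hPN hPpos hPhalf
      refine ⟨hP, ?_, ?_⟩
      · rw [pos_iff_ne_zero]
        intro h0
        have : m P = 0 := by rw [hm]; exact setIntegral_measure_zero _ h0
        linarith
      · intro B hBP hB
        by_cases hB1 : 0 < m B
        · by_cases hB2 : 0 < m Bᶜ
          · have hk := key f hls hB hB1 hB2
            have h4 := hsplit B hB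
            right; exact hfull P B hP hB hPN hBP (by linarith)
          · have hBc : m Bᶜ = 0 := le_antisymm (not_lt.mp hB2) (hm0 _)
            have h4 := hsplit B hB
            have h5 : m B ≤ m P := hmono B P hBP
            linarith
        · left
          exact hzero B (hBP.trans hPN) hB (le_antisymm (not_lt.mp hB1) (hm0 B))
    refine ⟨C ∩ N, Cᶜ ∩ N, ?_, ?_, ?_, ?_⟩
    · exact (disjoint_compl_right).mono Set.inter_subset_left Set.inter_subset_left
    · exact hhalf _ (hC.inter hN) Set.inter_subset_right
        (by rw [hEofN _ hC]; exact hC1) (by rw [hEofN _ hC]; exact hCnorm)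
    · exact hhalf _ (hC.compl.inter hN) Set.inter_subset_right
        (by rw [hEofN _ hC.compl, ← hkey]; exact hC1)
        (by rw [hEofN _ hC.compl, ← hkey]; exact hCnorm)
    · rw [← Set.union_inter_distrib_right, Set.union_compl_self, Set.univ_inter]
  · left
    push_neg at hex
    refine ⟨hN, ?_, ?_⟩
    · rw [pos_iff_ne_zero]
      intro h0
      have hae : ∀ᵐ s ∂μ, (f : S → X) s = 0 := by
        rw [MeasureTheory.ae_iff]
        exact h0
      have : ‖f‖ = 0 := by
        rw [L1.norm_eq_integral_norm]
        rw [integral_congr_ae (g := fun _ => (0 : ℝ)) (by filter_upwards [hae] with s hs; rw [hs, norm_zero])]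
        simp
      linarith
    · intro B hBN hB
      by_cases hB1 : 0 < m B
      · have hBc : m Bᶜ = 0 := le_antisymm (hex B hB hB1) (hm0 _)
        have hNB : m (N \ B) = 0 :=
          le_antisymm (le_trans (hmono _ _ fun s hs => hs.2) hBc.le) (hm0 _)
        have hNle : m N ≤ m B := by
          have := hdecomp N B hN hB hBN
          linarith
        right; exact hfull N B hN hB subset_rfl hBN hNle
      · left
        exact hzero B hBN hB (le_antisymm (not_lt.mp hB1) (hm0 B))
end
end

section
/- Let (S, μ) be a complete σ-finite measure space and X a real Banach space whose norm is Fréchet differentiable at every nonzero point. Every nonzero left symmetric point of L¹(μ, X) with respect to Birkhoff-James orthogonality is a smooth point of L¹(μ, X). -/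
open MeasureTheory

noncomputable section

open Filter Topology

section Aux

variable {S X : Type*} [MeasurableSpace S] {μ : Measure S}
  [NormedAddCommGroup X] [NormedSpace ℝ X]

lemma norm_smul_add_indicator (f : Lp X 1 μ) {B : Set S} (hB : MeasurableSet B)
    (hBfin : μ B ≠ ⊤) (x : X) (hBz : ∀ᵐ s ∂μ, s ∈ B → f s = 0) (a b : ℝ) :
    ‖a • f + b • indicatorConstLp 1 hB hBfin x‖
      = |b| * ‖x‖ * (μ B).toReal + |a| * ‖f‖ := by
  set ind := indicatorConstLp 1 hB hBfin x with hind
  have hco : ⇑(a • f + b • ind) =ᵐ[μ]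
      fun s => a • f s + b • B.indicator (fun _ => x) s := by
    filter_upwards [Lp.coeFn_add (a • f) (b • ind), Lp.coeFn_smul a f,
      Lp.coeFn_smul b ind, indicatorConstLp_coeFn (p := 1) (hs := hB) (hμs := hBfin) (c := x)]
      with s h1 h2 h3 h4
    simp only [h1, Pi.add_apply, h2, h3, Pi.smul_apply, h4]
    rw [hind, h4]
  have hint : Integrable (fun s => ‖a • f s + b • B.indicator (fun _ => x) s‖) μ :=
    ((L1.integrable_coeFn (a • f + b • ind)).congr hco).norm
  have hfint : Integrable (fun s => ‖f s‖) μ := (L1.integrable_coeFn f).norm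
  rw [L1.norm_eq_integral_norm, integral_congr_ae (hco.mono fun s h => by rw [h])]
  rw [← integral_add_compl hB hint]
  have h1 : ∫ s in B, ‖a • f s + b • B.indicator (fun _ => x) s‖ ∂μ
      = (μ B).toReal * ‖b • x‖ := by
    rw [setIntegral_congr_ae hB (g := fun _ => ‖b • x‖)
      (by filter_upwards [hBz] with s hz hs; rw [hz hs, Set.indicator_of_mem hs]; simp),
      setIntegral_const, smul_eq_mul, measureReal_def]
  have h2 : ∫ s in Bᶜ, ‖a • f s + b • B.indicator (fun _ => x) s‖ ∂μ
      = |a| * ∫ s in Bᶜ, ‖f s‖ ∂μ := by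
    rw [setIntegral_congr_ae hB.compl (g := fun s => |a| * ‖f s‖)
      (Eventually.of_forall fun s hs => by
        rw [Set.indicator_of_notMem hs, smul_zero, add_zero, norm_smul, Real.norm_eq_abs]),
      integral_const_mul]
  have h3 : ∫ s in Bᶜ, ‖f s‖ ∂μ = ‖f‖ := by
    have hB0 : ∫ s in B, ‖f s‖ ∂μ = 0 := by
      rw [setIntegral_congr_ae hB (g := fun _ => (0:ℝ))
        (by filter_upwards [hBz] with s hz hs; rw [hz hs, norm_zero]), setIntegral_const,
        smul_zero]
    have := integral_add_compl hB hfint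
    rw [L1.norm_eq_integral_norm]
    linarith [this]
  rw [h1, h2, h3, norm_smul, Real.norm_eq_abs]
  ring

lemma ae_ne_zero_of_leftSym [SigmaFinite μ] (f : Lp X 1 μ) (hf : f ≠ 0)
    (hls : LeftSymPt f) : ∀ᵐ s ∂μ, f s ≠ 0 := by
  by_contra hcon
  -- a strongly measurable representative
  set F := (Lp.aestronglyMeasurable f).mk f with hF
  have hmk : ⇑f =ᵐ[μ] F := (Lp.aestronglyMeasurable f).ae_eq_mk
  have hsm : StronglyMeasurable F := (Lp.aestronglyMeasurable f).stronglyMeasurable_mk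
  set Z : Set S := {s | ‖F s‖ = 0} with hZdef
  have hZ : MeasurableSet Z := hsm.norm.measurable (measurableSet_singleton 0)
  have hZpos : 0 < μ Z := by
    rcases eq_or_lt_of_le (zero_le : 0 ≤ μ Z) with h | h
    · exfalso
      apply hcon
      have : ∀ᵐ s ∂μ, ¬ (‖F s‖ = 0) := by
        rw [ae_iff]
        simp only [not_not]
        convert h.symm using 2
      filter_upwards [this, hmk] with s h1 h2
      rw [h2]; simpa using h1
    · exact h
  obtain ⟨B, hBmeas, hBsub, hBpos, hBfin⟩ := Measure.exists_subset_measure_lt_top hZ hZpos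
  obtain ⟨x, hx⟩ : ∃ x : X, x ≠ 0 := by
    by_contra h'
    push_neg at h'
    exact hf (Lp.eq_zero_iff_ae_eq_zero.mpr (Eventually.of_forall fun s => h' _))
  set m := (μ B).toReal with hm
  have hmpos : 0 < m := ENNReal.toReal_pos hBpos.ne' hBfin.ne
  have hfpos : (0:ℝ) < ‖f‖ := norm_pos_iff.mpr hf
  have hxpos : (0:ℝ) < ‖x‖ := norm_pos_iff.mpr hx
  set c : ℝ := ‖x‖ * m / ‖f‖ with hc
  have hcpos : 0 < c := by positivity
  have hkey : c * ‖f‖ = ‖x‖ * m := div_mul_cancel₀ _ hfpos.ne'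
  have hBz : ∀ᵐ s ∂μ, s ∈ B → f s = 0 := by
    filter_upwards [hmk] with s h hs
    rw [h]
    exact norm_eq_zero.mp (hBsub hs)
  set ind := indicatorConstLp 1 hBmeas hBfin.ne x with hind
  set g : Lp X 1 μ := ind + c • f with hg
  have horth : BJOrth f g := by
    intro t
    have hrw : f + t • g = (1 + t * c) • f + t • ind := by
      rw [hg]; module
    rw [hrw, norm_smul_add_indicator f hBmeas hBfin.ne x hBz]
    have habs : (1:ℝ) - |t| * c ≤ |1 + t * c| := by
      have h1 : |1 + t * c + -(t * c)| ≤ |1 + t * c| + |t * c| := (abs_add_le _ _).trans_eq (by rw [abs_neg])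
      have h2 : |t * c| = |t| * c := by rw [abs_mul, abs_of_pos hcpos]
      simp only [add_neg_cancel_right] at h1
      rw [h2] at h1
      simp at h1 ⊢
      linarith
    have habs2 : (0:ℝ) ≤ |t| := abs_nonneg t
    nlinarith [hkey]
  have hgo := hls g horth (-c)
  have hrw2 : g + (-c) • f = (0:ℝ) • f + (1:ℝ) • ind := by rw [hg]; module
  have hrw3 : g = c • f + (1:ℝ) • ind := by rw [hg]; module
  rw [hrw2, hrw3, norm_smul_add_indicator f hBmeas hBfin.ne x hBz,
    norm_smul_add_indicator f hBmeas hBfin.ne x hBz] at hgo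
  rw [abs_of_pos hcpos] at hgo
  simp at hgo
  nlinarith

lemma key_tendsto (hX : FrechetDiffNorm X) (f g : Lp X 1 μ)
    (hae : ∀ᵐ s ∂μ, f s ≠ 0) :
    Tendsto (fun t : ℝ => (‖f + t • g‖ + ‖f + (-t) • g‖ - 2 * ‖f‖) * t⁻¹)
      (𝓝[>] (0:ℝ)) (𝓝 0) := by
  have hg' := Lp.aestronglyMeasurable g
  have hf' := Lp.aestronglyMeasurable f
  have hnorm : ∀ u : ℝ, ‖f + u • g‖ = ∫ s, ‖f s + u • g s‖ ∂μ := by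
    intro u
    rw [L1.norm_eq_integral_norm]
    refine integral_congr_ae ?_
    filter_upwards [Lp.coeFn_add f (u • g), Lp.coeFn_smul u g] with s h1 h2
    rw [h1, Pi.add_apply, h2, Pi.smul_apply]
  have hint : ∀ u : ℝ, Integrable (fun s => ‖f s + u • g s‖) μ := by
    intro u
    refine ((L1.integrable_coeFn (f + u • g)).congr ?_).norm
    filter_upwards [Lp.coeFn_add f (u • g), Lp.coeFn_smul u g] with s h1 h2
    rw [h1, Pi.add_apply, h2, Pi.smul_apply]
  have hfint : Integrable (fun s => ‖f s‖) μ := (L1.integrable_coeFn f).norm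
  set D : ℝ → S → ℝ :=
    fun t s => (‖f s + t • g s‖ + ‖f s + (-t) • g s‖ - 2 * ‖f s‖) * t⁻¹ with hD
  have hEq : ∀ t : ℝ, (‖f + t • g‖ + ‖f + (-t) • g‖ - 2 * ‖f‖) * t⁻¹ = ∫ s, D t s ∂μ := by
    intro t
    rw [hnorm t, hnorm (-t), L1.norm_eq_integral_norm f, hD]
    rw [MeasureTheory.integral_mul_const]
    congr 1
    have hadd : Integrable (fun s => ‖f s + t • g s‖ + ‖f s + (-t) • g s‖) μ :=
      (hint t).add (hint (-t))
    rw [integral_sub hadd (hfint.const_mul 2), integral_add (hint t) (hint (-t)),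
      MeasureTheory.integral_const_mul]
  rw [show (fun t : ℝ => (‖f + t • g‖ + ‖f + (-t) • g‖ - 2 * ‖f‖) * t⁻¹)
      = fun t => ∫ s, D t s ∂μ from funext hEq]
  have hDC : Tendsto (fun t => ∫ s, D t s ∂μ) (𝓝[>] (0:ℝ)) (𝓝 (∫ _ : S, (0:ℝ) ∂μ)) := by
    refine tendsto_integral_filter_of_dominated_convergence (fun s => 2 * ‖g s‖)
      (Eventually.of_forall fun t => ?_) ?_ ((L1.integrable_coeFn g).norm.const_mul 2) ?_
    · exact ((((hf'.add (hg'.const_smul t)).norm.add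
        ((hf'.add (hg'.const_smul (-t))).norm)).sub (hf'.norm.const_mul 2)).mul_const t⁻¹)
    · filter_upwards [self_mem_nhdsWithin] with t (ht : (0:ℝ) < t)
      refine Eventually.of_forall fun s => ?_
      have hnn : (0:ℝ) ≤ ‖f s + t • g s‖ + ‖f s + (-t) • g s‖ - 2 * ‖f s‖ := by
        have h1 : ‖(f s + t • g s) + (f s + (-t) • g s)‖
            ≤ ‖f s + t • g s‖ + ‖f s + (-t) • g s‖ := norm_add_le _ _
        have h2 : (f s + t • g s) + (f s + (-t) • g s) = f s + f s := by module
        rw [h2] at h1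
        have h3 : ‖f s + f s‖ = 2 * ‖f s‖ := by
          rw [← two_smul ℝ (f s), norm_smul]; simp
        linarith
      have hub : ‖f s + t • g s‖ + ‖f s + (-t) • g s‖ - 2 * ‖f s‖ ≤ 2 * t * ‖g s‖ := by
        have h1 : ‖f s + t • g s‖ ≤ ‖f s‖ + t * ‖g s‖ := by
          refine (norm_add_le _ _).trans ?_
          rw [norm_smul, Real.norm_eq_abs, abs_of_pos ht]
        have h2 : ‖f s + (-t) • g s‖ ≤ ‖f s‖ + t * ‖g s‖ := by
          refine (norm_add_le _ _).trans ?_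
          rw [norm_smul, Real.norm_eq_abs, abs_neg, abs_of_pos ht]
        linarith
      show |(‖f s + t • g s‖ + ‖f s + (-t) • g s‖ - 2 * ‖f s‖) * t⁻¹| ≤ 2 * ‖g s‖
      rw [← div_eq_mul_inv,
        abs_of_nonneg (div_nonneg hnn ht.le), div_le_iff₀ ht]
      nlinarith
    · filter_upwards [hae] with s hs
      obtain ⟨φ, hφ⟩ := hX (f s) hs
      have hc1 : HasDerivAt (fun t : ℝ => f s + t • g s) (g s) 0 := by
        simpa using ((hasDerivAt_id (0:ℝ)).smul_const (g s)).const_add (f s)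
      have hc2 : HasDerivAt (fun t : ℝ => f s + (-t) • g s) (-(g s)) 0 := by
        simpa using (((hasDerivAt_id (0:ℝ)).neg).smul_const (g s)).const_add (f s)
      have hφ' : HasFDerivAt (fun y : X => ‖y‖) φ (f s + (0:ℝ) • g s) := by
        simpa using hφ
      have hφ'' : HasFDerivAt (fun y : X => ‖y‖) φ (f s + (-(0:ℝ)) • g s) := by
        simpa using hφ
      have h1 : HasDerivAt (fun t : ℝ => ‖f s + t • g s‖) (φ (g s)) 0 :=
        hφ'.comp_hasDerivAt 0 hc1
      have h2 : HasDerivAt (fun t : ℝ => ‖f s + (-t) • g s‖) (φ (-(g s))) 0 :=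
        hφ''.comp_hasDerivAt 0 hc2
      have s1 := hasDerivAt_iff_tendsto_slope.mp h1
      have s2 := hasDerivAt_iff_tendsto_slope.mp h2
      have hmono : 𝓝[>] (0:ℝ) ≤ 𝓝[≠] (0:ℝ) :=
        nhdsWithin_mono 0 fun t ht => ne_of_gt ht
      have hsum := (s1.mono_left hmono).add (s2.mono_left hmono)
      have hval : φ (g s) + φ (-(g s)) = 0 := by rw [map_neg]; ring
      rw [hval] at hsum
      refine hsum.congr fun t => ?_
      simp only [slope, vsub_eq_sub, sub_zero, smul_eq_mul, zero_smul, add_zero, neg_zero,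
        hD]
      ring
  simpa using hDC

end Aux

theorem left_symmetric_L1_smooth
    {S X : Type*} [MeasurableSpace S] {μ : Measure S} [μ.IsComplete] [SigmaFinite μ]
    [NormedAddCommGroup X] [NormedSpace ℝ X] [CompleteSpace X]
    (hX : FrechetDiffNorm X)
    (f : Lp X 1 μ) (hf : f ≠ 0) (hls : LeftSymPt f) :
    SmoothPt f := by
  have hae : ∀ᵐ s ∂μ, f s ≠ 0 := ae_ne_zero_of_leftSym f hf hls
  have main : ∀ F G : (Lp X 1 μ) →L[ℝ] ℝ, ‖F‖ = 1 → F f = ‖f‖ → ‖G‖ = 1 → G f = ‖f‖ →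
      ∀ g : Lp X 1 μ, F g ≤ G g := by
    intro F G hF1 hFf hG1 hGf g
    have hkey := key_tendsto hX f g hae
    have hbnd : ∀ᶠ t in 𝓝[>] (0:ℝ),
        F g - G g ≤ (‖f + t • g‖ + ‖f + (-t) • g‖ - 2 * ‖f‖) * t⁻¹ := by
      filter_upwards [self_mem_nhdsWithin] with t (ht : (0:ℝ) < t)
      have e1 : F (f + t • g) ≤ ‖f + t • g‖ := by
        calc F (f + t • g) ≤ |F (f + t • g)| := le_abs_self _
          _ = ‖F (f + t • g)‖ := (Real.norm_eq_abs _).symm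
          _ ≤ ‖F‖ * ‖f + t • g‖ := F.le_opNorm _
          _ = ‖f + t • g‖ := by rw [hF1, one_mul]
      have e1' : F (f + t • g) = ‖f‖ + t * F g := by
        rw [map_add, F.map_smul, hFf, smul_eq_mul]
      have e2 : G (f + (-t) • g) ≤ ‖f + (-t) • g‖ := by
        calc G (f + (-t) • g) ≤ |G (f + (-t) • g)| := le_abs_self _
          _ = ‖G (f + (-t) • g)‖ := (Real.norm_eq_abs _).symm
          _ ≤ ‖G‖ * ‖f + (-t) • g‖ := G.le_opNorm _
          _ = ‖f + (-t) • g‖ := by rw [hG1, one_mul]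
      have e2' : G (f + (-t) • g) = ‖f‖ + (-t) * G g := by
        rw [map_add, G.map_smul, hGf, smul_eq_mul]
      rw [← div_eq_mul_inv, le_div_iff₀ ht]
      nlinarith [e1, e2]
    have hle := ge_of_tendsto hkey hbnd
    linarith
  obtain ⟨F, hF1, hFf⟩ := exists_dual_vector ℝ f (norm_ne_zero_iff.mpr hf)
  have hFf' : F f = ‖f‖ := by exact_mod_cast hFf
  refine ⟨F, ⟨hF1, hFf'⟩, fun G hG => ?_⟩
  ext g
  exact le_antisymm (main G F hG.1 hG.2 hF1 hFf' g) (main F G hF1 hFf' hG.1 hG.2 g)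
end
end

section
/- Let (S, μ) be a complete measure space and X a real Banach space whose norm is Fréchet differentiable at every nonzero point. If a nonzero f ∈ L¹(μ, X) is a right symmetric point with respect to Birkhoff-James orthogonality, then Z(f)^c = {s ∈ S : f(s) ≠ 0} is an atom of μ. -/
open MeasureTheory ENNReal

noncomputable section

theorem right_symmetric_L1_support_atom
    {S X : Type*} [MeasurableSpace S] {μ : Measure S} [μ.IsComplete]
    [NormedAddCommGroup X] [NormedSpace ℝ X] [CompleteSpace X]
    (hX : FrechetDiffNorm X)
    (f : Lp X 1 μ) (hf : f ≠ 0) (hrs : RightSymPt f) :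
    IsMeasAtom μ {s | (f : S → X) s ≠ 0} := by
  classical
  set F : S → X := (f : S → X) with hF
  have hsm : StronglyMeasurable F := Lp.stronglyMeasurable f
  have hint : Integrable F μ := L1.integrable_coeFn f
  set A : Set S := {s | F s ≠ 0} with hA
  have hAmeas : MeasurableSet A :=
    (hsm.measurableSet_eq_fun stronglyMeasurable_const).compl
  have hμA : μ A ≠ 0 := by
    intro h
    apply hf
    refine Lp.eq_zero_iff_ae_eq_zero.2 ?_
    have : ∀ᵐ s ∂μ, F s = 0 := by
      rw [MeasureTheory.ae_iff]
      exact h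
    filter_upwards [this] with s hs using hs
  -- positivity of set integrals of ‖F‖ on positive-measure subsets of A
  have hpos : ∀ E : Set S, MeasurableSet E → E ⊆ A → μ E ≠ 0 →
      0 < ∫ s in E, ‖F s‖ ∂μ := by
    intro E hEm hEA hE0
    rw [setIntegral_pos_iff_support_of_nonneg_ae
      (Filter.Eventually.of_forall fun s => norm_nonneg _) hint.norm.integrableOn]
    have hsub : E ⊆ Function.support fun s => ‖F s‖ := by
      intro s hs
      have : F s ≠ 0 := hEA hs
      simpa [Function.mem_support] using this
    calc (0 : ℝ≥0∞) < μ E := pos_iff_ne_zero.2 hE0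
      _ ≤ μ ((Function.support fun s => ‖F s‖) ∩ E) :=
        measure_mono fun s hs => ⟨hsub hs, hs⟩
  -- main contradiction lemma
  have main : ∀ E E' : Set S, MeasurableSet E → MeasurableSet E' → Disjoint E E' →
      E ∪ E' = A → 0 < ∫ s in E, ‖F s‖ ∂μ →
      (∫ s in E, ‖F s‖ ∂μ) ≤ ∫ s in E', ‖F s‖ ∂μ → False := by
    intro E E' hEm hE'm hdisj huni ha hab
    set a := ∫ s in E, ‖F s‖ ∂μ with haa
    set b := ∫ s in E', ‖F s‖ ∂μ with hbb
    have hintE : Integrable (E.indicator F) μ := hint.indicator hEm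
    set g : Lp X 1 μ := hintE.toL1 _ with hg
    have hiE : Integrable (E.indicator fun s => ‖F s‖) μ := hint.norm.indicator hEm
    have hiE' : Integrable (E'.indicator fun s => ‖F s‖) μ := hint.norm.indicator hE'm
    have hform : ∀ c d : ℝ,
        (∫ s, ‖c • E.indicator F s + d • E'.indicator F s‖ ∂μ) = |c| * a + |d| * b := by
      intro c d
      have hpt : (fun s => ‖c • E.indicator F s + d • E'.indicator F s‖)
          = fun s => |c| * E.indicator (fun s => ‖F s‖) s
              + |d| * E'.indicator (fun s => ‖F s‖) s := by
        funext s
        by_cases hsE : s ∈ E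
        · have hsE' : s ∉ E' := Set.disjoint_left.1 hdisj hsE
          simp [Set.indicator_of_mem hsE, Set.indicator_of_notMem hsE', norm_smul,
            Real.norm_eq_abs]
        · by_cases hsE' : s ∈ E'
          · simp [Set.indicator_of_notMem hsE, Set.indicator_of_mem hsE', norm_smul,
              Real.norm_eq_abs]
          · simp [Set.indicator_of_notMem hsE, Set.indicator_of_notMem hsE']
      rw [hpt, integral_add (hiE.const_mul _) (hiE'.const_mul _), integral_const_mul,
        integral_const_mul, integral_indicator hEm, integral_indicator hE'm]
    have hFdecomp : ∀ s, F s = E.indicator F s + E'.indicator F s := by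
      intro s
      by_cases hsE : s ∈ E
      · simp [Set.indicator_of_mem hsE,
          Set.indicator_of_notMem (Set.disjoint_left.1 hdisj hsE)]
      by_cases hsE' : s ∈ E'
      · simp [Set.indicator_of_notMem hsE, Set.indicator_of_mem hsE']
      · have hsA : s ∉ A := by
          rw [← huni]; simp [hsE, hsE']
        have hF0 : F s = 0 := by
          by_contra hc
          exact hsA hc
        simp [Set.indicator_of_notMem hsE, Set.indicator_of_notMem hsE', hF0]
    have hnf : ‖f‖ = a + b := by
      rw [L1.norm_eq_integral_norm]
      calc (∫ s, ‖F s‖ ∂μ)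
          = ∫ s, ‖(1:ℝ) • E.indicator F s + (1:ℝ) • E'.indicator F s‖ ∂μ := by
            congr 1; funext s; rw [one_smul, one_smul, ← hFdecomp s]
        _ = |(1:ℝ)| * a + |(1:ℝ)| * b := hform 1 1
        _ = a + b := by norm_num
    have hgf : ∀ t : ℝ, ‖g + t • f‖ = |1 + t| * a + |t| * b := by
      intro t
      rw [L1.norm_eq_integral_norm]
      have hae : (⇑(g + t • f) : S → X)
          =ᵐ[μ] fun s => (1 + t) • E.indicator F s + t • E'.indicator F s := by
        filter_upwards [Lp.coeFn_add g (t • f), Lp.coeFn_smul t f, hintE.coeFn_toL1]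
          with s h1 h2 h3
        rw [h1, Pi.add_apply, h2, Pi.smul_apply, h3]
        show E.indicator F s + t • F s = _
        rw [hFdecomp s, smul_add, add_smul, one_smul]
        abel
      rw [integral_congr_ae (by filter_upwards [hae] with s hs; rw [hs])]
      exact hform (1 + t) t
    have hng : ‖g‖ = a := by
      have h0 := hgf 0
      simpa using h0
    have hgBJf : BJOrth g f := by
      intro t
      rw [hng, hgf t]
      have h1 : (1:ℝ) ≤ |1 + t| + |t| := by
        have h := abs_add_le (1 + t) (-t)
        simpa using h
      nlinarith [abs_nonneg (1 + t), abs_nonneg t,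
        mul_nonneg (abs_nonneg t) (sub_nonneg.2 hab)]
    have hfBJg : BJOrth f g := hrs g hgBJf
    have hfinal := hfBJg (-1)
    have heq : f + (-1 : ℝ) • g = -(g + (-1 : ℝ) • f) := by
      module
    rw [hnf, heq, norm_neg, hgf (-1)] at hfinal
    simp at hfinal
    linarith
  refine ⟨hAmeas, pos_iff_ne_zero.2 hμA, ?_⟩
  intro B hBA hBmeas
  by_contra hcon
  push_neg at hcon
  obtain ⟨hB0, hBne⟩ := hcon
  set C := A \ B with hC
  have hCmeas : MeasurableSet C := hAmeas.diff hBmeas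
  have hC0 : μ C ≠ 0 := by
    intro h
    apply hBne
    have hle : μ A ≤ μ B := by
      calc μ A = μ (B ∪ C) := by rw [Set.union_diff_cancel hBA]
        _ ≤ μ B + μ C := measure_union_le _ _
        _ = μ B := by rw [h, add_zero]
    exact le_antisymm (measure_mono hBA) hle
  have hdisj : Disjoint B C := Set.disjoint_sdiff_right.mono_left le_rfl
  have huni : B ∪ C = A := Set.union_diff_cancel hBA
  have hBpos := hpos B hBmeas hBA hB0
  have hCpos := hpos C hCmeas (Set.diff_subset) hC0
  rcases le_total (∫ s in B, ‖F s‖ ∂μ) (∫ s in C, ‖F s‖ ∂μ) with hle | hle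
  · exact main B C hBmeas hCmeas hdisj huni hBpos hle
  · exact main C B hCmeas hBmeas hdisj.symm (by rw [Set.union_comm]; exact huni) hCpos hle
end
end

section
/- Let (S, μ) be a complete measure space and X a real Banach space whose norm is Fréchet differentiable at every nonzero point. Suppose f ∈ L¹(μ, X) is nonzero, Z(f)^c = {s : f(s) ≠ 0} is an atom of μ, and f(s) is a right symmetric point of X for every s ∈ S. Then f is a right symmetric point of L¹(μ, X). -/
open MeasureTheory

noncomputable section

open ENNReal in

private lemma exists_ae_const_on_atom {S X : Type*} [MeasurableSpace S] {μ : Measure S}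
    [NormedAddCommGroup X]
    {A : Set S} (hA : MeasurableSet A) (hpos : 0 < μ A) (hfin : μ A ≠ ⊤)
    (hatom : ∀ B ⊆ A, MeasurableSet B → μ B = 0 ∨ μ B = μ A)
    {h : S → X} (hh : StronglyMeasurable h) :
    ∃ x : X, (∃ s ∈ A, h s = x) ∧ ∀ᵐ s ∂μ, s ∈ A → h s = x := by
  letI : MeasurableSpace X := borel X
  haveI : BorelSpace X := ⟨rfl⟩
  have hmeas : Measurable h := hh.measurable
  obtain ⟨c, hc_count, hc_dense⟩ := hh.isSeparable_range
  have key : ∀ n : ℕ, ∃ p : X, μ (A ∩ h ⁻¹' Metric.closedBall p (1 / (n + 1))) = μ A := by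
    intro n
    have hcover : A ⊆ ⋃ p ∈ c, A ∩ h ⁻¹' Metric.closedBall p (1 / (n + 1)) := by
      intro s hs
      have hmem : h s ∈ closure c := hc_dense ⟨s, rfl⟩
      obtain ⟨p, hp, hd⟩ := Metric.mem_closure_iff.1 hmem (1 / (n + 1)) (by positivity)
      exact Set.mem_biUnion hp ⟨hs, by simpa [Metric.mem_closedBall] using hd.le⟩
    by_contra hcon
    push_neg at hcon
    have hz : ∀ p ∈ c, μ (A ∩ h ⁻¹' Metric.closedBall p (1 / (n + 1))) = 0 := by
      intro p _
      rcases hatom _ Set.inter_subset_left (hA.inter (hmeas measurableSet_closedBall))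
        with h0 | h1
      · exact h0
      · exact absurd h1 (hcon p)
    have : μ A = 0 :=
      le_antisymm (le_trans (measure_mono hcover)
        (le_of_eq ((measure_biUnion_null_iff hc_count).2 hz))) zero_le
    exact absurd this hpos.ne'
  choose p hp using key
  set B : ℕ → Set S := fun n => A ∩ h ⁻¹' Metric.closedBall (p n) (1 / (n + 1)) with hBdef
  have hBm : ∀ n, MeasurableSet (B n) :=
    fun n => hA.inter (hmeas measurableSet_closedBall)
  have hnull : ∀ n, μ (A \ B n) = 0 := by
    intro n
    have h1 : μ (A ∩ B n) + μ (A \ B n) = μ A := measure_inter_add_diff A (hBm n)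
    have h2 : A ∩ B n = B n := Set.inter_eq_self_of_subset_right Set.inter_subset_left
    rw [h2, hp n] at h1
    exact (ENNReal.add_right_inj hfin).1 (by simpa using h1)
  set D := ⋂ n, B n with hDdef
  have hDA : D ⊆ A := fun s hs => (Set.mem_iInter.1 hs 0).1
  have hADnull : μ (A \ D) = 0 := by
    refine measure_mono_null (fun s hs => ?_) (measure_iUnion_null hnull)
    rcases hs with ⟨hsA, hsD⟩
    rw [Set.mem_iInter] at hsD
    push_neg at hsD
    obtain ⟨n, hn⟩ := hsD
    exact Set.mem_iUnion.2 ⟨n, hsA, hn⟩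
  have hDpos : 0 < μ D := by
    have hle : μ A ≤ μ D := by
      have hsub : A ⊆ D ∪ (A \ D) :=
        fun s hs => (em (s ∈ D)).elim Or.inl fun h => Or.inr ⟨hs, h⟩
      calc μ A ≤ μ (D ∪ (A \ D)) := measure_mono hsub
        _ ≤ μ D + μ (A \ D) := measure_union_le _ _
        _ = μ D := by rw [hADnull, add_zero]
    exact lt_of_lt_of_le hpos hle
  obtain ⟨s₀, hs₀⟩ := nonempty_of_measure_ne_zero hDpos.ne'
  have hconst : ∀ s ∈ D, h s = h s₀ := by
    intro s hs
    have hdn : ∀ n : ℕ, dist (h s) (h s₀) ≤ 2 * (1 / (n + 1)) := by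
      intro n
      have h1 : dist (h s) (p n) ≤ 1 / (n + 1 : ℝ) := by
        have := (Set.mem_iInter.1 hs n).2
        simpa [Metric.mem_closedBall] using this
      have h2 : dist (p n) (h s₀) ≤ 1 / (n + 1 : ℝ) := by
        have := (Set.mem_iInter.1 hs₀ n).2
        rw [dist_comm]
        simpa [Metric.mem_closedBall] using this
      calc dist (h s) (h s₀) ≤ dist (h s) (p n) + dist (p n) (h s₀) := dist_triangle _ _ _
        _ ≤ 1 / (n + 1) + 1 / (n + 1) := add_le_add h1 h2
        _ = 2 * (1 / (n + 1)) := by ring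
    have hd0 : dist (h s) (h s₀) ≤ 0 := by
      by_contra hpos'
      push_neg at hpos'
      obtain ⟨n, hn⟩ := exists_nat_one_div_lt (by positivity : (0 : ℝ) < dist (h s) (h s₀) / 2)
      have := hdn n
      nlinarith
    exact dist_le_zero.1 hd0
  refine ⟨h s₀, ⟨s₀, hDA hs₀, rfl⟩, ?_⟩
  rw [ae_iff]
  refine measure_mono_null (fun s hs => ?_) hADnull
  simp only [Set.mem_setOf_eq, _root_.not_imp] at hs
  exact ⟨hs.1, fun hD => hs.2 (hconst s hD)⟩

open ENNReal in

private lemma atom_support_finite {S X : Type*} [MeasurableSpace S] {μ : Measure S}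
    [NormedAddCommGroup X]
    {h : S → X} (hh : StronglyMeasurable h)
    (hA : MeasurableSet {s | h s ≠ 0}) (hpos : 0 < μ {s | h s ≠ 0})
    (hatom : ∀ B ⊆ {s | h s ≠ 0}, MeasurableSet B → μ B = 0 ∨ μ B = μ {s | h s ≠ 0})
    (hint : ∫⁻ s, (‖h s‖₊ : ℝ≥0∞) ∂μ ≠ ⊤) : μ {s | h s ≠ 0} ≠ ⊤ := by
  set A := {s | h s ≠ 0} with hAdef
  have hm : Measurable fun s => (‖h s‖₊ : ℝ≥0∞) := hh.nnnorm.measurable.coe_nnreal_ennreal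
  set C : ℕ → Set S := fun n => A ∩ {s | ((n : ℝ≥0∞) + 1)⁻¹ ≤ (‖h s‖₊ : ℝ≥0∞)} with hCdef
  have hCm : ∀ n, MeasurableSet (C n) :=
    fun n => hA.inter (hm measurableSet_Ici)
  have hCfin : ∀ n, μ (C n) ≠ ⊤ := by
    intro n
    have hmark : ((n : ℝ≥0∞) + 1)⁻¹ * μ {s | ((n : ℝ≥0∞) + 1)⁻¹ ≤ (‖h s‖₊ : ℝ≥0∞)} ≤
        ∫⁻ s, (‖h s‖₊ : ℝ≥0∞) ∂μ := mul_meas_ge_le_lintegral hm _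
    have hne : ((n : ℝ≥0∞) + 1)⁻¹ ≠ 0 := by
      simp [ENNReal.inv_ne_zero]
    intro htop
    have hle : μ (C n) ≤ μ {s | ((n : ℝ≥0∞) + 1)⁻¹ ≤ (‖h s‖₊ : ℝ≥0∞)} :=
      measure_mono Set.inter_subset_right
    have : μ {s | ((n : ℝ≥0∞) + 1)⁻¹ ≤ (‖h s‖₊ : ℝ≥0∞)} = ⊤ :=
      top_le_iff.1 (htop ▸ hle)
    rw [this, ENNReal.mul_top hne] at hmark
    exact hint (top_le_iff.1 hmark)
  have hcover : A ⊆ ⋃ n, C n := by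
    intro s hs
    have h0 : (‖h s‖₊ : ℝ≥0∞) ≠ 0 := by
      exact ENNReal.coe_ne_zero.2 (nnnorm_ne_zero_iff.2 hs)
    obtain ⟨n, hn⟩ := ENNReal.exists_inv_nat_lt h0
    refine Set.mem_iUnion.2 ⟨n, hs, ?_⟩
    refine le_trans ?_ hn.le
    exact ENNReal.inv_le_inv.2 (by simp)
  by_contra htop
  have hz : ∀ n, μ (C n) = 0 := by
    intro n
    rcases hatom _ Set.inter_subset_left (hCm n) with h0 | h1
    · exact h0
    · exact absurd (h1.trans (htop)) (hCfin n)
  have : μ A = 0 :=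
    le_antisymm (le_trans (measure_mono hcover) (le_of_eq (measure_iUnion_null hz))) zero_le
  exact absurd this hpos.ne'

open ENNReal in
theorem atom_pointwise_right_symmetric_L1
    {S X : Type*} [MeasurableSpace S] {μ : Measure S} [μ.IsComplete]
    [NormedAddCommGroup X] [NormedSpace ℝ X] [CompleteSpace X]
    (hX : FrechetDiffNorm X)
    (f : Lp X 1 μ) (hf : f ≠ 0)
    (hatom : IsMeasAtom μ {s | (f : S → X) s ≠ 0})
    (hpt : ∀ s : S, RightSymPt ((f : S → X) s)) :
    RightSymPt f := by
  clear hX hf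
  obtain ⟨hA, hpos, hat⟩ := hatom
  set h : S → X := (f : S → X) with hhdef
  set A : Set S := {s | h s ≠ 0} with hAdef
  have hhm : StronglyMeasurable h := (f : S →ₘ[μ] X).stronglyMeasurable
  have hoff : ∀ s, s ∉ A → h s = 0 := fun s hs => not_not.1 hs
  have norm_eq : ∀ u : Lp X 1 μ, ‖u‖ = (∫⁻ s, (‖(u : S → X) s‖₊ : ℝ≥0∞) ∂μ).toReal := by
    intro u
    simp only [Lp.norm_def, eLpNorm_one_eq_lintegral_enorm, enorm_eq_nnnorm]
  have int_ne_top : ∀ u : Lp X 1 μ, ∫⁻ s, (‖(u : S → X) s‖₊ : ℝ≥0∞) ∂μ ≠ ⊤ := by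
    intro u
    simp only [← enorm_eq_nnnorm, ← eLpNorm_one_eq_lintegral_enorm]
    exact Lp.eLpNorm_ne_top u
  have hfin : μ A ≠ ⊤ := atom_support_finite hhm hA hpos hat (int_ne_top f)
  obtain ⟨x, ⟨s₀, hs₀A, hs₀x⟩, hxa⟩ := exists_ae_const_on_atom hA hpos hfin hat hhm
  have hxsym : RightSymPt x := hs₀x ▸ hpt s₀
  have decomp : ∀ (u : Lp X 1 μ) (z : X), (∀ᵐ s ∂μ, s ∈ A → (u : S → X) s = z) →
      ∫⁻ s, (‖(u : S → X) s‖₊ : ℝ≥0∞) ∂μ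
        = (‖z‖₊ : ℝ≥0∞) * μ A + ∫⁻ s in Aᶜ, (‖(u : S → X) s‖₊ : ℝ≥0∞) ∂μ := by
    intro u z hz
    rw [← lintegral_add_compl (fun s => (‖(u : S → X) s‖₊ : ℝ≥0∞)) hA]
    congr 1
    rw [setLIntegral_congr_fun_ae hA (hz.mono fun s hs hsA => by rw [hs hsA]),
      setLIntegral_const]
  intro g hg
  set k : S → X := (g : S → X) with hkdef
  have hkm : StronglyMeasurable k := (g : S →ₘ[μ] X).stronglyMeasurable
  obtain ⟨y, -, hya⟩ := exists_ae_const_on_atom hA hpos hfin hat hkm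
  set C := ∫⁻ s in Aᶜ, (‖k s‖₊ : ℝ≥0∞) ∂μ with hCdef
  have hCfin : C ≠ ⊤ := ne_top_of_le_ne_top (int_ne_top g) (setLIntegral_le_lintegral _ _)
  have hgdec : ∫⁻ s, (‖k s‖₊ : ℝ≥0∞) ∂μ = (‖y‖₊ : ℝ≥0∞) * μ A + C := decomp g y hya
  have hyx : BJOrth y x := by
    intro t
    have h1 := hg t
    rw [norm_eq, norm_eq] at h1
    have hcoe : ∀ᵐ s ∂μ, ((g + t • f : Lp X 1 μ) : S → X) s = k s + t • h s := by
      filter_upwards [Lp.coeFn_add g (t • f), Lp.coeFn_smul t f] with s h1 h2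
      rw [h1, Pi.add_apply, h2, Pi.smul_apply]
    have hsum_dec : ∫⁻ s, (‖((g + t • f : Lp X 1 μ) : S → X) s‖₊ : ℝ≥0∞) ∂μ
        = (‖y + t • x‖₊ : ℝ≥0∞) * μ A + C := by
      rw [decomp (g + t • f) (y + t • x)
        (by filter_upwards [hcoe, hya, hxa] with s hc hy hx hsA; rw [hc, hy hsA, hx hsA])]
      congr 1
      refine setLIntegral_congr_fun_ae hA.compl ?_
      filter_upwards [hcoe] with s hs hsc
      rw [hs, hoff s hsc, smul_zero, add_zero]
    have h2 := (ENNReal.toReal_le_toReal (int_ne_top g) (int_ne_top (g + t • f))).1 h1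
    rw [hgdec, hsum_dec] at h2
    have h3 := (ENNReal.add_le_add_iff_right hCfin).1 h2
    have h4 := (ENNReal.mul_le_mul_iff_left hpos.ne' hfin).1 h3
    have h5 : ‖y‖₊ ≤ ‖y + t • x‖₊ := ENNReal.coe_le_coe.1 h4
    rw [← coe_nnnorm y, ← coe_nnnorm (y + t • x)]
    exact_mod_cast h5
  have hxy : BJOrth x y := hxsym y hyx
  intro t
  rw [norm_eq, norm_eq]
  have hfdec : ∫⁻ s, (‖h s‖₊ : ℝ≥0∞) ∂μ = (‖x‖₊ : ℝ≥0∞) * μ A := by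
    rw [decomp f x hxa]
    have hz : ∫⁻ s in Aᶜ, (‖h s‖₊ : ℝ≥0∞) ∂μ = ∫⁻ _ in Aᶜ, (0 : ℝ≥0∞) ∂μ :=
      setLIntegral_congr_fun_ae hA.compl (ae_of_all _ fun s hs => by simp [hoff s hs])
    rw [hz, lintegral_zero, add_zero]
  have hcoe2 : ∀ᵐ s ∂μ, ((f + t • g : Lp X 1 μ) : S → X) s = h s + t • k s := by
    filter_upwards [Lp.coeFn_add f (t • g), Lp.coeFn_smul t g] with s h1 h2
    rw [h1, Pi.add_apply, h2, Pi.smul_apply]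
  have hlow : (‖x‖₊ : ℝ≥0∞) * μ A
      ≤ ∫⁻ s, (‖((f + t • g : Lp X 1 μ) : S → X) s‖₊ : ℝ≥0∞) ∂μ := by
    have hnn : (‖x‖₊ : ℝ≥0∞) ≤ (‖x + t • y‖₊ : ℝ≥0∞) := by
      have := hxy t
      exact_mod_cast this
    calc (‖x‖₊ : ℝ≥0∞) * μ A ≤ (‖x + t • y‖₊ : ℝ≥0∞) * μ A := mul_le_mul_left hnn _
      _ = ∫⁻ s in A, (‖((f + t • g : Lp X 1 μ) : S → X) s‖₊ : ℝ≥0∞) ∂μ := by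
          rw [setLIntegral_congr_fun_ae hA
            (by filter_upwards [hcoe2, hxa, hya] with s hc hx hy hsA
                rw [hc, hx hsA, hy hsA]),
            setLIntegral_const]
      _ ≤ _ := setLIntegral_le_lintegral _ _
  rw [hfdec]
  exact ENNReal.toReal_mono (int_ne_top _) hlow
end
end

section
/- Let X be a real Banach space whose norm is Fréchet differentiable at every nonzero point. A sequence x ∈ ℓ¹(X) is a nonzero right symmetric point with respect to Birkhoff-James orthogonality if and only if x = (0, ..., 0, x₀, 0, ...) for some right symmetric point x₀ ≠ 0 of X, i.e. x is supported on a single coordinate at which its value is a right symmetric point of X. -/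
open MeasureTheory

noncomputable section

section Aux

set_option linter.unusedSectionVars false

variable {X : Type*} [NormedAddCommGroup X] [NormedSpace ℝ X] [CompleteSpace X]

private lemma l1_summable (f : lp (fun _ : ℕ => X) 1) : Summable fun m => ‖f m‖ := by
  have h := (lp.memℓp f).summable (p := 1) (by norm_num)
  simpa using h

private lemma l1_norm_eq (f : lp (fun _ : ℕ => X) 1) : ‖f‖ = ∑' m, ‖f m‖ := by
  have h := lp.norm_eq_tsum_rpow (p := 1) (by norm_num) f
  simpa using h

private lemma l1_norm_split (f : lp (fun _ : ℕ => X) 1) (n : ℕ) :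
    ‖f‖ = ‖f n‖ + ∑' m, if m = n then 0 else ‖f m‖ := by
  rw [l1_norm_eq]
  exact Summable.tsum_eq_add_tsum_ite (l1_summable f) n

private lemma l1_apply_add_smul (f g : lp (fun _ : ℕ => X) 1) (t : ℝ) (m : ℕ) :
    (f + t • g) m = f m + t • g m := by
  rw [lp.coeFn_add, lp.coeFn_smul]; rfl

private lemma l1_norm_eq_coord (f : lp (fun _ : ℕ => X) 1) (n : ℕ)
    (hf : ∀ m ≠ n, f m = 0) : ‖f‖ = ‖f n‖ := by
  rw [l1_norm_split f n]
  have h : ∀ m : ℕ, (if m = n then 0 else ‖f m‖) = 0 := by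
    intro m
    split_ifs with hm
    · rfl
    · simp [hf m hm]
  simp [tsum_congr h]

/-- If `f` and `g` are both supported at coordinate `n`, BJ-orthogonality in `ℓ¹(X)`
reduces to BJ-orthogonality of the `n`-th coordinates. -/
private lemma l1_bj_coord (f g : lp (fun _ : ℕ => X) 1) (n : ℕ)
    (hf : ∀ m ≠ n, f m = 0) (hg : ∀ m ≠ n, g m = 0) :
    BJOrth f g ↔ BJOrth (f n) (g n) := by
  have hsum : ∀ t : ℝ, ‖f + t • g‖ = ‖f n + t • g n‖ := by
    intro t
    have h0 : ∀ m ≠ n, (f + t • g) m = 0 := by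
      intro m hm
      rw [l1_apply_add_smul, hf m hm, hg m hm]
      simp
    rw [l1_norm_eq_coord _ n h0, l1_apply_add_smul]
  have hfn := l1_norm_eq_coord f n hf
  constructor <;> intro H t <;> have Ht := H t
  · rwa [hfn, hsum] at Ht
  · rwa [hfn, hsum]

/-- If `x b ≠ 0` and `‖x b‖` is at most the sum of the norms of the remaining
coordinates, then `x` is not right symmetric: the witness is `y = single b (x b)`. -/
private lemma l1_not_rightSym (x : lp (fun _ : ℕ => X) 1) (b : ℕ) (hb : x b ≠ 0)
    (hBD : ‖x b‖ ≤ ∑' m, if m = b then 0 else ‖x m‖) : ¬ RightSymPt x := by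
  intro hRS
  set y : lp (fun _ : ℕ => X) 1 := lp.single 1 b (x b) with hy
  have hyb : y b = x b := by rw [hy]; exact lp.single_apply_self (E := fun _ : ℕ => X) 1 b (x b)
  have hym : ∀ m ≠ b, y m = 0 := fun m hm => by rw [hy]; exact lp.single_apply_ne (E := fun _ : ℕ => X) 1 b (x b) hm
  set B := ‖x b‖ with hB
  set D := ∑' m, if m = b then 0 else ‖x m‖ with hD
  have hB0 : 0 < B := norm_pos_iff.2 hb
  have hD0 : 0 ≤ D := tsum_nonneg fun m => by dsimp only; split_ifs <;> positivity
  -- y ⊥_BJ x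
  have hyx : BJOrth y x := by
    intro t
    have hnorm : ‖y + t • x‖ = |1 + t| * B + |t| * D := by
      have hcoord : ∀ m : ℕ,
          ‖(y + t • x) m‖ = if m = b then |1 + t| * B else |t| * ‖x m‖ := by
        intro m
        rw [l1_apply_add_smul]
        by_cases hm : m = b
        · subst hm
          rw [if_pos rfl, hyb]
          have : x m + t • x m = (1 + t) • x m := by
            rw [add_smul, one_smul]
          rw [this, norm_smul, Real.norm_eq_abs]
        · rw [if_neg hm, hym m hm, zero_add, norm_smul, Real.norm_eq_abs]
      rw [l1_norm_split (y + t • x) b, hcoord b, if_pos rfl]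
      congr 1
      have h1 : ∀ m : ℕ, (if m = b then 0 else ‖(y + t • x) m‖)
          = |t| * (if m = b then 0 else ‖x m‖) := by
        intro m
        by_cases hm : m = b
        · simp [hm]
        · rw [if_neg hm, if_neg hm, hcoord m, if_neg hm]
      rw [tsum_congr h1, tsum_mul_left]
    have hny : ‖y‖ = B := by rw [l1_norm_eq_coord y b hym, hyb]
    rw [hnorm, hny]
    have habs : (1 : ℝ) ≤ |1 + t| + |t| := by
      have h := abs_sub (1 + t) t
      simpa using h
    nlinarith [mul_le_mul_of_nonneg_left hBD (abs_nonneg t), abs_nonneg (1 + t),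
      abs_nonneg t]
  -- but ¬ (x ⊥_BJ y)
  have hxy := hRS y hyx
  have hcontra := hxy (-1)
  have hnorm2 : ‖x + (-1 : ℝ) • y‖ = D := by
    rw [l1_norm_split (x + (-1 : ℝ) • y) b]
    have hb0 : (x + (-1 : ℝ) • y) b = 0 := by
      rw [l1_apply_add_smul, hyb]
      simp
    have h1 : ∀ m : ℕ, (if m = b then 0 else ‖(x + (-1 : ℝ) • y) m‖)
        = (if m = b then 0 else ‖x m‖) := by
      intro m
      by_cases hm : m = b
      · simp [hm]
      · rw [if_neg hm, if_neg hm, l1_apply_add_smul, hym m hm]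
        simp
    rw [hb0, tsum_congr h1]
    simp [hD]
  rw [hnorm2, l1_norm_split x b, ← hB, ← hD] at hcontra
  linarith

private lemma l1_not_rightSym_pair (x : lp (fun _ : ℕ => X) 1) (a b : ℕ) (hab : a ≠ b)
    (hb : x b ≠ 0) (hba : ‖x b‖ ≤ ‖x a‖) : ¬ RightSymPt x := by
  apply l1_not_rightSym x b hb
  refine le_trans hba ?_
  have hsum : Summable fun m => if m = b then 0 else ‖x m‖ := by
    refine Summable.of_nonneg_of_le (fun m => ?_) (fun m => ?_) (l1_summable x)
    · dsimp only; split_ifs <;> positivity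
    · dsimp only; split_ifs <;> simp [norm_nonneg]
  have h := Summable.le_tsum hsum a (fun j _ => by dsimp only; split_ifs <;> positivity)
  rwa [if_neg hab] at h

end Aux

theorem right_symmetric_l1_characterization
    {X : Type*} [NormedAddCommGroup X] [NormedSpace ℝ X] [CompleteSpace X]
    (hX : FrechetDiffNorm X)
    (x : lp (fun _ : ℕ => X) 1) :
    (x ≠ 0 ∧ RightSymPt x) ↔
      ∃ n : ℕ, x n ≠ 0 ∧ RightSymPt (x n) ∧ ∀ m : ℕ, m ≠ n → x m = 0 := by
  constructor
  · rintro ⟨hne, hRS⟩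
    -- there is a nonzero coordinate
    have hex : ∃ n : ℕ, x n ≠ 0 := by
      by_contra h
      push_neg at h
      exact hne (lp.ext (funext h))
    obtain ⟨n, hn⟩ := hex
    -- the support is exactly {n}
    have hsupp : ∀ m : ℕ, m ≠ n → x m = 0 := by
      intro m hmn
      by_contra hm
      rcases le_total ‖x m‖ ‖x n‖ with h | h
      · exact l1_not_rightSym_pair x n m (Ne.symm hmn) hm h hRS
      · exact l1_not_rightSym_pair x m n hmn hn h hRS
    refine ⟨n, hn, ?_, hsupp⟩
    -- `x n` is right symmetric in `X`
    intro y₀ hy₀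
    set Y : lp (fun _ : ℕ => X) 1 := lp.single 1 n y₀ with hY
    have hYn : Y n = y₀ := by rw [hY]; exact lp.single_apply_self (E := fun _ : ℕ => X) 1 n y₀
    have hYm : ∀ m ≠ n, Y m = 0 := fun m hm => by rw [hY]; exact lp.single_apply_ne (E := fun _ : ℕ => X) 1 n y₀ hm
    have h1 : BJOrth Y x := by
      rw [l1_bj_coord Y x n hYm hsupp, hYn]
      exact hy₀
    have h2 := hRS Y h1
    rw [l1_bj_coord x Y n hsupp hYm, hYn] at h2
    exact h2
  · rintro ⟨n, hn, hrs, hsupp⟩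
    constructor
    · intro h0
      apply hn
      rw [h0]
      simp [lp.coeFn_zero]
    · intro y hy
      -- `y n ⊥ x n` in `X`
      have hyn : BJOrth (y n) (x n) := by
        intro t
        have ht := hy t
        rw [l1_norm_split y n, l1_norm_split (y + t • x) n] at ht
        have h1 : ∀ m : ℕ, (if m = n then 0 else ‖(y + t • x) m‖)
            = (if m = n then 0 else ‖y m‖) := by
          intro m
          by_cases hm : m = n
          · simp [hm]
          · rw [if_neg hm, if_neg hm, l1_apply_add_smul, hsupp m hm]
            simp
        rw [tsum_congr h1, l1_apply_add_smul] at ht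
        linarith
      have hxy := hrs (y n) hyn
      intro t
      have h1 : ‖x‖ = ‖x n‖ := l1_norm_eq_coord x n hsupp
      have h2 : ‖x n + t • y n‖ ≤ ‖x + t • y‖ := by
        rw [l1_norm_split (x + t • y) n, l1_apply_add_smul]
        have h3 : 0 ≤ ∑' m, if m = n then 0 else ‖(x + t • y) m‖ :=
          tsum_nonneg fun m => by dsimp only; split_ifs <;> positivity
        linarith
      calc ‖x‖ = ‖x n‖ := h1
        _ ≤ ‖x n + t • y n‖ := hxy t
        _ ≤ ‖x + t • y‖ := h2
end
end

section
/- Let (S, μ) be a complete measure space, X a Banach space whose norm is Fréchet differentiable at every nonzero point, and 1 < p < ∞ with p ≠ 2. If f ∈ L^p(μ, X) is a nonzero right symmetric point with respect to Birkhoff-James orthogonality, then Z(f)^c = {s : f(s) ≠ 0} is either an atom of μ or a disjoint union of exactly two atoms of μ. -/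
open MeasureTheory ENNReal

noncomputable section

lemma myConvexOn_abs_rpow {pr : ℝ} (hpr : 1 ≤ pr) :
    ConvexOn ℝ Set.univ (fun x : ℝ => |x| ^ pr) := by
  have himg : (fun x : ℝ => |x|) '' Set.univ = Set.Ici 0 := by
    ext y; constructor
    · rintro ⟨x, -, rfl⟩; exact abs_nonneg x
    · exact fun hy => ⟨y, trivial, abs_of_nonneg hy⟩
  have hg : ConvexOn ℝ ((fun x : ℝ => |x|) '' Set.univ) (fun x : ℝ => x ^ pr) := by
    rw [himg]; exact convexOn_rpow hpr
  have hmono : MonotoneOn (fun x : ℝ => x ^ pr) ((fun x : ℝ => |x|) '' Set.univ) := by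
    rw [himg]
    intro a ha b hb hab
    exact Real.rpow_le_rpow ha hab (by linarith)
  have habs : ConvexOn ℝ Set.univ (fun x : ℝ => |x|) := by
    exact (convexOn_univ_norm (E := ℝ))
  exact hg.comp habs hmono

lemma abs_rpow_tangent {pr : ℝ} (hpr : 1 < pr) (a t : ℝ) :
    |a| ^ pr + (pr * |a| ^ (pr - 2) * a) * t ≤ |a + t| ^ pr := by
  set D := pr * |a| ^ (pr - 2) * a with hD
  have hconv := myConvexOn_abs_rpow hpr.le
  have hderiv := hasDerivAt_abs_rpow a hpr
  rcases lt_trichotomy t 0 with ht | rfl | ht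
  · have hslope := hconv.slope_le_of_hasDerivAt (x := a + t) (y := a)
      trivial trivial (by linarith) hderiv
    rw [slope_def_field] at hslope
    have hpos : (0:ℝ) < a - (a + t) := by linarith
    have h2 : (|a| ^ pr - |a + t| ^ pr) ≤ D * (a - (a + t)) := by
      calc |a| ^ pr - |a + t| ^ pr
          = (|a| ^ pr - |a + t| ^ pr) / (a - (a + t)) * (a - (a + t)) := by
            rw [div_mul_cancel₀ _ hpos.ne']
        _ ≤ D * (a - (a + t)) := mul_le_mul_of_nonneg_right hslope hpos.le
    nlinarith [h2]
  · simp
  · have hslope := hconv.le_slope_of_hasDerivAt (x := a) (y := a + t)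
      trivial trivial (by linarith) hderiv
    rw [slope_def_field] at hslope
    have hpos : (0:ℝ) < a + t - a := by linarith
    have h2 : D * (a + t - a) ≤ |a + t| ^ pr - |a| ^ pr := by
      calc D * (a + t - a)
          ≤ (|a + t| ^ pr - |a| ^ pr) / (a + t - a) * (a + t - a) :=
            mul_le_mul_of_nonneg_right hslope hpos.le
        _ = |a + t| ^ pr - |a| ^ pr := by
            rw [div_mul_cancel₀ _ hpos.ne']
    nlinarith [h2]

lemma hasDerivAt_one_add_mul_rpow {pr : ℝ} (hpr : 1 < pr) (a : ℝ) :
    HasDerivAt (fun t : ℝ => |1 + t * a| ^ pr) (pr * a) 0 := by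
  have h0 : HasDerivAt (fun t : ℝ => 1 + t * a) a 0 := by
    simpa using ((hasDerivAt_id (0:ℝ)).mul_const a).const_add 1
  have h1 : HasDerivAt (fun t : ℝ => (1 + t * a) ^ pr) (pr * a) 0 := by
    have h := h0.rpow_const (p := pr) (by norm_num)
    convert h using 1
    norm_num
    ring
  have heq : (fun t : ℝ => |1 + t * a| ^ pr) =ᶠ[nhds (0:ℝ)] fun t => (1 + t * a) ^ pr := by
    have hcont : Continuous fun t : ℝ => 1 + t * a := by continuity
    have hev : ∀ᶠ t in nhds (0:ℝ), 0 < 1 + t * a := by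
      have : Filter.Tendsto (fun t : ℝ => 1 + t * a) (nhds 0) (nhds 1) := by
        simpa using hcont.tendsto 0
      exact this.eventually (eventually_gt_nhds one_pos)
    filter_upwards [hev] with t ht
    rw [abs_of_pos ht]
  exact h1.congr_of_eventuallyEq heq

lemma rpow_one_div_ne_self {r q : ℝ} (hr0 : 0 < r) (hr1 : r ≠ 1) (hq : 0 < q) (hq1 : q ≠ 1) :
    r ^ (1 / q) ≠ r := by
  intro h
  have hlog := congrArg Real.log h
  rw [Real.log_rpow hr0] at hlog
  have : Real.log r * (1 / q - 1) = 0 := by linarith [hlog]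
  rcases mul_eq_zero.1 this with h1 | h2
  · rcases Real.log_eq_zero.1 h1 with h | h | h <;> [exact absurd h hr0.ne'; exact hr1 h; linarith]
  · have : 1 / q = 1 := by linarith
    rw [div_eq_one_iff_eq (by positivity)] at this
    exact hq1 this.symm

lemma pos_pow_aux {x q : ℝ} (hx : 0 < x) : |x| ^ (q - 1) * x = x ^ q := by
  rw [abs_of_pos hx, ← Real.rpow_add_one hx.ne']
  ring_nf

lemma exists_coeffs {q M1 M2 M3 : ℝ} (hq : 0 < q) (hq1 : q ≠ 1)
    (h1 : 0 < M1) (h2 : 0 < M2) (h3 : 0 < M3) :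
    ∃ a1 a2 a3 : ℝ,
      (|a1| ^ (q - 1) * a1) * M1 + (|a2| ^ (q - 1) * a2) * M2 + (|a3| ^ (q - 1) * a3) * M3 = 0 ∧
      a1 * M1 + a2 * M2 + a3 * M3 ≠ 0 := by
  have hneg1 : |(-1 : ℝ)| ^ (q - 1) * (-1 : ℝ) = -1 := by
    rw [abs_neg, abs_one, Real.one_rpow]; ring
  by_cases hr : (M2 + M3) / M1 = 1
  · -- degenerate case : M1 = M2 + M3 ; use (s^(1/q), -1, 0) with s = M2/M1
    have hM : M2 + M3 = M1 := by
      field_simp at hr; linarith [hr]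
    set s := M2 / M1 with hs
    have hs0 : 0 < s := by positivity
    have hs1 : s ≠ 1 := by
      intro h
      rw [hs, div_eq_one_iff_eq h1.ne'] at h
      linarith
    refine ⟨s ^ (1 / q), -1, 0, ?_, ?_⟩
    · have hx : 0 < s ^ (1 / q) := Real.rpow_pos_of_pos hs0 _
      rw [pos_pow_aux hx, ← Real.rpow_mul hs0.le, one_div_mul_cancel hq.ne', Real.rpow_one,
        hneg1, hs]
      field_simp
      simp
    · intro h
      have hx1 : s ^ (1 / q) * M1 = M2 := by linarith
      have : s ^ (1 / q) = s := by
        rw [hs, eq_div_iff h1.ne']; exact hx1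
      exact rpow_one_div_ne_self hs0 hs1 hq hq1 this
  · set r := (M2 + M3) / M1 with hrdef
    have hr0 : 0 < r := by positivity
    refine ⟨r ^ (1 / q), -1, -1, ?_, ?_⟩
    · have hx : 0 < r ^ (1 / q) := Real.rpow_pos_of_pos hr0 _
      rw [pos_pow_aux hx, ← Real.rpow_mul hr0.le, one_div_mul_cancel hq.ne', Real.rpow_one,
        hneg1, hrdef]
      field_simp
      ring
    · intro h
      have hx1 : r ^ (1 / q) * M1 = M2 + M3 := by linarith
      have : r ^ (1 / q) = r := by
        rw [hrdef, eq_div_iff h1.ne']; exact hx1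
      exact rpow_one_div_ne_self hr0 hr hq hq1 this

lemma split_of_not_atom {S : Type*} [MeasurableSpace S] {μ : Measure S} {A : Set S}
    (hA : MeasurableSet A) (h0 : 0 < μ A) (hna : ¬ IsMeasAtom μ A) :
    ∃ B, B ⊆ A ∧ MeasurableSet B ∧ 0 < μ B ∧ 0 < μ (A \ B) := by
  have h : ¬ (∀ B ⊆ A, MeasurableSet B → μ B = 0 ∨ μ B = μ A) := fun h => hna ⟨hA, h0, h⟩
  push_neg at h
  obtain ⟨B, hBA, hBm, hB0, hBne⟩ := h
  refine ⟨B, hBA, hBm, pos_iff_ne_zero.mpr hB0, pos_iff_ne_zero.mpr fun hd => ?_⟩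
  apply hBne
  refine le_antisymm (measure_mono hBA) ?_
  calc μ A ≤ μ (B ∪ A \ B) := measure_mono (by rw [Set.union_diff_cancel hBA])
    _ ≤ μ B + μ (A \ B) := measure_union_le _ _
    _ = μ B := by rw [hd, add_zero]

lemma three_pieces {S : Type*} [MeasurableSpace S] {μ : Measure S} {C : Set S}
    (hC : MeasurableSet C) (h0 : 0 < μ C) (h : ¬ IsMeasAtom μ C)
    (h2 : ¬ ∃ A B, Disjoint A B ∧ IsMeasAtom μ A ∧ IsMeasAtom μ B ∧ C = A ∪ B) :
    ∃ C1 C2 C3 : Set S, MeasurableSet C1 ∧ MeasurableSet C2 ∧ MeasurableSet C3 ∧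
      C1 ⊆ C ∧ C2 ⊆ C ∧ C3 ⊆ C ∧ Disjoint C1 C2 ∧ Disjoint C1 C3 ∧ Disjoint C2 C3 ∧
      0 < μ C1 ∧ 0 < μ C2 ∧ 0 < μ C3 := by
  obtain ⟨B, hBC, hBm, hB0, hB0'⟩ := split_of_not_atom hC h0 h
  have hCBm : MeasurableSet (C \ B) := hC.diff hBm
  have hdisjB : Disjoint B (C \ B) := disjoint_sdiff_self_right
  by_cases hb : IsMeasAtom μ B
  · by_cases hcb : IsMeasAtom μ (C \ B)
    · exact absurd ⟨B, C \ B, hdisjB, hb, hcb, (Set.union_diff_cancel hBC).symm⟩ h2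
    · obtain ⟨D, hDCB, hDm, hD0, hD0'⟩ := split_of_not_atom hCBm hB0' hcb
      refine ⟨B, D, (C \ B) \ D, hBm, hDm, hCBm.diff hDm, hBC,
        hDCB.trans Set.diff_subset, Set.diff_subset.trans Set.diff_subset,
        hdisjB.mono_right hDCB, hdisjB.mono_right Set.diff_subset,
        disjoint_sdiff_self_right, hB0, hD0, hD0'⟩
  · obtain ⟨D, hDB, hDm, hD0, hD0'⟩ := split_of_not_atom hBm hB0 hb
    refine ⟨D, B \ D, C \ B, hDm, hBm.diff hDm, hCBm,
      (hDB.trans hBC), Set.diff_subset.trans hBC, Set.diff_subset,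
      disjoint_sdiff_self_right, (hdisjB.mono_left hDB), hdisjB.mono_left Set.diff_subset,
      hD0, hD0', hB0'⟩

set_option maxHeartbeats 1000000 in
lemma not_rightSymPt {S X : Type*} [MeasurableSpace S] {μ : Measure S}
    [NormedAddCommGroup X] [NormedSpace ℝ X]
    (p : ℝ≥0∞) [Fact (1 ≤ p)] (hp1 : 1 < p) (hptop : p < ⊤) (hp2 : p ≠ 2)
    (f : Lp X p μ) {C1 C2 C3 : Set S}
    (h1m : MeasurableSet C1) (h2m : MeasurableSet C2) (h3m : MeasurableSet C3)
    (h1s : C1 ⊆ {s | (f : S → X) s ≠ 0}) (h2s : C2 ⊆ {s | (f : S → X) s ≠ 0})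
    (h3s : C3 ⊆ {s | (f : S → X) s ≠ 0})
    (d12 : Disjoint C1 C2) (d13 : Disjoint C1 C3) (d23 : Disjoint C2 C3)
    (h1p : 0 < μ C1) (h2p : 0 < μ C2) (h3p : 0 < μ C3) :
    ¬ RightSymPt f := by
  intro hrs
  set fs : S → X := (f : S → X) with hfs
  set pr : ℝ := p.toReal with hprdef
  have hp0 : p ≠ 0 := by positivity
  have hpt : p ≠ ⊤ := hptop.ne
  have hpr1 : 1 < pr := by
    rw [hprdef, ← ENNReal.toReal_one]
    exact (ENNReal.toReal_lt_toReal one_ne_top hpt).mpr hp1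
  have hpr2 : pr ≠ 2 := by
    intro h
    apply hp2
    rw [← ENNReal.ofReal_toReal hpt, ← hprdef, h]
    norm_num
  have hpr0 : (0:ℝ) < pr := by linarith
  -- the integrand
  set Φ : S → ℝ≥0∞ := fun s => (‖fs s‖₊ : ℝ≥0∞) ^ pr with hΦdef
  have hΦm : Measurable Φ :=
    ENNReal.continuous_rpow_const.measurable.comp
      ((Lp.stronglyMeasurable f).nnnorm.measurable.coe_nnreal_ennreal)
  -- the norm characterization
  have hItot : ∀ u : Lp X p μ,
      eLpNorm u p μ = (∫⁻ s, (‖(u : S → X) s‖₊ : ℝ≥0∞) ^ pr ∂μ) ^ (1 / pr) := fun u =>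
    eLpNorm_eq_lintegral_rpow_enorm_toReal hp0 hpt
  have hnorm : ∀ u v : Lp X p μ, (‖u‖ ≤ ‖v‖ ↔
      ∫⁻ s, (‖(u : S → X) s‖₊ : ℝ≥0∞) ^ pr ∂μ ≤ ∫⁻ s, (‖(v : S → X) s‖₊ : ℝ≥0∞) ^ pr ∂μ) := by
    intro u v
    rw [Lp.norm_def, Lp.norm_def,
      ENNReal.toReal_le_toReal (Lp.eLpNorm_ne_top u) (Lp.eLpNorm_ne_top v),
      hItot u, hItot v, ENNReal.rpow_le_rpow_iff (by positivity : (0:ℝ) < 1 / pr)]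
  have hfin : ∫⁻ s, Φ s ∂μ ≠ ⊤ := by
    intro h
    have := Lp.eLpNorm_lt_top f
    rw [hItot f, ← hΦdef, h, ENNReal.top_rpow_of_pos (by positivity)] at this
    exact (lt_irrefl _) this
  -- masses
  set R : Set S := (C1 ∪ C2 ∪ C3)ᶜ with hRdef
  set m1 : ℝ≥0∞ := ∫⁻ s in C1, Φ s ∂μ with hm1
  set m2 : ℝ≥0∞ := ∫⁻ s in C2, Φ s ∂μ with hm2
  set m3 : ℝ≥0∞ := ∫⁻ s in C3, Φ s ∂μ with hm3
  set mR : ℝ≥0∞ := ∫⁻ s in R, Φ s ∂μ with hmR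
  have hm1f : m1 ≠ ⊤ := (lt_of_le_of_lt (setLIntegral_le_lintegral _ _) hfin.lt_top).ne
  have hm2f : m2 ≠ ⊤ := (lt_of_le_of_lt (setLIntegral_le_lintegral _ _) hfin.lt_top).ne
  have hm3f : m3 ≠ ⊤ := (lt_of_le_of_lt (setLIntegral_le_lintegral _ _) hfin.lt_top).ne
  have hmRf : mR ≠ ⊤ := (lt_of_le_of_lt (setLIntegral_le_lintegral _ _) hfin.lt_top).ne
  have hmpos : ∀ (C : Set S), MeasurableSet C → C ⊆ {s | fs s ≠ 0} → 0 < μ C →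
      0 < ∫⁻ s in C, Φ s ∂μ := by
    intro C hCm hCs hCp
    rw [← Measure.restrict_apply_self μ C] at hCp
    have hsupp : C ⊆ Function.support Φ := by
      intro s hs
      have hne : fs s ≠ 0 := hCs hs
      have hne2 : (‖fs s‖₊ : ℝ≥0∞) ^ pr ≠ 0 := by
        simp [ENNReal.rpow_eq_zero_iff, hne, ENNReal.coe_ne_top]
      simpa [Function.mem_support, hΦdef] using hne2
    rw [lintegral_pos_iff_support hΦm]
    exact lt_of_lt_of_le hCp (measure_mono hsupp)
  set M1 : ℝ := m1.toReal with hM1def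
  set M2 : ℝ := m2.toReal with hM2def
  set M3 : ℝ := m3.toReal with hM3def
  set MR : ℝ := mR.toReal with hMRdef
  have hM1 : 0 < M1 := ENNReal.toReal_pos (hmpos C1 h1m h1s h1p).ne' hm1f
  have hM2 : 0 < M2 := ENNReal.toReal_pos (hmpos C2 h2m h2s h2p).ne' hm2f
  have hM3 : 0 < M3 := ENNReal.toReal_pos (hmpos C3 h3m h3s h3p).ne' hm3f
  have hMR : 0 ≤ MR := ENNReal.toReal_nonneg
  -- coefficients
  obtain ⟨a1, a2, a3, hortho, hnon⟩ :=
    exists_coeffs (q := pr - 1) (by linarith) (fun h => hpr2 (by linarith)) hM1 hM2 hM3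
  have he : pr - 1 - 1 = pr - 2 := by ring
  rw [he] at hortho
  -- the perturbation function (kept opaque)
  obtain ⟨c, hcm, hc1, hc2, hc3, hcR, hcbd⟩ :
      ∃ c : S → ℝ, Measurable c ∧ (∀ s ∈ C1, c s = a1) ∧ (∀ s ∈ C2, c s = a2) ∧
        (∀ s ∈ C3, c s = a3) ∧ (∀ s ∈ R, c s = 0) ∧
        (∀ s, |c s| ≤ |a1| + |a2| + |a3|) := by
    refine ⟨fun s => C1.indicator (fun _ => a1) s + C2.indicator (fun _ => a2) s
      + C3.indicator (fun _ => a3) s, ?_, ?_, ?_, ?_, ?_, ?_⟩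
    · exact ((measurable_const.indicator h1m).add (measurable_const.indicator h2m)).add
        (measurable_const.indicator h3m)
    · intro s hs
      have h2 : s ∉ C2 := fun h => (Set.disjoint_left.mp d12 hs) h
      have h3 : s ∉ C3 := fun h => (Set.disjoint_left.mp d13 hs) h
      simp [Set.indicator_of_mem hs, Set.indicator_of_notMem h2, Set.indicator_of_notMem h3]
    · intro s hs
      have h1 : s ∉ C1 := fun h => (Set.disjoint_left.mp d12 h) hs
      have h3 : s ∉ C3 := fun h => (Set.disjoint_left.mp d23 hs) h
      simp [Set.indicator_of_mem hs, Set.indicator_of_notMem h1, Set.indicator_of_notMem h3]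
    · intro s hs
      have h1 : s ∉ C1 := fun h => (Set.disjoint_left.mp d13 h) hs
      have h2 : s ∉ C2 := fun h => (Set.disjoint_left.mp d23 h) hs
      simp [Set.indicator_of_mem hs, Set.indicator_of_notMem h1, Set.indicator_of_notMem h2]
    · intro s hs
      simp only [hRdef, Set.mem_compl_iff, Set.mem_union, not_or] at hs
      simp [Set.indicator_of_notMem hs.1.1, Set.indicator_of_notMem hs.1.2,
        Set.indicator_of_notMem hs.2]
    · intro s
      have e1 : |C1.indicator (fun _ => a1) s| ≤ |a1| := by
        by_cases hs : s ∈ C1 <;>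
          simp [Set.indicator_of_mem, Set.indicator_of_notMem, hs, abs_nonneg]
      have e2 : |C2.indicator (fun _ => a2) s| ≤ |a2| := by
        by_cases hs : s ∈ C2 <;>
          simp [Set.indicator_of_mem, Set.indicator_of_notMem, hs, abs_nonneg]
      have e3 : |C3.indicator (fun _ => a3) s| ≤ |a3| := by
        by_cases hs : s ∈ C3 <;>
          simp [Set.indicator_of_mem, Set.indicator_of_notMem, hs, abs_nonneg]
      calc |C1.indicator (fun _ => a1) s + C2.indicator (fun _ => a2) s
          + C3.indicator (fun _ => a3) s|
          ≤ |C1.indicator (fun _ => a1) s + C2.indicator (fun _ => a2) s|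
            + |C3.indicator (fun _ => a3) s| := abs_add_le _ _
        _ ≤ |C1.indicator (fun _ => a1) s| + |C2.indicator (fun _ => a2) s|
            + |C3.indicator (fun _ => a3) s| := by gcongr; exact abs_add_le _ _
        _ ≤ |a1| + |a2| + |a3| := by gcongr
  have hhsm : StronglyMeasurable (fun s => c s • fs s) :=
    hcm.stronglyMeasurable.smul (Lp.stronglyMeasurable f)
  have hmem : MemLp (fun s => c s • fs s) p μ := by
    apply MemLp.of_le_mul (Lp.memLp f) hhsm.aestronglyMeasurable
    apply Filter.Eventually.of_forall
    intro s
    simp only [norm_smul, Real.norm_eq_abs]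
    exact mul_le_mul_of_nonneg_right (hcbd s) (norm_nonneg _)
  set G : Lp X p μ := hmem.toLp _ with hGdef
  have hGc : (⇑G : S → X) =ᵐ[μ] (fun s => c s • fs s) := hmem.coeFn_toLp
  have hRm : MeasurableSet R := ((h1m.union h2m).union h3m).compl
  -- generic evaluation of lintegrals
  have hval : ∀ (d : S → ℝ) (b1 b2 b3 b0 : ℝ),
      (∀ s ∈ C1, d s = b1) → (∀ s ∈ C2, d s = b2) → (∀ s ∈ C3, d s = b3) →
      (∀ s ∈ R, d s = b0) →
      ∫⁻ s, (‖d s • fs s‖₊ : ℝ≥0∞) ^ pr ∂μ =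
        ENNReal.ofReal (|b1| ^ pr) * m1 + ENNReal.ofReal (|b2| ^ pr) * m2
        + ENNReal.ofReal (|b3| ^ pr) * m3 + ENNReal.ofReal (|b0| ^ pr) * mR := by
    intro d b1 b2 b3 b0 hd1 hd2 hd3 hdR
    have hecv : ∀ (b : ℝ) (s : S), ((‖b • fs s‖₊ : ℝ≥0∞)) ^ pr
        = ENNReal.ofReal (|b| ^ pr) * Φ s := by
      intro b s
      rw [nnnorm_smul, ENNReal.coe_mul, ENNReal.mul_rpow_of_nonneg _ _ hpr0.le]
      congr 1
      rw [← ENNReal.ofReal_coe_nnreal, coe_nnnorm, ENNReal.ofReal_rpow_of_nonneg (norm_nonneg _) hpr0.le,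
        Real.norm_eq_abs]
    have hsplit : ∫⁻ s, (‖d s • fs s‖₊ : ℝ≥0∞) ^ pr ∂μ
        = ∫⁻ s in C1, (‖d s • fs s‖₊ : ℝ≥0∞) ^ pr ∂μ
          + ∫⁻ s in C2, (‖d s • fs s‖₊ : ℝ≥0∞) ^ pr ∂μ
          + ∫⁻ s in C3, (‖d s • fs s‖₊ : ℝ≥0∞) ^ pr ∂μ
          + ∫⁻ s in R, (‖d s • fs s‖₊ : ℝ≥0∞) ^ pr ∂μ := by
      have hu : MeasurableSet (C1 ∪ C2 ∪ C3) := (h1m.union h2m).union h3m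
      rw [← lintegral_add_compl (fun s => (‖d s • fs s‖₊ : ℝ≥0∞) ^ pr) hu, ← hRdef]
      congr 1
      rw [lintegral_union h3m (Set.disjoint_union_left.mpr ⟨d13, d23⟩),
          lintegral_union h2m d12]
    have hset : ∀ (C : Set S) (bC : ℝ), MeasurableSet C → (∀ s ∈ C, d s = bC) →
        ∫⁻ s in C, (‖d s • fs s‖₊ : ℝ≥0∞) ^ pr ∂μ
          = ENNReal.ofReal (|bC| ^ pr) * ∫⁻ s in C, Φ s ∂μ := by
      intro C bC hCm hdC
      rw [← lintegral_const_mul _ hΦm]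
      apply setLIntegral_congr_fun hCm
      intro s hs
      simp only []
      rw [hdC s hs, hecv]
    rw [hsplit, hset C1 b1 h1m hd1, hset C2 b2 h2m hd2, hset C3 b3 h3m hd3,
      hset R b0 hRm hdR]
  -- a.e. representatives
  have hGadd : ∀ t : ℝ, (⇑(G + t • f) : S → X) =ᵐ[μ] fun s => (c s + t) • fs s := by
    intro t
    filter_upwards [Lp.coeFn_add G (t • f), Lp.coeFn_smul t f, hGc] with s hs1 hs2 hs3
    rw [hs1]
    simp only [Pi.add_apply]
    rw [hs2]
    simp only [Pi.smul_apply]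
    rw [hs3, add_smul]
  have hfadd : ∀ t : ℝ, (⇑(f + t • G) : S → X) =ᵐ[μ] fun s => (1 + t * c s) • fs s := by
    intro t
    filter_upwards [Lp.coeFn_add f (t • G), Lp.coeFn_smul t G, hGc] with s hs1 hs2 hs3
    rw [hs1]
    simp only [Pi.add_apply]
    rw [hs2]
    simp only [Pi.smul_apply]
    rw [hs3, add_smul, one_smul, mul_smul]
  -- lintegral formulas
  have hI2 : ∀ t : ℝ, ∫⁻ s, (‖(⇑(G + t • f)) s‖₊ : ℝ≥0∞) ^ pr ∂μ =
      ENNReal.ofReal (|a1 + t| ^ pr) * m1 + ENNReal.ofReal (|a2 + t| ^ pr) * m2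
      + ENNReal.ofReal (|a3 + t| ^ pr) * m3 + ENNReal.ofReal (|t| ^ pr) * mR := by
    intro t
    rw [lintegral_congr_ae ((hGadd t).mono fun s hs => by rw [hs])]
    exact hval (fun s => c s + t) (a1 + t) (a2 + t) (a3 + t) t
      (fun s hs => by show c s + t = a1 + t; rw [hc1 s hs])
      (fun s hs => by show c s + t = a2 + t; rw [hc2 s hs])
      (fun s hs => by show c s + t = a3 + t; rw [hc3 s hs])
      (fun s hs => by show c s + t = t; rw [hcR s hs, zero_add])
  have hI1 : ∀ t : ℝ, ∫⁻ s, (‖(⇑(f + t • G)) s‖₊ : ℝ≥0∞) ^ pr ∂μ =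
      ENNReal.ofReal (|1 + t * a1| ^ pr) * m1 + ENNReal.ofReal (|1 + t * a2| ^ pr) * m2
      + ENNReal.ofReal (|1 + t * a3| ^ pr) * m3 + ENNReal.ofReal (|(1:ℝ)| ^ pr) * mR := by
    intro t
    rw [lintegral_congr_ae ((hfadd t).mono fun s hs => by rw [hs])]
    exact hval (fun s => 1 + t * c s) (1 + t * a1) (1 + t * a2) (1 + t * a3) 1
      (fun s hs => by show 1 + t * c s = 1 + t * a1; rw [hc1 s hs])
      (fun s hs => by show 1 + t * c s = 1 + t * a2; rw [hc2 s hs])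
      (fun s hs => by show 1 + t * c s = 1 + t * a3; rw [hc3 s hs])
      (fun s hs => by show 1 + t * c s = 1; rw [hcR s hs, mul_zero, add_zero])
  -- finiteness and toReal of the формулы
  have hfin4 : ∀ b1 b2 b3 b0 : ℝ,
      ENNReal.ofReal (|b1| ^ pr) * m1 + ENNReal.ofReal (|b2| ^ pr) * m2
      + ENNReal.ofReal (|b3| ^ pr) * m3 + ENNReal.ofReal (|b0| ^ pr) * mR ≠ ⊤ := by
    intro b1 b2 b3 b0
    have f1 : ENNReal.ofReal (|b1| ^ pr) * m1 ≠ ⊤ := ENNReal.mul_ne_top ENNReal.ofReal_ne_top hm1f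
    have f2 : ENNReal.ofReal (|b2| ^ pr) * m2 ≠ ⊤ := ENNReal.mul_ne_top ENNReal.ofReal_ne_top hm2f
    have f3 : ENNReal.ofReal (|b3| ^ pr) * m3 ≠ ⊤ := ENNReal.mul_ne_top ENNReal.ofReal_ne_top hm3f
    have f4 : ENNReal.ofReal (|b0| ^ pr) * mR ≠ ⊤ := ENNReal.mul_ne_top ENNReal.ofReal_ne_top hmRf
    exact ENNReal.add_ne_top.mpr ⟨ENNReal.add_ne_top.mpr ⟨ENNReal.add_ne_top.mpr ⟨f1, f2⟩, f3⟩, f4⟩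
  have htoReal : ∀ b1 b2 b3 b0 : ℝ,
      (ENNReal.ofReal (|b1| ^ pr) * m1 + ENNReal.ofReal (|b2| ^ pr) * m2
      + ENNReal.ofReal (|b3| ^ pr) * m3 + ENNReal.ofReal (|b0| ^ pr) * mR).toReal
      = |b1| ^ pr * M1 + |b2| ^ pr * M2 + |b3| ^ pr * M3 + |b0| ^ pr * MR := by
    intro b1 b2 b3 b0
    have f1 : ENNReal.ofReal (|b1| ^ pr) * m1 ≠ ⊤ := ENNReal.mul_ne_top ENNReal.ofReal_ne_top hm1f
    have f2 : ENNReal.ofReal (|b2| ^ pr) * m2 ≠ ⊤ := ENNReal.mul_ne_top ENNReal.ofReal_ne_top hm2f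
    have f3 : ENNReal.ofReal (|b3| ^ pr) * m3 ≠ ⊤ := ENNReal.mul_ne_top ENNReal.ofReal_ne_top hm3f
    rw [ENNReal.toReal_add (ENNReal.add_ne_top.mpr ⟨ENNReal.add_ne_top.mpr ⟨f1, f2⟩, f3⟩)
        (ENNReal.mul_ne_top ENNReal.ofReal_ne_top hmRf),
      ENNReal.toReal_add (ENNReal.add_ne_top.mpr ⟨f1, f2⟩) f3,
      ENNReal.toReal_add f1 f2,
      ENNReal.toReal_mul, ENNReal.toReal_mul, ENNReal.toReal_mul, ENNReal.toReal_mul,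
      ENNReal.toReal_ofReal (by positivity), ENNReal.toReal_ofReal (by positivity),
      ENNReal.toReal_ofReal (by positivity), ENNReal.toReal_ofReal (by positivity)]
  -- G is Birkhoff-James orthogonal to f
  have hGf : BJOrth G f := by
    intro t
    rw [hnorm]
    have h0 : (G + (0:ℝ) • f) = G := by rw [zero_smul, add_zero]
    have hIG := hI2 0
    rw [h0] at hIG
    simp only [add_zero] at hIG
    rw [hIG, hI2 t, ← ENNReal.ofReal_toReal (hfin4 a1 a2 a3 0),
      ← ENNReal.ofReal_toReal (hfin4 (a1 + t) (a2 + t) (a3 + t) t)]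
    apply ENNReal.ofReal_le_ofReal
    rw [htoReal, htoReal]
    have T1 := abs_rpow_tangent hpr1 a1 t
    have T2 := abs_rpow_tangent hpr1 a2 t
    have T3 := abs_rpow_tangent hpr1 a3 t
    have hA1 := mul_le_mul_of_nonneg_right T1 hM1.le
    have hA2 := mul_le_mul_of_nonneg_right T2 hM2.le
    have hA3 := mul_le_mul_of_nonneg_right T3 hM3.le
    have hOt : (pr * |a1| ^ (pr - 2) * a1 * t) * M1 + (pr * |a2| ^ (pr - 2) * a2 * t) * M2
        + (pr * |a3| ^ (pr - 2) * a3 * t) * M3 = 0 := by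
      calc (pr * |a1| ^ (pr - 2) * a1 * t) * M1 + (pr * |a2| ^ (pr - 2) * a2 * t) * M2
          + (pr * |a3| ^ (pr - 2) * a3 * t) * M3
          = (pr * t) * ((|a1| ^ (pr - 2) * a1) * M1 + (|a2| ^ (pr - 2) * a2) * M2
            + (|a3| ^ (pr - 2) * a3) * M3) := by ring
        _ = 0 := by rw [hortho]; ring
    have hzero : |(0:ℝ)| ^ pr = 0 := by rw [abs_zero, Real.zero_rpow hpr0.ne']
    have hRge : 0 ≤ |t| ^ pr * MR := mul_nonneg (Real.rpow_nonneg (abs_nonneg _) _) hMR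
    rw [hzero]
    nlinarith [hA1, hA2, hA3, hOt, hRge]
  -- apply right symmetry
  have hfG : BJOrth f G := hrs G hGf
  have hone : |(1:ℝ)| ^ pr = 1 := by rw [abs_one, Real.one_rpow]
  have hmin : IsLocalMin (fun t : ℝ => |1 + t * a1| ^ pr * M1 + |1 + t * a2| ^ pr * M2
      + |1 + t * a3| ^ pr * M3 + MR) 0 := by
    apply Filter.Eventually.of_forall
    intro t
    have hle := hfG t
    rw [hnorm] at hle
    have h0 : (f + (0:ℝ) • G) = f := by rw [zero_smul, add_zero]
    have hIF := hI1 0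
    rw [h0] at hIF
    simp only [zero_mul, add_zero] at hIF
    rw [hIF, hI1 t] at hle
    have hle2 := ENNReal.toReal_mono (hfin4 (1 + t * a1) (1 + t * a2) (1 + t * a3) 1) hle
    rw [htoReal, htoReal, hone, one_mul] at hle2
    simp only [zero_mul, add_zero, hone, one_mul]
    linarith [hle2]
  have hd1 := (hasDerivAt_one_add_mul_rpow hpr1 a1).mul_const M1
  have hd2 := (hasDerivAt_one_add_mul_rpow hpr1 a2).mul_const M2
  have hd3 := (hasDerivAt_one_add_mul_rpow hpr1 a3).mul_const M3
  have hψd : HasDerivAt (fun t : ℝ => |1 + t * a1| ^ pr * M1 + |1 + t * a2| ^ pr * M2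
      + |1 + t * a3| ^ pr * M3 + MR) (pr * a1 * M1 + pr * a2 * M2 + pr * a3 * M3) 0 := by
    exact ((hd1.add hd2).add hd3).add_const MR
  have hder0 := hmin.hasDerivAt_eq_zero hψd
  apply hnon
  have h2 : pr * (a1 * M1 + a2 * M2 + a3 * M3) = 0 := by linarith [hder0]
  rcases mul_eq_zero.mp h2 with h | h
  · exact absurd h hpr0.ne'
  · exact h

theorem right_symmetric_Lp_support_atoms
    {S X : Type*} [MeasurableSpace S] {μ : Measure S} [μ.IsComplete]
    [NormedAddCommGroup X] [NormedSpace ℝ X] [CompleteSpace X]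
    (hX : FrechetDiffNorm X)
    (p : ℝ≥0∞) [Fact (1 ≤ p)] (hp1 : 1 < p) (hptop : p < ⊤) (hp2 : p ≠ 2)
    (f : Lp X p μ) (hf : f ≠ 0) (hrs : RightSymPt f) :
    IsMeasAtom μ {s | (f : S → X) s ≠ 0} ∨
      ∃ A B : Set S, Disjoint A B ∧ IsMeasAtom μ A ∧ IsMeasAtom μ B ∧
        {s | (f : S → X) s ≠ 0} = A ∪ B := by
  classical
  have hsm : StronglyMeasurable (f : S → X) := Lp.stronglyMeasurable f
  have hCmeas : MeasurableSet {s | (f : S → X) s ≠ 0} := by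
    have h0 : MeasurableSet {s | (f : S → X) s = 0} :=
      hsm.measurableSet_eq_fun stronglyMeasurable_const
    exact h0.compl
  have hCpos : 0 < μ {s | (f : S → X) s ≠ 0} := by
    rcases eq_or_ne (μ {s | (f : S → X) s ≠ 0}) 0 with h0 | h0
    · exfalso
      apply hf
      rw [Lp.eq_zero_iff_ae_eq_zero]
      rw [Filter.EventuallyEq, ae_iff]
      simpa using h0
    · exact pos_iff_ne_zero.mpr h0
  by_cases hatom : IsMeasAtom μ {s | (f : S → X) s ≠ 0}
  · exact Or.inl hatom
  by_cases htwo : ∃ A B : Set S, Disjoint A B ∧ IsMeasAtom μ A ∧ IsMeasAtom μ B ∧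
      {s | (f : S → X) s ≠ 0} = A ∪ B
  · exact Or.inr htwo
  exfalso
  obtain ⟨C1, C2, C3, h1m, h2m, h3m, h1s, h2s, h3s, d12, d13, d23, h1p, h2p, h3p⟩ :=
    three_pieces hCmeas hCpos hatom htwo
  exact not_rightSymPt p hp1 hptop hp2 f h1m h2m h3m h1s h2s h3s d12 d13 d23 h1p h2p h3p hrs
end
end

section
/- Let (S, μ) be a complete measure space, X a Banach space whose norm is Fréchet differentiable at every nonzero point, and 1 < p < ∞ with p ≠ 2. If f ∈ L^p(μ, X) is such that Z(f)^c = {s : f(s) ≠ 0} is an atom of μ and f(s) is a left symmetric point of X for every s ∈ S, then f is a left symmetric point of L^p(μ, X). -/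
open MeasureTheory ENNReal Set

noncomputable section

lemma atom_exists_full {S : Type*} [MeasurableSpace S] {μ : Measure S} {A : Set S}
    (hA : IsMeasAtom μ A) {B : ℕ → Set S} (hBA : ∀ n, B n ⊆ A)
    (hBm : ∀ n, MeasurableSet (B n)) (hcov : A ⊆ ⋃ n, B n) :
    ∃ n, μ (B n) = μ A := by
  by_contra h
  push_neg at h
  have h0 : ∀ n, μ (B n) = 0 := fun n =>
    ((hA.2.2 (B n) (hBA n) (hBm n)).resolve_right (h n))
  have hle : μ A ≤ ∑' n, μ (B n) := le_trans (measure_mono hcov) (measure_iUnion_le B)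
  simp only [h0, tsum_zero, nonpos_iff_eq_zero] at hle
  exact absurd hle (ne_of_gt hA.2.1)

lemma ae_const_on_atom {S X : Type*} [MeasurableSpace S] {μ : Measure S}
    [NormedAddCommGroup X] {φ : S → X} (hφ : StronglyMeasurable φ)
    {A : Set S} (hA : IsMeasAtom μ A) (hfin : μ A ≠ ⊤) :
    ∃ x : X, ∀ᵐ s ∂μ, s ∈ A → φ s = x := by
  letI : MeasurableSpace X := borel X
  haveI : BorelSpace X := ⟨rfl⟩
  have hφm : Measurable φ := hφ.measurable
  obtain ⟨c, hc_count, hc_sub⟩ := hφ.isSeparable_range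
  have hAne : A.Nonempty := nonempty_of_measure_ne_zero (ne_of_gt hA.2.1)
  have hcne : c.Nonempty := by
    obtain ⟨s, hs⟩ := hAne
    have : φ s ∈ closure c := hc_sub ⟨s, rfl⟩
    rcases c.eq_empty_or_nonempty with h | h
    · simp [h] at this
    · exact h
  obtain ⟨d, hd⟩ := Set.Countable.exists_eq_range hc_count hcne
  -- For each n, some closed ball of radius 1/(n+1) captures full measure
  have key : ∀ n : ℕ, ∃ k : ℕ,
      μ (A ∩ φ ⁻¹' Metric.closedBall (d k) (1 / (n + 1))) = μ A := by
    intro n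
    refine atom_exists_full hA (fun k => inter_subset_left)
      (fun k => hA.1.inter (measurableSet_closedBall.preimage hφm)) ?_
    intro s hs
    have hmem : φ s ∈ closure c := hc_sub ⟨s, rfl⟩
    have hpos : (0:ℝ) < 1 / (n + 1) := by positivity
    obtain ⟨b, hbc, hbd⟩ := Metric.mem_closure_iff.1 hmem _ hpos
    rw [hd] at hbc
    obtain ⟨k, rfl⟩ := hbc
    exact mem_iUnion.2 ⟨k, hs, Metric.mem_closedBall.2 hbd.le⟩
  choose k hk using key
  set B : ℕ → Set S := fun n => A ∩ φ ⁻¹' Metric.closedBall (d (k n)) (1 / (n + 1)) with hB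
  have hBm : ∀ n, MeasurableSet (B n) := fun n =>
    hA.1.inter (measurableSet_closedBall.preimage hφm)
  have hdiff : ∀ n, μ (A \ B n) = 0 := by
    intro n
    rw [measure_diff inter_subset_left (hBm n).nullMeasurableSet
      (by rw [hk n]; exact hfin), hk n, tsub_self]
  set E : Set S := ⋂ n, B n with hE
  have hAE : μ (A \ E) = 0 := by
    have : A \ E = ⋃ n, A \ B n := by
      rw [hE, diff_iInter]
    rw [this]
    exact le_antisymm (le_trans (measure_iUnion_le _) (by simp [hdiff])) (zero_le)
  have hEfull : μ E = μ A := by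
    have h1 : μ (A ∩ E) + μ (A \ E) = μ A :=
      measure_inter_add_diff A (MeasurableSet.iInter hBm)
    have h2 : A ∩ E = E := inter_eq_right.2 (iInter_subset_of_subset 0 inter_subset_left)
    rw [h2, hAE, add_zero] at h1
    exact h1
  have hEne : E.Nonempty := by
    apply nonempty_of_measure_ne_zero (μ := μ)
    rw [hEfull]; exact (ne_of_gt hA.2.1)
  obtain ⟨s0, hs0⟩ := hEne
  refine ⟨φ s0, ?_⟩
  have hconst : ∀ s ∈ E, φ s = φ s0 := by
    intro s hs
    have hdist : ∀ n : ℕ, dist (φ s) (φ s0) ≤ 2 * (1 / (n + 1)) := by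
      intro n
      have h1 : φ s ∈ Metric.closedBall (d (k n)) (1 / (n + 1)) :=
        (mem_iInter.1 hs n).2
      have h2 : φ s0 ∈ Metric.closedBall (d (k n)) (1 / (n + 1)) :=
        (mem_iInter.1 hs0 n).2
      calc dist (φ s) (φ s0) ≤ dist (φ s) (d (k n)) + dist (d (k n)) (φ s0) :=
            dist_triangle _ _ _
        _ ≤ 1 / (n + 1) + 1 / (n + 1) := by
            exact add_le_add (Metric.mem_closedBall.1 h1)
              (dist_comm (d (k n)) (φ s0) ▸ Metric.mem_closedBall.1 h2)
        _ = 2 * (1 / (n + 1)) := by ring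
    have hlim : Filter.Tendsto (fun n : ℕ => 2 * (1 / ((n:ℝ) + 1)))
        Filter.atTop (nhds 0) := by
      have := tendsto_one_div_add_atTop_nhds_zero_nat (𝕜 := ℝ)
      simpa using this.const_mul 2
    have hd0 : dist (φ s) (φ s0) ≤ 0 := ge_of_tendsto' hlim hdist
    exact eq_of_dist_eq_zero (le_antisymm hd0 dist_nonneg)
  have : ∀ᵐ s ∂μ, s ∉ A \ E := by
    rw [← measure_eq_zero_iff_ae_notMem]; exact hAE
  filter_upwards [this] with s hs hsA
  by_cases hsE : s ∈ E
  · exact hconst s hsE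
  · exact absurd ⟨hsA, hsE⟩ hs

set_option maxHeartbeats 2000000 in
lemma key_real {X : Type*} [NormedAddCommGroup X] [NormedSpace ℝ X]
    {q : ℝ} (hq : 1 < q) {x y : X} (hx : x ≠ 0) {a Cr : ℝ} (ha : 0 < a) (hC : 0 ≤ Cr)
    (h : ∀ t : ℝ, ‖x‖ ^ q * a ≤ ‖x + t • y‖ ^ q * a + |t| ^ q * Cr) :
    BJOrth x y := by
  intro t
  by_contra hlt
  push_neg at hlt
  set r := ‖x‖ with hr
  have hq0 : (0:ℝ) < q := by linarith
  have hr0 : 0 < r := norm_pos_iff.2 hx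
  set δ := r - ‖x + t • y‖ with hδ
  have hδ0 : 0 < δ := sub_pos.2 hlt
  have hδr : δ ≤ r := by
    have := norm_nonneg (x + t • y); rw [hδ]; linarith
  set K := |t| ^ q * Cr with hK
  have hK0 : 0 ≤ K := mul_nonneg (Real.rpow_nonneg (abs_nonneg t) q) hC
  set c := q * (r/2) ^ (q-1) * δ * a with hc
  have hc0 : 0 < c := by
    have : (0:ℝ) < (r/2) ^ (q-1) := Real.rpow_pos_of_pos (by linarith) _
    positivity
  have main : ∀ s : ℝ, 0 < s → s ≤ 1 → s * δ ≤ r/2 → c ≤ s ^ (q-1) * K := by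
    intro s hs0 hs1 hsr
    have hconv : ‖x + (s*t) • y‖ ≤ r - s * δ := by
      have hrepr : x + (s*t) • y = (1-s) • x + s • (x + t • y) := by
        rw [smul_add, sub_smul, one_smul, ← mul_smul]
        abel
      rw [hrepr]
      calc ‖(1-s) • x + s • (x + t • y)‖ ≤ ‖(1-s) • x‖ + ‖s • (x + t • y)‖ :=
            norm_add_le _ _
        _ = (1-s)*‖x‖ + s*‖x + t • y‖ := by
            rw [norm_smul, norm_smul, Real.norm_eq_abs, Real.norm_eq_abs,
              abs_of_nonneg (by linarith), abs_of_nonneg hs0.le]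
        _ = r - s*δ := by rw [hδ]; ring
    have hu : r/2 ≤ r - s*δ := by linarith
    have hu0 : (0:ℝ) < r - s*δ := lt_of_lt_of_le (by linarith) hu
    set u := r - s*δ with hudef
    have bern : u ^ q + q * (r/2)^(q-1) * (s*δ) ≤ r ^ q := by
      have hw0 : 0 ≤ s*δ/u := by positivity
      have h1 : (1:ℝ) + q * (s*δ/u) ≤ (1 + s*δ/u) ^ q :=
        one_add_mul_self_le_rpow_one_add (by linarith) hq.le
      have h2 : u * (1 + s*δ/u) = r := by field_simp; rw [hudef]; ring
      have h3 : u ^ q * (1 + s*δ/u)^q = r ^ q := by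
        rw [← Real.mul_rpow hu0.le (by linarith), h2]
      have huq0 : (0:ℝ) ≤ u ^ q := Real.rpow_nonneg hu0.le _
      have h4 : u^q * (1 + q*(s*δ/u)) ≤ r^q := by
        rw [← h3]; exact mul_le_mul_of_nonneg_left h1 huq0
      have h5 : u^q * (q*(s*δ/u)) = q * u^(q-1) * (s*δ) := by
        rw [show u^(q-1) = u^q / u by rw [Real.rpow_sub hu0, Real.rpow_one]]
        field_simp
      have h6 : (r/2)^(q-1) ≤ u^(q-1) :=
        Real.rpow_le_rpow (by linarith) hu (by linarith)
      have h7 : q * (r/2)^(q-1) * (s*δ) ≤ q * u^(q-1) * (s*δ) := by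
        have hsδ : 0 ≤ s*δ := by positivity
        have := mul_le_mul_of_nonneg_left h6 hq0.le
        exact mul_le_mul_of_nonneg_right this hsδ
      nlinarith [h4, h5, h7]
    have hh := h (s*t)
    have h7 : ‖x + (s*t) • y‖ ^ q ≤ u ^ q :=
      Real.rpow_le_rpow (norm_nonneg _) hconv (by linarith)
    have h8 : |s*t| ^ q = s^q * |t|^q := by
      rw [abs_mul, abs_of_nonneg hs0.le, Real.mul_rpow hs0.le (abs_nonneg t)]
    have h9 : c * s ≤ s^q * K := by
      have hA1 : ‖x + (s*t) • y‖ ^ q * a ≤ u ^ q * a :=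
        mul_le_mul_of_nonneg_right h7 ha.le
      have hA2 : u ^ q * a + q * (r/2)^(q-1) * (s*δ) * a ≤ r ^ q * a := by
        have := mul_le_mul_of_nonneg_right bern ha.le
        nlinarith [this]
      have h8' : |s*t| ^ q * Cr = s^q * K := by rw [h8, hK]; ring
      have hcs : c * s = q * (r/2)^(q-1) * (s*δ) * a := by rw [hc]; ring
      rw [hcs]
      linarith [hh, hA1, hA2, h8'.symm.le, h8'.le]
    have h10 : s^q = s * s^(q-1) := by
      have : s ^ ((1:ℝ) + (q-1)) = s ^ (1:ℝ) * s ^ (q-1) := Real.rpow_add hs0 1 (q-1)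
      rw [Real.rpow_one] at this
      rw [← this]; ring_nf
    rw [h10] at h9
    have : s * c ≤ s * (s^(q-1) * K) := by linarith [h9]
    exact (mul_le_mul_iff_right₀ hs0).1 this
  -- choose small s
  set s1 := (c / (2*(K+1))) ^ ((q-1)⁻¹) with hs1def
  have hs1pos : 0 < s1 := Real.rpow_pos_of_pos (by positivity) _
  set s := min 1 (min (r/(2*δ)) s1) with hsdef
  have hs0 : 0 < s := lt_min one_pos (lt_min (by positivity) hs1pos)
  have hsmain := main s hs0 (min_le_left _ _) (by
    have h1 : s ≤ r/(2*δ) := le_trans (min_le_right _ _) (min_le_left _ _)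
    calc s * δ ≤ (r/(2*δ)) * δ := mul_le_mul_of_nonneg_right h1 hδ0.le
      _ = r/2 := by field_simp)
  have h2 : s ^ (q-1) ≤ c/(2*(K+1)) := by
    have hle : s ≤ s1 := le_trans (min_le_right _ _) (min_le_right _ _)
    calc s^(q-1) ≤ s1^(q-1) := Real.rpow_le_rpow hs0.le hle (by linarith)
      _ = c/(2*(K+1)) := Real.rpow_inv_rpow (by positivity) (by linarith)
  have h3 : s^(q-1) * K ≤ (c/(2*(K+1))) * K := mul_le_mul_of_nonneg_right h2 hK0
  have h4 : (c/(2*(K+1))) * K < c := by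
    rw [div_mul_eq_mul_div, div_lt_iff₀ (by linarith)]
    have e : c*(2*(K+1)) = 2*(c*K) + 2*c := by ring
    have e2 : 0 ≤ c*K := mul_nonneg hc0.le hK0
    linarith
  linarith [hsmain, h3, h4]

theorem atom_pointwise_left_symmetric_Lp
    {S X : Type*} [MeasurableSpace S] {μ : Measure S} [μ.IsComplete]
    [NormedAddCommGroup X] [NormedSpace ℝ X] [CompleteSpace X]
    (hX : FrechetDiffNorm X)
    (p : ℝ≥0∞) [Fact (1 ≤ p)] (hp1 : 1 < p) (hptop : p < ⊤) (hp2 : p ≠ 2)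
    (f : Lp X p μ)
    (hatom : IsMeasAtom μ {s | (f : S → X) s ≠ 0})
    (hpt : ∀ s : S, LeftSymPt ((f : S → X) s)) :
    LeftSymPt f := by
  intro g hfg
  set A := {s | (f : S → X) s ≠ 0} with hAdef
  have hAm : MeasurableSet A := hatom.1
  have hμA0 : μ A ≠ 0 := (ne_of_gt hatom.2.1)
  have hp0 : p ≠ 0 := (lt_trans zero_lt_one hp1).ne'
  have hpt' : p ≠ ⊤ := hptop.ne
  set q := p.toReal with hqdef
  have hq1 : 1 < q := by
    rw [hqdef, ← ENNReal.toReal_one]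
    exact (ENNReal.toReal_lt_toReal one_ne_top hpt').mpr hp1
  have hq0 : 0 < q := lt_trans one_pos hq1
  set I : (S → X) → ℝ≥0∞ := fun φ => ∫⁻ s, (‖φ s‖₊ : ℝ≥0∞) ^ q ∂μ with hIdef
  have hnorm : ∀ h : Lp X p μ, ‖h‖ = ((I ⇑h) ^ (1/q)).toReal := by
    intro h
    rw [Lp.norm_def, eLpNorm_eq_lintegral_rpow_enorm_toReal hp0 hpt']; rfl
  have hIfin : ∀ h : Lp X p μ, I ⇑h ≠ ∞ := by
    intro h
    have h1 : eLpNorm (⇑h) p μ < ∞ := Lp.eLpNorm_lt_top h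
    rw [eLpNorm_eq_lintegral_rpow_enorm_toReal hp0 hpt'] at h1
    exact ((ENNReal.rpow_lt_top_iff_of_pos (by positivity)).1 h1).ne
  have hnormle : ∀ h1 h2 : Lp X p μ, ‖h1‖ ≤ ‖h2‖ ↔ I ⇑h1 ≤ I ⇑h2 := by
    intro h1 h2
    rw [hnorm, hnorm,
      ENNReal.toReal_le_toReal
        (ENNReal.rpow_ne_top_of_nonneg (by positivity) (hIfin h1))
        (ENNReal.rpow_ne_top_of_nonneg (by positivity) (hIfin h2)),
      ENNReal.rpow_le_rpow_iff (by positivity)]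
  have hf_meas : StronglyMeasurable (⇑f) := Lp.stronglyMeasurable f
  have hg_meas : StronglyMeasurable (⇑g) := Lp.stronglyMeasurable g
  -- μ A < ∞
  have hμAfin : μ A ≠ ⊤ := by
    set B : ℕ → Set S := fun n => {s | 1/((n:ℝ)+1) ≤ ‖(f : S → X) s‖} with hBdef
    have hBm : ∀ n, MeasurableSet (B n) := fun n =>
      hf_meas.norm.measurable measurableSet_Ici
    have hBA : ∀ n, B n ⊆ A := by
      intro n s hs
      simp only [hAdef, mem_setOf_eq]
      intro h0
      rw [hBdef] at hs
      simp only [mem_setOf_eq, h0, norm_zero] at hs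
      have : (0:ℝ) < 1/((n:ℝ)+1) := by positivity
      linarith
    have hcov : A ⊆ ⋃ n, B n := by
      intro s hs
      have h0 : 0 < ‖(f : S → X) s‖ := norm_pos_iff.2 hs
      obtain ⟨n, hn⟩ := exists_nat_gt (1/‖(f : S → X) s‖)
      refine mem_iUnion.2 ⟨n, ?_⟩
      show 1/((n:ℝ)+1) ≤ ‖(f : S → X) s‖
      rw [div_le_iff₀ (by positivity)]
      have h2 : 1/‖(f : S → X) s‖ < (n:ℝ)+1 := by linarith [hn]
      rw [div_lt_iff₀ h0] at h2
      linarith [h2]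
    obtain ⟨n, hn⟩ := atom_exists_full hatom hBA hBm hcov
    intro htop
    have hc0 : (0:ℝ) < 1/((n:ℝ)+1) := by positivity
    have hle : (ENNReal.ofReal (1/((n:ℝ)+1)))^q * μ A ≤ I ⇑f := by
      rw [← hn, ← setLIntegral_const]
      refine le_trans (setLIntegral_mono' (hBm n) ?_) (setLIntegral_le_lintegral _ _)
      intro s hs
      have h1 : ENNReal.ofReal (1/((n:ℝ)+1)) ≤ (‖(f : S → X) s‖₊ : ℝ≥0∞) := by
        rw [← enorm_eq_nnnorm, ← ofReal_norm]
        exact ENNReal.ofReal_le_ofReal hs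
      exact ENNReal.rpow_le_rpow h1 hq0.le
    rw [htop] at hle
    have hne0 : (ENNReal.ofReal (1/((n:ℝ)+1)))^q ≠ 0 :=
      (ENNReal.rpow_pos (ENNReal.ofReal_pos.2 hc0) ENNReal.ofReal_ne_top).ne'
    rw [ENNReal.mul_top hne0] at hle
    exact (hIfin f) (top_le_iff.1 hle)
  -- a.e. constants
  obtain ⟨x, hfA⟩ := ae_const_on_atom hf_meas hatom hμAfin
  obtain ⟨y, hgA⟩ := ae_const_on_atom hg_meas hatom hμAfin
  have hex : ∃ s0, s0 ∈ A ∧ (f : S → X) s0 = x := by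
    by_contra hcon
    push_neg at hcon
    rw [ae_iff] at hfA
    have hsub : A ⊆ {s | ¬(s ∈ A → (f : S → X) s = x)} := by
      intro s hs
      simp only [mem_setOf_eq]
      intro himp
      exact hcon s hs (himp hs)
    have := measure_mono (μ := μ) hsub
    rw [hfA] at this
    exact hμA0 (le_antisymm this (zero_le))
  obtain ⟨s0, hs0A, hs0x⟩ := hex
  have hx0 : x ≠ 0 := hs0x ▸ hs0A
  have hxsym : LeftSymPt x := hs0x ▸ hpt s0
  -- decomposition
  have decomp : ∀ (φ : S → X) (z : X), (∀ᵐ s ∂μ, s ∈ A → φ s = z) →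
      I φ = (‖z‖₊ : ℝ≥0∞)^q * μ A + ∫⁻ s in Aᶜ, (‖φ s‖₊ : ℝ≥0∞)^q ∂μ := by
    intro φ z hz
    rw [hIdef]
    simp only []
    rw [← lintegral_add_compl (fun s => (‖φ s‖₊:ℝ≥0∞)^q) hAm]
    congr 1
    rw [← setLIntegral_const A ((‖z‖₊:ℝ≥0∞)^q)]
    apply setLIntegral_congr_fun_ae hAm
    filter_upwards [hz] with s hs hsA
    rw [hs hsA]
  set C : ℝ≥0∞ := ∫⁻ s in Aᶜ, (‖(g : S → X) s‖₊ : ℝ≥0∞)^q ∂μ with hCdef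
  have hCfin : C ≠ ⊤ :=
    ne_top_of_le_ne_top (hIfin g) (setLIntegral_le_lintegral _ _)
  have hfzero : ∀ s ∈ Aᶜ, (f : S → X) s = 0 := fun s hs => not_not.1 hs
  have If_eq : I ⇑f = (‖x‖₊ : ℝ≥0∞)^q * μ A := by
    rw [decomp ⇑f x hfA]
    have h0 : ∫⁻ s in Aᶜ, (‖(f : S → X) s‖₊ : ℝ≥0∞)^q ∂μ
        = ∫⁻ _ in Aᶜ, (0:ℝ≥0∞) ∂μ := by
      apply setLIntegral_congr_fun hAm.compl
      intro s hs
      dsimp only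
      rw [hfzero s hs]
      simp [ENNReal.zero_rpow_of_pos hq0]
    rw [h0, lintegral_zero, add_zero]
  have Ig_eq : I ⇑g = (‖y‖₊ : ℝ≥0∞)^q * μ A + C := decomp ⇑g y hgA
  have hcoe : ∀ (h1 h2 : Lp X p μ) (t : ℝ),
      ⇑(h1 + t • h2) =ᵐ[μ] fun s => (h1 : S → X) s + t • (h2 : S → X) s := by
    intro h1 h2 t
    filter_upwards [Lp.coeFn_add h1 (t • h2), Lp.coeFn_smul t h2] with s ha hb
    rw [ha]
    simp only [Pi.add_apply]
    rw [hb]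
    simp
  have Iftg : ∀ t : ℝ, I ⇑(f + t • g)
      = (‖x + t • y‖₊ : ℝ≥0∞)^q * μ A + (‖t‖₊ : ℝ≥0∞)^q * C := by
    intro t
    have h1 : I ⇑(f + t • g) = I (fun s => (f : S → X) s + t • (g : S → X) s) :=
      lintegral_congr_ae (by filter_upwards [hcoe f g t] with s hs; rw [hs])
    rw [h1, decomp _ (x + t • y) (by
      filter_upwards [hfA, hgA] with s ha hb hsA
      rw [ha hsA, hb hsA])]
    congr 1
    have h2 : ∫⁻ s in Aᶜ, (‖(f : S → X) s + t • (g : S → X) s‖₊ : ℝ≥0∞)^q ∂μ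
        = ∫⁻ s in Aᶜ, (‖t‖₊ : ℝ≥0∞)^q * (‖(g : S → X) s‖₊ : ℝ≥0∞)^q ∂μ := by
      apply setLIntegral_congr_fun hAm.compl
      intro s hs
      dsimp only
      rw [hfzero s hs, zero_add, nnnorm_smul, ENNReal.coe_mul,
        ENNReal.mul_rpow_of_nonneg _ _ hq0.le]
    rw [h2, lintegral_const_mul' _ _
      (ENNReal.rpow_ne_top_of_nonneg hq0.le ENNReal.coe_ne_top)]
  have Igtf : ∀ t : ℝ, I ⇑(g + t • f)
      = (‖y + t • x‖₊ : ℝ≥0∞)^q * μ A + C := by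
    intro t
    have h1 : I ⇑(g + t • f) = I (fun s => (g : S → X) s + t • (f : S → X) s) :=
      lintegral_congr_ae (by filter_upwards [hcoe g f t] with s hs; rw [hs])
    rw [h1, decomp _ (y + t • x) (by
      filter_upwards [hfA, hgA] with s ha hb hsA
      rw [ha hsA, hb hsA])]
    congr 1
    apply setLIntegral_congr_fun hAm.compl
    intro s hs
    dsimp only
    rw [hfzero s hs, smul_zero, add_zero]
  -- forward: real inequality
  have hmuA_ne : (‖x‖₊ : ℝ≥0∞)^q * μ A ≠ ⊤ :=
    ENNReal.mul_ne_top (ENNReal.rpow_ne_top_of_nonneg hq0.le ENNReal.coe_ne_top) hμAfin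
  have ha : 0 < (μ A).toReal := ENNReal.toReal_pos hμA0 hμAfin
  have hfwd : ∀ t : ℝ, ‖x‖^q * (μ A).toReal
      ≤ ‖x + t • y‖^q * (μ A).toReal + |t|^q * C.toReal := by
    intro t
    have h1 := (hnormle f (f + t • g)).1 (hfg t)
    rw [If_eq, Iftg t] at h1
    have hrhs_ne : (‖x + t • y‖₊ : ℝ≥0∞)^q * μ A + (‖t‖₊ : ℝ≥0∞)^q * C ≠ ⊤ :=
      ENNReal.add_ne_top.2
        ⟨ENNReal.mul_ne_top (ENNReal.rpow_ne_top_of_nonneg hq0.le ENNReal.coe_ne_top) hμAfin,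
         ENNReal.mul_ne_top (ENNReal.rpow_ne_top_of_nonneg hq0.le ENNReal.coe_ne_top) hCfin⟩
    have h2 := ENNReal.toReal_mono hrhs_ne h1
    rw [ENNReal.toReal_add
        (ENNReal.mul_ne_top (ENNReal.rpow_ne_top_of_nonneg hq0.le ENNReal.coe_ne_top) hμAfin)
        (ENNReal.mul_ne_top (ENNReal.rpow_ne_top_of_nonneg hq0.le ENNReal.coe_ne_top) hCfin),
      ENNReal.toReal_mul, ENNReal.toReal_mul, ENNReal.toReal_mul,
      ← ENNReal.toReal_rpow, ← ENNReal.toReal_rpow, ← ENNReal.toReal_rpow] at h2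
    simpa [coe_nnnorm, Real.norm_eq_abs] using h2
  have hxy : BJOrth x y :=
    key_real hq1 hx0 ha (ENNReal.toReal_nonneg) hfwd
  have hyx : BJOrth y x := hxsym y hxy
  -- conclude
  intro t
  apply (hnormle g (g + t • f)).2
  rw [Ig_eq, Igtf t]
  have hnn : (‖y‖₊ : ℝ≥0∞) ≤ (‖y + t • x‖₊ : ℝ≥0∞) := by
    rw [← enorm_eq_nnnorm, ← enorm_eq_nnnorm, ← ofReal_norm, ← ofReal_norm]
    exact ENNReal.ofReal_le_ofReal (hyx t)
  exact add_le_add_left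
    (mul_le_mul_left (ENNReal.rpow_le_rpow hnn hq0.le) _) _
end
end

section
/- Let (S, μ) be a complete non-atomic σ-finite measure space and X a real Banach space whose norm is Fréchet differentiable at every nonzero point. Then for any p with 1 ≤ p < ∞ and p ≠ 2, the space L^p(μ, X) has no nonzero left symmetric point and no nonzero right symmetric point with respect to Birkhoff-James orthogonality. -/
open MeasureTheory ENNReal

noncomputable section

open Set Filter

lemma exists_lt_of_hasDerivAt_ne {g : ℝ → ℝ} {D : ℝ} (hg : HasDerivAt g D 0) (hD : D ≠ 0) :
    ∃ t, g t < g 0 := by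
  by_contra h
  push_neg at h
  exact hD ((IsLocalMin.hasDerivAt_eq_zero (Filter.Eventually.of_forall h) hg))

lemma hasDerivAt_abs_rpow_pos {q c : ℝ} (hc : 0 < c) :
    HasDerivAt (fun t : ℝ => |c + t| ^ q) (q * c ^ (q - 1)) 0 := by
  have hc0 : c + 0 ≠ 0 := by simpa using hc.ne'
  have h1 : HasDerivAt (fun t : ℝ => (c + t) ^ q) (q * c ^ (q - 1)) 0 := by
    have hinner : HasDerivAt (fun t : ℝ => c + t) 1 0 := (hasDerivAt_id (0:ℝ)).const_add c
    have houter : HasDerivAt (fun x : ℝ => x ^ q) (q * (c + 0) ^ (q - 1)) ((fun t : ℝ => c + t) 0) :=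
      Real.hasDerivAt_rpow_const (Or.inl hc0)
    have := houter.comp (0:ℝ) hinner
    simpa [Function.comp_def] using this
  apply h1.congr_of_eventuallyEq
  have hev : ∀ᶠ t in nhds (0:ℝ), 0 < c + t := by
    have hcont : Continuous (fun t : ℝ => c + t) := continuous_const.add continuous_id
    have := hcont.continuousAt (x := (0:ℝ))
    exact this.eventually (eventually_gt_nhds (by simpa using hc))
  exact hev.mono fun t ht => by simp [abs_of_pos ht]

lemma hasDerivAt_abs_rpow_neg {q c : ℝ} (hc : c < 0) :
    HasDerivAt (fun t : ℝ => |c + t| ^ q) (-(q * |c| ^ (q - 1))) 0 := by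
  have h1 := hasDerivAt_abs_rpow_pos (q := q) (neg_pos.2 hc)
  have h1' : HasDerivAt (fun u : ℝ => |(-c) + u| ^ q) (q * (-c) ^ (q - 1)) ((fun t : ℝ => -t) 0) := by
    simpa using h1
  have h2 : HasDerivAt (fun t : ℝ => -t) (-1 : ℝ) 0 := (hasDerivAt_id (0:ℝ)).neg
  have h3 := h1'.comp (0:ℝ) h2
  have h4 : (fun t : ℝ => |(-c) + (-t)| ^ q) = fun t : ℝ => |c + t| ^ q := by
    funext t
    rw [show (-c) + (-t) = -(c + t) by ring, abs_neg]
  have h5 : HasDerivAt (fun t : ℝ => |(-c) + (-t)| ^ q) (q * (-c) ^ (q - 1) * (-1)) 0 := h3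
  rw [h4] at h5
  have : q * (-c) ^ (q - 1) * (-1) = -(q * |c| ^ (q - 1)) := by
    rw [abs_of_neg hc]; ring
  rwa [this] at h5

lemma hasDerivAt_comb_pos {q c k : ℝ} (hc : 0 < c) :
    HasDerivAt (fun t : ℝ => |c + t * k| ^ q) (q * c ^ (q - 1) * k) 0 := by
  have h1 : HasDerivAt (fun u : ℝ => |c + u| ^ q) (q * c ^ (q - 1)) ((fun t : ℝ => t * k) 0) := by
    simpa using hasDerivAt_abs_rpow_pos (q := q) hc
  have h2 : HasDerivAt (fun t : ℝ => t * k) k 0 := hasDerivAt_mul_const k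
  simpa [Function.comp_def] using h1.comp (0:ℝ) h2

lemma hasDerivAt_comb_neg {q c k : ℝ} (hc : c < 0) :
    HasDerivAt (fun t : ℝ => |c + t * k| ^ q) (-(q * |c| ^ (q - 1) * k)) 0 := by
  have h1 : HasDerivAt (fun u : ℝ => |c + u| ^ q) (-(q * |c| ^ (q - 1))) ((fun t : ℝ => t * k) 0) := by
    simpa using hasDerivAt_abs_rpow_neg (q := q) hc
  have h2 : HasDerivAt (fun t : ℝ => t * k) k 0 := hasDerivAt_mul_const k
  have := h1.comp (0:ℝ) h2
  simpa [Function.comp_def, neg_mul] using this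

lemma bernoulli_abs {q : ℝ} (hq : 1 ≤ q) (s : ℝ) : 1 + q * s ≤ |1 + s| ^ q := by
  rcases le_or_gt (-1) s with hs | hs
  · have h := one_add_mul_self_le_rpow_one_add hs hq
    rwa [abs_of_nonneg (by linarith)]
  · have h1 : 0 ≤ |1 + s| ^ q := Real.rpow_nonneg (abs_nonneg _) q
    nlinarith [hq, hs]

lemma bernoulli_pos {q c : ℝ} (hq : 1 ≤ q) (hc : 0 < c) (s : ℝ) :
    c ^ q + q * c ^ (q - 1) * s ≤ |c + s| ^ q := by
  have h := bernoulli_abs hq (s / c)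
  have hcq : (0:ℝ) < c ^ q := Real.rpow_pos_of_pos hc q
  have hkey : |c + s| ^ q = c ^ q * |1 + s / c| ^ q := by
    rw [show c + s = c * (1 + s / c) by field_simp, abs_mul, abs_of_pos hc,
      Real.mul_rpow hc.le (abs_nonneg _)]
  have hc1 : c ^ (q - 1) = c ^ q / c := by
    rw [Real.rpow_sub hc, Real.rpow_one]
  rw [hkey, hc1]
  calc c ^ q + q * (c ^ q / c) * s = c ^ q * (1 + q * (s / c)) := by field_simp
    _ ≤ c ^ q * |1 + s / c| ^ q := by
        exact mul_le_mul_of_nonneg_left h hcq.le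

lemma bernoulli_neg {q c : ℝ} (hq : 1 ≤ q) (hc : c < 0) (s : ℝ) :
    |c| ^ q - q * |c| ^ (q - 1) * s ≤ |c + s| ^ q := by
  have h := bernoulli_pos hq (neg_pos.2 hc) (-s)
  have h1 : |(-c) + (-s)| = |c + s| := by
    rw [show (-c) + (-s) = -(c + s) by ring, abs_neg]
  rw [h1] at h
  rw [abs_of_neg hc]
  nlinarith [h]

lemma rpow_ne_rpow {β α e : ℝ} (hβ : 0 < β) (hβα : β < α) (he : e ≠ 0) : β ^ e ≠ α ^ e := by
  rcases lt_or_gt_of_ne he with h | h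
  · exact (Real.rpow_lt_rpow_of_neg hβ hβα h).ne'
  · exact (Real.rpow_lt_rpow hβ.le hβα h).ne

lemma base_ne_aux {β α e : ℝ} (hβ : 0 < β) (hβα : β < α) (he : e ≠ 0) :
    β ^ (e + 1) * α ≠ α ^ (e + 1) * β := by
  have hα : 0 < α := lt_trans hβ hβα
  have h1 : β ^ (e + 1) = β ^ e * β := by rw [Real.rpow_add hβ, Real.rpow_one]
  have h2 : α ^ (e + 1) = α ^ e * α := by rw [Real.rpow_add hα, Real.rpow_one]
  rw [h1, h2]
  intro hcon
  apply rpow_ne_rpow hβ hβα he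
  have hβα0 : β * α ≠ 0 := by positivity
  have h3 : β ^ e * (β * α) = α ^ e * (β * α) := by linear_combination hcon
  exact mul_right_cancel₀ hβα0 h3

lemma not_isMeasAtom_withDensity {S : Type*} [MeasurableSpace S] (μ : Measure S) [SigmaFinite μ]
    (hna : ∀ A : Set S, ¬ IsMeasAtom μ A) (d : S → ℝ≥0∞)
    (A : Set S) (hfin : μ.withDensity d A ≠ ∞) :
    ¬ IsMeasAtom (μ.withDensity d) A := by
  set ν := μ.withDensity d with hν
  rintro ⟨hA, hA0, hatom⟩
  set c := ν A with hc
  have hc0 : c ≠ 0 := hA0.ne'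
  have hac : ν ≪ μ := withDensity_absolutelyContinuous μ d
  -- find a piece of finite μ-measure carrying full ν-mass
  have h1 : ∃ n, ν (A ∩ spanningSets μ n) = c := by
    by_contra h
    push_neg at h
    have hall : ∀ n, ν (A ∩ spanningSets μ n) = 0 := fun n => by
      rcases hatom _ inter_subset_left (hA.inter (measurableSet_spanningSets μ n)) with h0 | h0
      · exact h0
      · exact absurd h0 (h n)
    have hA' : A = ⋃ n, A ∩ spanningSets μ n := by
      rw [← inter_iUnion, iUnion_spanningSets, inter_univ]
    have : ν A = 0 := by
      rw [hA']
      exact le_antisymm ((measure_iUnion_le _).trans (by simp [hall])) (zero_le)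
    exact hc0 (hc.trans this)
  obtain ⟨n, hn⟩ := h1
  set A₁ := A ∩ spanningSets μ n with hA₁def
  have hA₁m : MeasurableSet A₁ := hA.inter (measurableSet_spanningSets μ n)
  have hA₁sub : A₁ ⊆ A := inter_subset_left
  have hμA₁ : μ A₁ < ∞ :=
    lt_of_le_of_lt (measure_mono inter_subset_right) (measure_spanningSets_lt_top μ n)
  -- the set of μ-measures of full ν-mass subsets
  set Mset : Set ℝ≥0∞ := {r | ∃ B, B ⊆ A₁ ∧ MeasurableSet B ∧ ν B = c ∧ μ B = r} with hMdef
  have hMne : Mset.Nonempty := ⟨μ A₁, A₁, subset_rfl, hA₁m, hn, rfl⟩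
  set m := sInf Mset with hm
  obtain ⟨r, -, hrtend, hrmem⟩ := exists_seq_tendsto_sInf hMne (OrderBot.bddBelow Mset)
  choose B hBsub hBm hBν hBμ using fun i => hrmem i
  -- intersections keep full mass
  have hpair : ∀ B₁ B₂ : Set S, B₁ ⊆ A → B₂ ⊆ A → MeasurableSet B₁ → MeasurableSet B₂ →
      ν B₁ = c → ν B₂ = c → ν (B₁ ∩ B₂) = c := by
    intro B₁ B₂ h₁ h₂ m₁ m₂ e₁ e₂
    rcases hatom _ ((diff_subset).trans h₁) (m₁.diff m₂) with h0 | hcc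
    · have hsum : ν (B₁ ∩ B₂) + ν (B₁ \ B₂) = ν B₁ := measure_inter_add_diff B₁ m₂
      rw [h0, add_zero] at hsum
      rw [hsum, e₁]
    · exfalso
      have hub : ν (B₂ ∪ (B₁ \ B₂)) ≤ c := by
        rw [hc]
        exact measure_mono (union_subset h₂ ((diff_subset).trans h₁))
      have hdisj : Disjoint B₂ (B₁ \ B₂) := disjoint_sdiff_self_right
      rw [measure_union' hdisj m₂, e₂, hcc] at hub
      exact (ENNReal.lt_add_right hfin hc0).not_ge hub
  -- partial intersections
  have hCn : ∀ i, ν (⋂ j ≤ i, B j) = c ∧ MeasurableSet (⋂ j ≤ i, B j) ∧ (⋂ j ≤ i, B j) ⊆ A₁ := by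
    intro i
    induction i with
    | zero =>
      have h0 : (⋂ j ≤ 0, B j) = B 0 := by ext x; simp [Nat.le_zero]
      rw [h0]; exact ⟨hBν 0, hBm 0, hBsub 0⟩
    | succ k ih =>
      have hstep : (⋂ j ≤ k + 1, B j) = (⋂ j ≤ k, B j) ∩ B (k + 1) := by
        ext x; simp only [mem_iInter, mem_inter_iff, Nat.le_add_one_iff]
        constructor
        · intro h; exact ⟨fun j hj => h j (Or.inl hj), h (k+1) (Or.inr rfl)⟩
        · rintro ⟨h1, h2⟩ j (hj | rfl)
          exacts [h1 j hj, h2]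
      rw [hstep]
      refine ⟨hpair _ _ (ih.2.2.trans hA₁sub) ((hBsub (k+1)).trans hA₁sub) ih.2.1 (hBm (k+1))
        ih.1 (hBν (k+1)), ih.2.1.inter (hBm (k+1)), (inter_subset_left).trans ih.2.2⟩
  set C := ⋂ i, B i with hCdef
  have hCm : MeasurableSet C := MeasurableSet.iInter fun i => hBm i
  have hCsub : C ⊆ A₁ := (iInter_subset B 0).trans (hBsub 0)
  have hνC : ν C = c := by
    have htt := tendsto_measure_iInter_le (μ := ν) (f := B)
      (fun i => (hBm i).nullMeasurableSet) ⟨0, by rw [hBν 0]; exact hfin⟩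
    have heq : (fun i => ν (⋂ j ≤ i, B j)) = fun _ => c := funext fun i => (hCn i).1
    rw [heq] at htt
    exact (tendsto_nhds_unique tendsto_const_nhds htt).symm ▸ rfl
  have hμC_le : μ C ≤ m := by
    refine ge_of_tendsto' hrtend fun i => ?_
    rw [← hBμ i]
    exact measure_mono (iInter_subset B i)
  have hμC_ge : m ≤ μ C := sInf_le ⟨C, hCsub, hCm, hνC, rfl⟩
  have hμC : μ C = m := le_antisymm hμC_le hμC_ge
  have hμC0 : μ C ≠ 0 := fun h => hc0 (by rw [← hνC, hac h])
  have hμCt : μ C ≠ ∞ := ((measure_mono hCsub).trans_lt hμA₁).ne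
  -- C is not a μ-atom
  have := hna C
  rw [IsMeasAtom] at this
  push_neg at this
  obtain ⟨B', hB'sub, hB'm, hB'0, hB'ne⟩ := this hCm (pos_iff_ne_zero.2 hμC0)
  have hB'fin : μ B' ≠ ∞ := ((measure_mono hB'sub).trans_lt (lt_top_iff_ne_top.2 hμCt)).ne
  rcases hatom B' (hB'sub.trans (hCsub.trans hA₁sub)) hB'm with h0 | hcc
  · -- ν B' = 0, use C \ B'
    have hν' : ν (C \ B') = c := by rw [measure_diff_null h0, hνC]
    have hμ' : μ (C \ B') < m := by
      rw [measure_diff hB'sub hB'm.nullMeasurableSet hB'fin, ← hμC]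
      exact ENNReal.sub_lt_self hμCt hμC0 hB'0
    have hmem : μ (C \ B') ∈ Mset := ⟨C \ B', (diff_subset).trans hCsub, hCm.diff hB'm, hν', rfl⟩
    exact absurd (sInf_le hmem) (not_le.2 hμ')
  · have hμ' : μ B' < m := by
      rw [← hμC]
      exact lt_of_le_of_ne (measure_mono hB'sub) hB'ne
    have hmem : μ B' ∈ Mset := ⟨B', hB'sub.trans hCsub, hB'm, hcc, rfl⟩
    exact absurd (sInf_le hmem) (not_le.2 hμ')

lemma exists_unbalanced {S : Type*} [MeasurableSpace S] (μ : Measure S) [SigmaFinite μ]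
    (hna : ∀ A : Set S, ¬ IsMeasAtom μ A) (d : S → ℝ≥0∞)
    (h0 : μ.withDensity d Set.univ ≠ 0) (htop : μ.withDensity d Set.univ ≠ ∞) :
    ∃ E : Set S, MeasurableSet E ∧ μ.withDensity d Eᶜ ≠ 0 ∧
      μ.withDensity d Eᶜ < μ.withDensity d E := by
  set ν := μ.withDensity d with hν
  set T := ν Set.univ with hT
  have hfin : ∀ E : Set S, ν E ≠ ∞ := fun E => ((measure_mono (subset_univ E)).trans_lt
    (lt_top_iff_ne_top.2 htop)).ne
  have key : ∃ E : Set S, MeasurableSet E ∧ ν E ≠ 0 ∧ ν E ≠ T / 2 ∧ ν E ≠ T := by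
    by_contra h
    push_neg at h
    have trich : ∀ E : Set S, MeasurableSet E → ν E = 0 ∨ ν E = T / 2 ∨ ν E = T := by
      intro E hE
      by_cases h1 : ν E = 0
      · exact Or.inl h1
      by_cases h2 : ν E = T / 2
      · exact Or.inr (Or.inl h2)
      · exact Or.inr (Or.inr (h E hE h1 h2))
    have hhalf0 : T / 2 ≠ 0 := by
      simp only [ne_eq, ENNReal.div_eq_zero_iff, not_or]
      exact ⟨h0, ofNat_ne_top⟩
    have hhalflt : T / 2 < T := ENNReal.half_lt_self h0 htop
    by_cases hex : ∃ E : Set S, MeasurableSet E ∧ ν E = T / 2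
    · obtain ⟨E, hEm, hEhalf⟩ := hex
      apply not_isMeasAtom_withDensity μ hna d E (hfin E)
      refine ⟨hEm, ?_, ?_⟩
      · rw [hEhalf]; exact pos_iff_ne_zero.2 hhalf0
      · intro B hBsub hBm
        rcases trich B hBm with h' | h' | h'
        · exact Or.inl h'
        · exact Or.inr (h'.trans hEhalf.symm)
        · exfalso
          have : ν B ≤ T / 2 := hEhalf ▸ measure_mono hBsub
          rw [h'] at this
          exact hhalflt.not_ge this
    · push_neg at hex
      apply not_isMeasAtom_withDensity μ hna d Set.univ (hfin _)
      refine ⟨MeasurableSet.univ, pos_iff_ne_zero.2 h0, ?_⟩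
      intro B _ hBm
      rcases trich B hBm with h' | h' | h'
      · exact Or.inl h'
      · exact absurd h' (hex B hBm)
      · exact Or.inr h'
  obtain ⟨E, hEm, hE0, hEhalf, hET⟩ := key
  have hsum : ν E + ν Eᶜ = T := by rw [hT, hν]; exact measure_add_measure_compl hEm
  have hEc0 : ν Eᶜ ≠ 0 := by
    intro h
    rw [h, add_zero] at hsum
    exact hET hsum
  have hne : ν Eᶜ ≠ ν E := by
    intro h
    apply hEhalf
    rw [h] at hsum
    exact (ENNReal.eq_div_iff two_ne_zero ofNat_ne_top).2 (by rw [two_mul, hsum])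
  rcases lt_or_gt_of_ne hne with hlt | hgt
  · exact ⟨E, hEm, hEc0, hlt⟩
  · refine ⟨Eᶜ, hEm.compl, ?_, ?_⟩
    · rw [compl_compl]; exact hE0
    · rw [compl_compl]; exact hgt

theorem no_symmetric_points_nonatomic_Lp
    {S X : Type*} [MeasurableSpace S] {μ : Measure S} [μ.IsComplete] [SigmaFinite μ]
    [NormedAddCommGroup X] [NormedSpace ℝ X] [CompleteSpace X]
    (hX : FrechetDiffNorm X)
    (hna : ∀ A : Set S, ¬ IsMeasAtom μ A)
    (p : ℝ≥0∞) [Fact (1 ≤ p)] (hp1 : 1 ≤ p) (hptop : p < ⊤) (hp2 : p ≠ 2)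
    (f : Lp X p μ) (hf : f ≠ 0) :
    ¬ LeftSymPt f ∧ ¬ RightSymPt f := by
  classical
  have hp0 : p ≠ 0 := fun h => by simp [h] at hp1
  have hpt : p ≠ ∞ := hptop.ne
  obtain ⟨q, hqdef⟩ : ∃ q : ℝ, p.toReal = q := ⟨_, rfl⟩
  have hq1 : 1 ≤ q := by
    rw [← hqdef]
    simpa using ENNReal.toReal_mono hpt hp1
  have hq0 : 0 < q := lt_of_lt_of_le one_pos hq1
  have hq2 : q ≠ 2 := by
    intro h
    apply hp2
    rw [← ENNReal.ofReal_toReal hpt, hqdef, h]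
    norm_num
  have hfmem := Lp.memLp f
  have hfm := Lp.aestronglyMeasurable f
  set g : S → X := hfm.mk ⇑f with hgdef
  have hgm : StronglyMeasurable g := hfm.stronglyMeasurable_mk
  have hfg : ⇑f =ᵐ[μ] g := hfm.ae_eq_mk
  set d : S → ℝ≥0∞ := fun s => (‖g s‖₊ : ℝ≥0∞) ^ q with hddef
  have hdm : Measurable d := hgm.enorm.pow_const q
  set ν : Measure S := μ.withDensity d with hνdef
  have hint : ∀ E : Set S, MeasurableSet E → ν E = ∫⁻ s in E, d s ∂μ :=
    fun E hE => withDensity_apply d hE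
  have hT : ν Set.univ = (eLpNorm (⇑f) p μ) ^ q := by
    rw [hint Set.univ MeasurableSet.univ, Measure.restrict_univ,
      eLpNorm_eq_lintegral_rpow_enorm_toReal hp0 hpt, hqdef, ← ENNReal.rpow_mul,
      one_div, inv_mul_cancel₀ hq0.ne', ENNReal.rpow_one]
    refine lintegral_congr_ae (hfg.mono fun s hs => ?_)
    show (‖g s‖₊ : ℝ≥0∞) ^ q = (‖f s‖₊ : ℝ≥0∞) ^ q
    rw [hs]
  have hsn0 : eLpNorm (⇑f) p μ ≠ 0 := by
    intro h
    apply hf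
    rw [Lp.eq_zero_iff_ae_eq_zero]
    exact (eLpNorm_eq_zero_iff hfm hp0).1 h
  have hsnt : eLpNorm (⇑f) p μ ≠ ∞ := Lp.eLpNorm_ne_top f
  have hT0 : ν Set.univ ≠ 0 := by
    rw [hT]
    intro h
    rcases ENNReal.rpow_eq_zero_iff.1 h with ⟨h1, _⟩ | ⟨_, h2⟩
    · exact hsn0 h1
    · exact absurd h2 (not_lt.2 hq0.le)
  have hTt : ν Set.univ ≠ ∞ := by
    rw [hT]; exact ENNReal.rpow_ne_top_of_nonneg hq0.le hsnt
  obtain ⟨E, hEm, hEc0, hltE⟩ := exists_unbalanced μ hna d hT0 hTt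
  have hνEt : ν E ≠ ∞ :=
    ((measure_mono (Set.subset_univ E)).trans_lt (lt_top_iff_ne_top.2 hTt)).ne
  have hνEct : ν Eᶜ ≠ ∞ :=
    ((measure_mono (Set.subset_univ Eᶜ)).trans_lt (lt_top_iff_ne_top.2 hTt)).ne
  set α : ℝ := (ν E).toReal with hαdef
  set β : ℝ := (ν Eᶜ).toReal with hβdef
  have hβ0 : 0 < β := ENNReal.toReal_pos hEc0 hνEct
  have hβα : β < α := (ENNReal.toReal_lt_toReal hνEct hνEt).2 hltE
  have hα0 : 0 < α := hβ0.trans hβα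
  -- the two-block functions
  set w : ℝ → ℝ → S → X := fun a b s => if s ∈ E then a • g s else b • g s with hwdef
  have hwsm : ∀ a b : ℝ, StronglyMeasurable (w a b) := by
    intro a b
    exact StronglyMeasurable.ite hEm (hgm.const_smul a) (hgm.const_smul b)
  have hwmem : ∀ a b : ℝ, MemLp (w a b) p μ := by
    intro a b
    have hgmem : MemLp g p μ := hfmem.ae_eq hfg
    have hbound : MemLp (fun s => (|a| + |b|) • g s) p μ := hgmem.const_smul _
    refine hbound.of_le (hwsm a b).aestronglyMeasurable (Filter.Eventually.of_forall fun s => ?_)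
    have habs : ‖(|a| + |b|)‖ = |a| + |b| := by
      rw [Real.norm_eq_abs, abs_of_nonneg (by positivity)]
    by_cases hs : s ∈ E
    · simp only [hwdef, if_pos hs]
      rw [norm_smul, norm_smul, habs, Real.norm_eq_abs]
      nlinarith [norm_nonneg (g s), abs_nonneg a, abs_nonneg b]
    · simp only [hwdef, if_neg hs]
      rw [norm_smul, norm_smul, habs, Real.norm_eq_abs]
      nlinarith [norm_nonneg (g s), abs_nonneg a, abs_nonneg b]
  set W : ℝ → ℝ → Lp X p μ := fun a b => (hwmem a b).toLp (w a b) with hWdef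
  have hWcoe : ∀ a b : ℝ, ⇑(W a b) =ᵐ[μ] w a b := fun a b => (hwmem a b).coeFn_toLp
  have hWcomb : ∀ a b c e t : ℝ, W a b + t • W c e = W (a + t * c) (b + t * e) := by
    intro a b c e t
    apply Lp.ext
    filter_upwards [Lp.coeFn_add (W a b) (t • W c e), Lp.coeFn_smul t (W c e),
      hWcoe a b, hWcoe c e, hWcoe (a + t * c) (b + t * e)] with s h1 h2 h3 h4 h5
    rw [h1]
    simp only [Pi.add_apply]
    rw [h2]
    simp only [Pi.smul_apply]
    rw [h3, h4, h5]
    simp only [hwdef]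
    split_ifs <;> rw [smul_smul, ← add_smul]
  have hfW : f = W 1 1 := by
    apply Lp.ext
    filter_upwards [hfg, hWcoe 1 1] with s h1 h2
    rw [h1, h2]
    simp only [hwdef]
    split_ifs <;> rw [one_smul]
  have hWnorm : ∀ a b : ℝ, ‖W a b‖ ^ q = |a| ^ q * α + |b| ^ q * β := by
    intro a b
    have hsplit : (∫⁻ s, (‖w a b s‖₊ : ℝ≥0∞) ^ q ∂μ)
        = ENNReal.ofReal (|a| ^ q) * ν E + ENNReal.ofReal (|b| ^ q) * ν Eᶜ := by
      rw [← lintegral_add_compl (fun s => (‖w a b s‖₊ : ℝ≥0∞) ^ q) hEm]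
      have hER : ∫⁻ s in E, (‖w a b s‖₊ : ℝ≥0∞) ^ q ∂μ = ENNReal.ofReal (|a| ^ q) * ν E := by
        have hcong : ∀ᵐ s ∂(μ.restrict E), (‖w a b s‖₊ : ℝ≥0∞) ^ q
            = ENNReal.ofReal (|a| ^ q) * d s := by
          filter_upwards [ae_restrict_mem hEm] with s hs
          simp only [hwdef, if_pos hs, hddef]
          rw [nnnorm_smul, ENNReal.coe_mul, ENNReal.mul_rpow_of_nonneg _ _ hq0.le,
            (show ((‖a‖₊ : ℝ≥0∞)) = ENNReal.ofReal |a| from Real.enorm_eq_ofReal_abs a), ENNReal.ofReal_rpow_of_nonneg (abs_nonneg a) hq0.le]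
        rw [lintegral_congr_ae hcong, lintegral_const_mul _ hdm, ← hint E hEm]
      have hEcR : ∫⁻ s in Eᶜ, (‖w a b s‖₊ : ℝ≥0∞) ^ q ∂μ = ENNReal.ofReal (|b| ^ q) * ν Eᶜ := by
        have hcong : ∀ᵐ s ∂(μ.restrict Eᶜ), (‖w a b s‖₊ : ℝ≥0∞) ^ q
            = ENNReal.ofReal (|b| ^ q) * d s := by
          filter_upwards [ae_restrict_mem hEm.compl] with s hs
          simp only [hwdef, if_neg (Set.notMem_of_mem_compl hs), hddef]
          rw [nnnorm_smul, ENNReal.coe_mul, ENNReal.mul_rpow_of_nonneg _ _ hq0.le,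
            (show ((‖b‖₊ : ℝ≥0∞)) = ENNReal.ofReal |b| from Real.enorm_eq_ofReal_abs b), ENNReal.ofReal_rpow_of_nonneg (abs_nonneg b) hq0.le]
        rw [lintegral_congr_ae hcong, lintegral_const_mul _ hdm, ← hint Eᶜ hEm.compl]
      rw [hER, hEcR]
    rw [Lp.norm_def, eLpNorm_congr_ae (hWcoe a b), eLpNorm_eq_lintegral_rpow_enorm_toReal hp0 hpt,
      hqdef, (show (∫⁻ s, ‖w a b s‖ₑ ^ q ∂μ)
        = ENNReal.ofReal (|a| ^ q) * ν E + ENNReal.ofReal (|b| ^ q) * ν Eᶜ from hsplit), ENNReal.toReal_rpow, ← ENNReal.rpow_mul, one_div,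
      inv_mul_cancel₀ hq0.ne', ENNReal.rpow_one,
      ENNReal.toReal_add (ENNReal.mul_ne_top ENNReal.ofReal_ne_top hνEt)
        (ENNReal.mul_ne_top ENNReal.ofReal_ne_top hνEct),
      ENNReal.toReal_mul, ENNReal.toReal_mul,
      ENNReal.toReal_ofReal (Real.rpow_nonneg (abs_nonneg a) q),
      ENNReal.toReal_ofReal (Real.rpow_nonneg (abs_nonneg b) q)]
  have hle : ∀ a b c e : ℝ, |a| ^ q * α + |b| ^ q * β ≤ |c| ^ q * α + |e| ^ q * β →
      ‖W a b‖ ≤ ‖W c e‖ := by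
    intro a b c e h
    by_contra hcon
    push_neg at hcon
    have h2 := Real.rpow_lt_rpow (norm_nonneg _) hcon hq0
    rw [hWnorm, hWnorm] at h2
    linarith
  have hltW : ∀ a b c e : ℝ, |a| ^ q * α + |b| ^ q * β < |c| ^ q * α + |e| ^ q * β →
      ‖W a b‖ < ‖W c e‖ := by
    intro a b c e h
    by_contra hcon
    push_neg at hcon
    have h2 := Real.rpow_le_rpow (norm_nonneg _) hcon hq0.le
    rw [hWnorm, hWnorm] at h2
    linarith
  constructor
  · -- no left symmetry
    intro hsym
    have hbj : BJOrth f (W β (-α)) := by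
      intro t
      rw [hfW, hWcomb 1 1 β (-α) t]
      apply hle
      have h1 := bernoulli_abs hq1 (t * β)
      have h2 := bernoulli_abs hq1 (t * (-α))
      rw [abs_one]
      calc (1:ℝ) ^ q * α + 1 ^ q * β
          = (1 + q * (t * β)) * α + (1 + q * (t * (-α))) * β := by
            rw [Real.one_rpow]; ring
        _ ≤ |1 + t * β| ^ q * α + |1 + t * (-α)| ^ q * β :=
            add_le_add (mul_le_mul_of_nonneg_right h1 hα0.le)
              (mul_le_mul_of_nonneg_right h2 hβ0.le)
    have hback := hsym (W β (-α)) hbj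
    have hd1 := (hasDerivAt_comb_pos (q := q) (k := (1:ℝ)) hβ0).mul_const α
    have hd2 := (hasDerivAt_comb_neg (q := q) (k := (1:ℝ)) (neg_lt_zero.2 hα0)).mul_const β
    have hD := hd1.add hd2
    have hDne : q * β ^ (q - 1) * 1 * α + -(q * |(-α)| ^ (q - 1) * 1) * β ≠ 0 := by
      rw [abs_neg, abs_of_pos hα0]
      intro hcon
      have h6 : q * (β ^ (q - 1) * α) = q * (α ^ (q - 1) * β) := by linear_combination hcon
      have h7 := mul_left_cancel₀ hq0.ne' h6
      apply base_ne_aux hβ0 hβα (show q - 2 ≠ 0 by intro h; apply hq2; linarith)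
      rw [show q - 2 + 1 = q - 1 by ring]
      exact h7
    obtain ⟨t₀, ht₀⟩ := exists_lt_of_hasDerivAt_ne hD hDne
    have ht₀' : |β + t₀ * 1| ^ q * α + |(-α) + t₀ * 1| ^ q * β
        < |β + 0 * 1| ^ q * α + |(-α) + 0 * 1| ^ q * β := ht₀
    simp only [zero_mul, add_zero] at ht₀'
    have h2 := hback t₀
    rw [hfW, hWcomb β (-α) 1 1 t₀] at h2
    exact absurd h2 (not_le.2 (hltW _ _ β (-α) ht₀'))
  · -- no right symmetry
    intro hsym
    rcases eq_or_lt_of_le hq1 with hqe | hqgt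
    · -- q = 1
      have hbj : BJOrth (W 0 1) f := by
        intro t
        rw [hfW, hWcomb 0 1 1 1 t]
        apply hle
        rw [← hqe]
        simp only [Real.rpow_one, abs_zero, zero_mul, zero_add, mul_one, abs_one, one_mul]
        have habs : (1:ℝ) ≤ |1 + t| + |t| := by
          calc (1:ℝ) = |(1 + t) + (-t)| := by norm_num
            _ ≤ |1 + t| + |(-t)| := abs_add_le _ _
            _ = |1 + t| + |t| := by rw [abs_neg]
        nlinarith [mul_le_mul_of_nonneg_left habs hβ0.le,
          mul_le_mul_of_nonneg_left hβα.le (abs_nonneg t)]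
      have hfy := hsym (W 0 1) hbj
      have h2 := hfy (-1)
      rw [hfW, hWcomb 1 1 0 1 (-1)] at h2
      have hval : |1 + (-1) * 0| ^ q * α + |1 + (-1) * 1| ^ q * β
          < |1| ^ q * α + |1| ^ q * β := by
        norm_num [Real.one_rpow, Real.zero_rpow hq0.ne']
        exact hβ0
      exact absurd h2 (not_le.2 (hltW _ _ 1 1 hval))
    · -- 1 < q
      have hq1pos : 0 < q - 1 := by linarith
      obtain ⟨r, hrdef⟩ : ∃ r : ℝ, (q - 1)⁻¹ = r := ⟨_, rfl⟩
      have hr0 : 0 < r := hrdef ▸ inv_pos.2 hq1pos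
      obtain ⟨a, hadef⟩ : ∃ a : ℝ, β ^ r = a := ⟨_, rfl⟩
      obtain ⟨b, hbdef⟩ : ∃ b : ℝ, α ^ r = b := ⟨_, rfl⟩
      have ha0 : 0 < a := hadef ▸ Real.rpow_pos_of_pos hβ0 r
      have hb0 : 0 < b := hbdef ▸ Real.rpow_pos_of_pos hα0 r
      have haq : a ^ (q - 1) = β := by
        rw [← hadef, ← Real.rpow_mul hβ0.le, ← hrdef, inv_mul_cancel₀ hq1pos.ne', Real.rpow_one]
      have hbq : b ^ (q - 1) = α := by
        rw [← hbdef, ← Real.rpow_mul hα0.le, ← hrdef, inv_mul_cancel₀ hq1pos.ne', Real.rpow_one]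
      have hbj : BJOrth (W a (-b)) f := by
        intro t
        rw [hfW, hWcomb a (-b) 1 1 t]
        apply hle
        simp only [mul_one]
        have h1 := bernoulli_pos hq1 ha0 t
        have h2 := bernoulli_neg hq1 (neg_lt_zero.2 hb0) t
        rw [show |(-b)| = b from by rw [abs_neg, abs_of_pos hb0]] at h2
        rw [show ((-b) + t) = (-b) + t from rfl] at h2
        rw [abs_of_pos ha0, show |(-b)| = b from by rw [abs_neg, abs_of_pos hb0]]
        calc a ^ q * α + b ^ q * β
            = (a ^ q + q * a ^ (q - 1) * t) * α + (b ^ q - q * b ^ (q - 1) * t) * β := by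
              rw [haq, hbq]; ring
          _ ≤ |a + t| ^ q * α + |(-b) + t| ^ q * β :=
              add_le_add (mul_le_mul_of_nonneg_right h1 hα0.le)
                (mul_le_mul_of_nonneg_right h2 hβ0.le)
      have hfy := hsym (W a (-b)) hbj
      have hd1 := (hasDerivAt_comb_pos (q := q) (c := 1) (k := a) one_pos).mul_const α
      have hd2 := (hasDerivAt_comb_pos (q := q) (c := 1) (k := -b) one_pos).mul_const β
      have hD := hd1.add hd2
      have hDne : q * 1 ^ (q - 1) * a * α + q * 1 ^ (q - 1) * (-b) * β ≠ 0 := by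
        rw [Real.one_rpow]
        intro hcon
        have h6 : q * (a * α) = q * (b * β) := by linear_combination hcon
        have h7 := mul_left_cancel₀ hq0.ne' h6
        have hrne : r - 1 ≠ 0 := by
          intro h
          apply hq2
          have hr1 : r = 1 := by linarith
          rw [hr1] at hrdef
          have : q - 1 = 1 := by
            rw [inv_eq_one] at hrdef
            exact hrdef
          linarith
        apply base_ne_aux hβ0 hβα hrne
        rw [show r - 1 + 1 = r by ring, hadef, hbdef]
        exact h7
      obtain ⟨t₀, ht₀⟩ := exists_lt_of_hasDerivAt_ne hD hDne
      have ht₀' : |1 + t₀ * a| ^ q * α + |1 + t₀ * (-b)| ^ q * β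
          < |1 + 0 * a| ^ q * α + |1 + 0 * (-b)| ^ q * β := ht₀
      simp only [zero_mul, add_zero] at ht₀'
      have h2 := hfy t₀
      rw [hfW, hWcomb 1 1 a (-b) t₀] at h2
      exact absurd h2 (not_le.2 (hltW _ _ 1 1 ht₀'))
end
end

section
/- Let H be a real Hilbert space with dim(H) ≥ 2, let 1 < p < ∞ with p ≠ 2, and let x ∈ ℓ^p(H) be supported on exactly two coordinates n ≠ m with ‖x_n‖ = ‖x_m‖ ≠ 0. Then x is not a left symmetric point of ℓ^p(H) with respect to Birkhoff-James orthogonality. -/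
open MeasureTheory ENNReal InnerProductSpace

noncomputable section

set_option maxHeartbeats 2000000 in
theorem two_coord_equal_norm_not_left_symmetric
    {H : Type*} [NormedAddCommGroup H] [InnerProductSpace ℝ H] [CompleteSpace H]
    (hdim : 2 ≤ Module.rank ℝ H)
    (p : ℝ≥0∞) [Fact (1 ≤ p)] (hp1 : 1 < p) (hptop : p < ⊤) (hp2 : p ≠ 2)
    (x : lp (fun _ : ℕ => H) p)
    (n m : ℕ) (hnm : n ≠ m) (hxn : x n ≠ 0) (hxm : x m ≠ 0)
    (hnorm : ‖x n‖ = ‖x m‖)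
    (hsupp : ∀ k : ℕ, k ≠ n → k ≠ m → x k = 0) :
    ¬ LeftSymPt x := by
  classical
  intro hsym
  -- basic real exponent facts
  have hptop' : p ≠ ⊤ := hptop.ne
  set r : ℝ := p.toReal with hrdef
  have hr1 : 1 < r := by
    have h := (ENNReal.toReal_lt_toReal (by simp) hptop').2 hp1
    simpa using h
  have hr0 : (0:ℝ) < r := lt_trans one_pos hr1
  have hrne2 : r ≠ 2 := by
    intro h
    exact hp2 ((ENNReal.toReal_eq_toReal_iff' hptop' (by simp)).1 (by simpa using h))
  -- a and basic positivity
  set a : ℝ := ‖x n‖ with ha_def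
  have ha : 0 < a := norm_pos_iff.mpr hxn
  have hxma : ‖x m‖ = a := hnorm.symm
  -- find u ⟂ x n, u ≠ 0
  obtain ⟨u, hu_mem, hu0⟩ : ∃ u : H, u ∈ (ℝ ∙ (x n))ᗮ ∧ u ≠ 0 := by
    by_contra h
    push_neg at h
    have hbot : (ℝ ∙ (x n))ᗮ = ⊥ := by
      rw [Submodule.eq_bot_iff]
      exact fun u hu => h u hu
    have htop : (ℝ ∙ (x n)) = ⊤ := Submodule.orthogonal_eq_bot_iff.mp hbot
    have hle : Module.rank ℝ H ≤ 1 := by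
      have h1 : Module.rank ℝ (ℝ ∙ (x n)) ≤ 1 := by
        simpa using rank_span_le (R := ℝ) ({x n} : Set H)
      rwa [htop, rank_top] at h1
    have : (2 : Cardinal) ≤ 1 := hdim.trans hle
    norm_num at this
  have hinner : ⟪x n, u⟫_ℝ = 0 :=
    (Submodule.mem_orthogonal _ u).1 hu_mem (x n) (Submodule.mem_span_singleton_self _)
  set b : ℝ := ‖u‖ with hb_def
  have hb : 0 < b := norm_pos_iff.mpr hu0
  -- norm formula for elements supported on {n, m}
  have normz : ∀ z : lp (fun _ : ℕ => H) p, (∀ k, k ≠ n → k ≠ m → z k = 0) →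
      ‖z‖ ^ r = ‖z n‖ ^ r + ‖z m‖ ^ r := by
    intro z hz
    rw [lp.norm_rpow_eq_tsum hr0 z,
      tsum_eq_sum (s := ({n, m} : Finset ℕ)) ?_, Finset.sum_pair hnm]
    intro k hk
    simp only [Finset.mem_insert, Finset.mem_singleton] at hk
    push_neg at hk
    rw [hz k hk.1 hk.2, norm_zero, Real.zero_rpow hr0.ne']
  -- the vector y
  set y : lp (fun _ : ℕ => H) p := lp.single p n (x n + u) + lp.single p m (-(x m))
    with hydef
  have hyn : y n = x n + u := by
    rw [hydef, lp.coeFn_add, Pi.add_apply, lp.single_apply_self,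
      lp.single_apply_ne p m _ hnm, add_zero]
  have hym : y m = -(x m) := by
    rw [hydef, lp.coeFn_add, Pi.add_apply, lp.single_apply_self,
      lp.single_apply_ne p n _ hnm.symm, zero_add]
  have hyk : ∀ k, k ≠ n → k ≠ m → y k = 0 := by
    intro k hkn hkm
    rw [hydef, lp.coeFn_add, Pi.add_apply, lp.single_apply_ne p n _ hkn,
      lp.single_apply_ne p m _ hkm, add_zero]
  -- Pythagoras helper
  have hpyth : ∀ (c : ℝ) (w : H), ⟪x n, w⟫_ℝ = 0 →
      ‖c • x n + w‖ ^ 2 = c ^ 2 * a ^ 2 + ‖w‖ ^ 2 := by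
    intro c w hw
    rw [norm_add_sq_real, real_inner_smul_left, hw, mul_zero, mul_zero,
      norm_smul, Real.norm_eq_abs, mul_pow, sq_abs, ← ha_def, add_zero]
  -- Step 1: x ⟂_BJ y
  have hBJxy : BJOrth x y := by
    intro t
    have hcoord : ∀ k, (x + t • y) k = x k + t • y k := by
      intro k
      rw [lp.coeFn_add, Pi.add_apply, lp.coeFn_smul, Pi.smul_apply]
    have hsup : ∀ k, k ≠ n → k ≠ m → (x + t • y) k = 0 := by
      intro k hkn hkm
      rw [hcoord k, hsupp k hkn hkm, hyk k hkn hkm, smul_zero, add_zero]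
    have h1 : ‖x + t • y‖ ^ r = ‖(1 + t) • x n + t • u‖ ^ r + ‖(1 - t) • x m‖ ^ r := by
      rw [normz _ hsup, hcoord n, hcoord m, hyn, hym]
      congr 3
      · rw [smul_add, add_smul, one_smul]; abel
      · rw [sub_smul, one_smul, smul_neg]; abel
    have hxr : ‖x‖ ^ r = 2 * a ^ r := by
      rw [normz x hsupp, ← ha_def, hxma]; ring
    have hAineq : (|1 + t| * a) ^ r ≤ ‖(1 + t) • x n + t • u‖ ^ r := by
      apply Real.rpow_le_rpow (by positivity) ?_ hr0.le
      have hsq : (|1 + t| * a) ^ 2 ≤ ‖(1 + t) • x n + t • u‖ ^ 2 := by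
        rw [hpyth (1 + t) (t • u) (by rw [real_inner_smul_right, hinner, mul_zero]),
          mul_pow, sq_abs]
        nlinarith [sq_nonneg ‖t • u‖]
      have := Real.sqrt_le_sqrt hsq
      rwa [Real.sqrt_sq (by positivity), Real.sqrt_sq (norm_nonneg _)] at this
    have hBnorm : ‖(1 - t) • x m‖ ^ r = |1 - t| ^ r * a ^ r := by
      rw [norm_smul, Real.norm_eq_abs, hxma, Real.mul_rpow (abs_nonneg _) ha.le]
    -- Bernoulli
    have habs2 : (2:ℝ) ≤ |1 + t| + |1 - t| := by
      have h := abs_add_le (1 + t) (1 - t)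
      rw [show (1 + t) + (1 - t) = (2:ℝ) by ring, show |(2:ℝ)| = 2 by norm_num] at h
      linarith
    have hbernA : 1 + r * (|1 + t| - 1) ≤ |1 + t| ^ r := by
      have h := one_add_mul_self_le_rpow_one_add
        (by linarith [abs_nonneg (1 + t)] : (-1:ℝ) ≤ |1 + t| - 1) hr1.le
      rwa [show (1:ℝ) + (|1 + t| - 1) = |1 + t| by ring] at h
    have hbernB : 1 + r * (|1 - t| - 1) ≤ |1 - t| ^ r := by
      have h := one_add_mul_self_le_rpow_one_add
        (by linarith [abs_nonneg (1 - t)] : (-1:ℝ) ≤ |1 - t| - 1) hr1.le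
      rwa [show (1:ℝ) + (|1 - t| - 1) = |1 - t| by ring] at h
    have hsum : (2:ℝ) ≤ |1 + t| ^ r + |1 - t| ^ r := by nlinarith
    have hfin : ‖x‖ ^ r ≤ ‖x + t • y‖ ^ r := by
      rw [hxr, h1, hBnorm]
      have hAr : |1 + t| ^ r * a ^ r ≤ ‖(1 + t) • x n + t • u‖ ^ r := by
        rwa [← Real.mul_rpow (abs_nonneg _) ha.le]
      nlinarith [Real.rpow_pos_of_pos ha r]
    exact (Real.rpow_le_rpow_iff (norm_nonneg _) (norm_nonneg _) hr0).1 hfin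
  -- Step 2: y ⟂_BJ x fails
  have hBJyx : BJOrth y x := hsym y hBJxy
  set g : ℝ → ℝ := fun t => ‖y + t • x‖ ^ r with hgdef
  have hmin : IsLocalMin g 0 := by
    apply Filter.Eventually.of_forall
    intro t
    have h0 : g 0 = ‖y‖ ^ r := by simp [hgdef]
    rw [h0]
    exact Real.rpow_le_rpow (norm_nonneg _) (hBJyx t) hr0.le
  have hgt : ∀ t : ℝ, g t = ((1 + t) ^ 2 * a ^ 2 + b ^ 2) ^ (r / 2) + |t - 1| ^ r * a ^ r := by
    intro t
    have hcoord : ∀ k, (y + t • x) k = y k + t • x k := by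
      intro k
      rw [lp.coeFn_add, Pi.add_apply, lp.coeFn_smul, Pi.smul_apply]
    have hsup : ∀ k, k ≠ n → k ≠ m → (y + t • x) k = 0 := by
      intro k hkn hkm
      rw [hcoord k, hsupp k hkn hkm, hyk k hkn hkm, smul_zero, add_zero]
    have hcn : (y + t • x) n = (1 + t) • x n + u := by
      rw [hcoord n, hyn, add_smul, one_smul]; abel
    have hcm : (y + t • x) m = (t - 1) • x m := by
      rw [hcoord m, hym, sub_smul, one_smul]; abel
    rw [hgdef]
    simp only
    rw [normz _ hsup, hcn, hcm]
    congr 1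
    · have hsq : ‖(1 + t) • x n + u‖ ^ 2 = (1 + t) ^ 2 * a ^ 2 + b ^ 2 := hpyth (1 + t) u hinner
      rw [← hsq, ← Real.rpow_natCast (‖(1 + t) • x n + u‖) 2, ← Real.rpow_mul (norm_nonneg _)]
      congr 1
      push_cast
      ring
    · rw [norm_smul, Real.norm_eq_abs, hxma, Real.mul_rpow (abs_nonneg _) ha.le]
  -- smooth representative and its derivative
  have hf0pos : (0:ℝ) < (1 + (0:ℝ)) ^ 2 * a ^ 2 + b ^ 2 := by nlinarith
  have h1 : HasDerivAt (fun t : ℝ => (1 + t) ^ 2 * a ^ 2 + b ^ 2) (2 * a ^ 2) 0 := by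
    have hid : HasDerivAt (fun t : ℝ => 1 + t) 1 0 := (hasDerivAt_id 0).const_add 1
    have h := ((hid.pow 2).mul_const (a ^ 2)).add_const (b ^ 2)
    refine h.congr_deriv ?_
    norm_num
  have h1' : HasDerivAt (fun t : ℝ => ((1 + t) ^ 2 * a ^ 2 + b ^ 2) ^ (r / 2))
      (r * a ^ 2 * (a ^ 2 + b ^ 2) ^ (r / 2 - 1)) 0 := by
    have h := h1.rpow_const (p := r / 2) (Or.inl hf0pos.ne')
    convert h using 1
    rw [show ((1:ℝ) + 0) ^ 2 * a ^ 2 + b ^ 2 = a ^ 2 + b ^ 2 by ring]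
    ring
  have h2 : HasDerivAt (fun t : ℝ => (1 - t) ^ r * a ^ r) (-(r * a ^ r)) 0 := by
    have hid : HasDerivAt (fun t : ℝ => 1 - t) (-1) 0 := (hasDerivAt_id 0).const_sub 1
    have h := (hid.rpow_const (p := r) (Or.inr hr1.le)).mul_const (a ^ r)
    refine h.congr_deriv ?_
    rw [show (1:ℝ) - 0 = 1 by ring, Real.one_rpow]
    ring
  have hG : HasDerivAt (fun t : ℝ => ((1 + t) ^ 2 * a ^ 2 + b ^ 2) ^ (r / 2) + (1 - t) ^ r * a ^ r)
      (r * a ^ 2 * (a ^ 2 + b ^ 2) ^ (r / 2 - 1) - r * a ^ r) 0 := by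
    have h := h1'.add h2
    refine h.congr_deriv ?_
    ring
  have hgderiv : HasDerivAt g (r * a ^ 2 * (a ^ 2 + b ^ 2) ^ (r / 2 - 1) - r * a ^ r) 0 := by
    apply hG.congr_of_eventuallyEq
    filter_upwards [Iio_mem_nhds (show (0:ℝ) < 1 by norm_num)] with t ht
    rw [hgt t]
    have habs : |t - 1| = 1 - t := by
      rw [abs_of_neg (by simpa using ht : t - 1 < 0)]
      ring
    rw [habs]
  have hD0 := hmin.hasDerivAt_eq_zero hgderiv
  -- derive the contradiction
  have har : a ^ 2 * (a ^ 2 : ℝ) ^ (r / 2 - 1) = a ^ r := by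
    rw [← Real.rpow_natCast a 2, ← Real.rpow_mul ha.le, ← Real.rpow_add ha]
    congr 1
    push_cast
    ring
  have hlt : a ^ 2 < a ^ 2 + b ^ 2 := by nlinarith
  have hexp : r / 2 - 1 ≠ 0 := by
    intro h
    apply hrne2
    have : r / 2 = 1 := by linarith [sub_eq_zero.mp h]
    linarith
  have hne : (a ^ 2 + b ^ 2 : ℝ) ^ (r / 2 - 1) ≠ (a ^ 2 : ℝ) ^ (r / 2 - 1) := by
    rcases hexp.lt_or_gt with hneg | hpos
    · exact (Real.rpow_lt_rpow_of_neg (by positivity) hlt hneg).ne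
    · exact (Real.rpow_lt_rpow (by positivity) hlt hpos).ne'
  apply hne
  have h := sub_eq_zero.mp hD0
  rw [← har, ← mul_assoc, mul_assoc r (a ^ 2), ← mul_assoc] at h
  have hra : (r * a ^ 2 : ℝ) ≠ 0 := (mul_pos hr0 (by positivity)).ne'
  exact mul_left_cancel₀ hra h
end
end
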